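/- arXiv:1401.1046 — 7 statements merged into one kernel-verified Lean document; each statement's English description precedes it below -/
import Mathlib

section
/- If f : (0,∞) → ℝ is such that x·f(x) is completely monotone on (0,∞), then there exists a non-negative, non-decreasing, right-continuous function g : ℝ → ℝ vanishing on (-∞,0) such that f(x) = ∫₀^∞ e^{-x y} g(y) dy for all x > 0. -/
open MeasureTheory Filter Set Real

/-- `f` is completely monotone on `(0,∞)`. -/
def CMOn (f : ℝ → ℝ) : Prop :=
  ContDiffOn ℝ (⊤ : ℕ∞) f (Set.Ioi 0) ∧
  ∀ n : ℕ, ∀ x ∈ Set.Ioi (0:ℝ), 0 ≤ (-1 : ℝ)^n * iteratedDerivWithin n f (Set.Ioi 0) x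

/-- Laplace transform of `f`. -/
noncomputable def laplace (f : ℝ → ℝ) (p : ℝ) : ℝ :=
  ∫ t in Set.Ioi (0:ℝ), Real.exp (-p * t) * f t

namespace BW
open Nat Topology

lemma iterDW_of_isOpen {F : ℝ → ℝ} {s : Set ℝ} (hs : IsOpen s) (n : ℕ) {x : ℝ}
    (hx : x ∈ s) : iteratedDerivWithin n F s x = iteratedDeriv n F x := by
  rw [iteratedDerivWithin_eq_iteratedFDerivWithin, iteratedDeriv_eq_iteratedFDeriv,
    iteratedFDerivWithin_of_isOpen n hs hx]

variable {H : ℝ → ℝ}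

lemma diffOn_iter (hs : ContDiffOn ℝ (⊤ : ℕ∞) H (Iio (0:ℝ))) (k : ℕ) :
    DifferentiableOn ℝ (iteratedDeriv k H) (Iio (0:ℝ)) := by
  have h1 : DifferentiableOn ℝ (iteratedDerivWithin k H (Iio 0)) (Iio 0) :=
    hs.differentiableOn_iteratedDerivWithin (by exact_mod_cast ENat.coe_lt_top k)
      isOpen_Iio.uniqueDiffOn
  exact h1.congr fun x hx => (iterDW_of_isOpen isOpen_Iio k hx).symm

lemma icc_iter (hs : ContDiffOn ℝ (⊤ : ℕ∞) H (Iio (0:ℝ))) {a b : ℝ} (hab : a < b) (hb : b < 0)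
    (k : ℕ) : ∀ y ∈ Icc a b, iteratedDerivWithin k H (Icc a b) y = iteratedDeriv k H y := by
  have hsub : Icc a b ⊆ Iio 0 := fun y hy => lt_of_le_of_lt hy.2 hb
  induction k with
  | zero => intro y hy; simp
  | succ k ih =>
    intro y hy
    rw [iteratedDerivWithin_succ,
      derivWithin_congr (fun z hz => ih z hz) (ih y hy),
      DifferentiableAt.derivWithin ((diffOn_iter hs k).differentiableAt
        (isOpen_Iio.mem_nhds (hsub hy))) ((uniqueDiffOn_Icc hab) y hy),
      iteratedDeriv_succ]

lemma partial_le (hs : ContDiffOn ℝ (⊤ : ℕ∞) H (Iio (0:ℝ)))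
    (hpos : ∀ k : ℕ, ∀ u ∈ Iio (0:ℝ), 0 ≤ iteratedDeriv k H u)
    {a b : ℝ} (hab : a < b) (hb : b < 0) (m : ℕ) :
    ∑ k ∈ Finset.range m, iteratedDeriv k H a * (b - a)^k / k ! ≤ H b := by
  have hsub : Icc a b ⊆ Iio 0 := fun y hy => lt_of_le_of_lt hy.2 hb
  have ha0 : a < 0 := lt_trans hab hb
  cases m with
  | zero =>
    simpa using hpos 0 b hb
  | succ m =>
    have hf : ContDiffOn ℝ m H (Icc a b) := (hs.mono hsub).of_le (by exact_mod_cast le_top)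
    have hf' : DifferentiableOn ℝ (iteratedDerivWithin m H (Icc a b)) (Ioo a b) := by
      refine ((diffOn_iter hs m).mono (fun z hz => hsub (Ioo_subset_Icc_self hz))).congr
        fun z hz => (icc_iter hs hab hb m z (Ioo_subset_Icc_self hz))
    obtain ⟨ξ, hξ, heq⟩ := taylor_mean_remainder_lagrange (f := H) (n := m) hab.ne
        (by rwa [uIcc_of_le hab.le]) (by rwa [uIcc_of_le hab.le, uIoo_of_le hab.le])
    rw [uIcc_of_le hab.le] at heq
    rw [uIoo_of_le hab.le] at hξ
    have hT : taylorWithinEval H m (Icc a b) a b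
        = ∑ k ∈ Finset.range (m+1), iteratedDeriv k H a * (b - a)^k / k ! := by
      rw [taylor_within_apply]
      refine Finset.sum_congr rfl fun k _ => ?_
      rw [icc_iter hs hab hb k a (left_mem_Icc.2 hab.le), smul_eq_mul]
      ring
    rw [icc_iter hs hab hb (m+1) ξ (Ioo_subset_Icc_self hξ)] at heq
    have hrem : 0 ≤ iteratedDeriv (m+1) H ξ * (b - a) ^ (m+1) / (m+1)! := by
      apply div_nonneg (mul_nonneg (hpos _ ξ (hsub (Ioo_subset_Icc_self hξ)))
        (pow_nonneg (by linarith) _)) (by positivity)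
    rw [hT] at heq
    linarith [heq ▸ hrem]

lemma term_le (hs : ContDiffOn ℝ (⊤ : ℕ∞) H (Iio (0:ℝ)))
    (hpos : ∀ k : ℕ, ∀ u ∈ Iio (0:ℝ), 0 ≤ iteratedDeriv k H u)
    {a b : ℝ} (hab : a < b) (hb : b < 0) (k : ℕ) :
    iteratedDeriv k H a * (b - a)^k / k ! ≤ H b := by
  have ha0 : a < 0 := lt_trans hab hb
  refine le_trans ?_ (partial_le hs hpos hab hb (k+1))
  refine Finset.single_le_sum (f := fun j => iteratedDeriv j H a * (b - a)^j / j !)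
    (fun j _ => ?_) (Finset.self_mem_range_succ k)
  exact div_nonneg (mul_nonneg (hpos j a ha0) (pow_nonneg (by linarith) _)) (by positivity)


variable {H : ℝ → ℝ}

lemma hasSum_taylor (hs : ContDiffOn ℝ (⊤ : ℕ∞) H (Iio (0:ℝ)))
    (hpos : ∀ k : ℕ, ∀ u ∈ Iio (0:ℝ), 0 ≤ iteratedDeriv k H u)
    {a b : ℝ} (hab : a < b) (hb : b < 0) :
    HasSum (fun k => iteratedDeriv k H a * (b - a)^k / k !) (H b) := by
  have ha0 : a < 0 := lt_trans hab hb
  set F : ℕ → ℝ := fun k => iteratedDeriv k H a * (b - a)^k / k ! with hF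
  have hFnn : ∀ k, 0 ≤ F k := fun k =>
    div_nonneg (mul_nonneg (hpos k a ha0) (pow_nonneg (by linarith) _)) (by positivity)
  have hsum : Summable F := summable_of_sum_range_le hFnn (fun m => partial_le hs hpos hab hb m)
  have h1 : Tendsto (fun m => ∑ k ∈ Finset.range m, F k) atTop (𝓝 (∑' k, F k)) :=
    hsum.hasSum.tendsto_sum_nat
  suffices h2 : Tendsto (fun m => ∑ k ∈ Finset.range m, F k) atTop (𝓝 (H b)) by
    have := tendsto_nhds_unique h1 h2
    exact this ▸ hsum.hasSum
  -- squeeze: H b - C*(m+1)*θ^m ≤ ∑_{range (m+1)} F ≤ H b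
  set w : ℝ := b/2 with hw
  have hbw : b < w := by rw [hw]; linarith
  have hw0 : w < 0 := by rw [hw]; linarith
  set θ : ℝ := (b - a)/(w - a) with hθ
  have hθ0 : 0 < θ := div_pos (by linarith) (by linarith)
  have hθ1 : θ < 1 := (div_lt_one (by linarith)).2 (by linarith)
  have hsub : Icc a b ⊆ Iio 0 := fun y hy => lt_of_le_of_lt hy.2 hb
  set C : ℝ := H w * (b - a) / (w - b) with hC
  have hHw : 0 ≤ H w := by simpa using hpos 0 w hw0
  have key : ∀ m : ℕ, H b - ∑ k ∈ Finset.range (m+1), F k ≤ C * ((m+1) * θ^m) := by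
    intro m
    have hf : ContDiffOn ℝ m H (Icc a b) := (hs.mono hsub).of_le (by exact_mod_cast le_top)
    have hf' : DifferentiableOn ℝ (iteratedDerivWithin m H (Icc a b)) (Ioo a b) :=
      ((diffOn_iter hs m).mono (fun z hz => hsub (Ioo_subset_Icc_self hz))).congr
        fun z hz => (icc_iter hs hab hb m z (Ioo_subset_Icc_self hz))
    obtain ⟨ξ, hξ, heq⟩ := taylor_mean_remainder_cauchy (f := H) (n := m) hab.ne
        (by rwa [uIcc_of_le hab.le]) (by rwa [uIcc_of_le hab.le, uIoo_of_le hab.le])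
    rw [uIcc_of_le hab.le] at heq
    rw [uIoo_of_le hab.le] at hξ
    have hξw : ξ < w := lt_trans hξ.2 hbw
    have hT : taylorWithinEval H m (Icc a b) a b = ∑ k ∈ Finset.range (m+1), F k := by
      rw [taylor_within_apply]
      refine Finset.sum_congr rfl fun k _ => ?_
      rw [icc_iter hs hab hb k a (left_mem_Icc.2 hab.le), smul_eq_mul, hF]
      ring
    rw [icc_iter hs hab hb (m+1) ξ (Ioo_subset_Icc_self hξ), hT] at heq
    rw [heq]
    set A : ℝ := iteratedDeriv (m+1) H ξ with hA
    have hst : A * (w - ξ)^(m+1) / (m+1)! ≤ H w := term_le hs hpos hξw hw0 (m+1)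
    have hwξ : (0:ℝ) < w - ξ := by linarith [hξ.2]
    have hDξ : 0 ≤ A := hpos _ ξ (lt_trans hξ.2 hb)
    have hbξ : (0:ℝ) ≤ b - ξ := by linarith [hξ.2]
    have hD2 : A ≤ H w * (m+1)! / (w - ξ)^(m+1) := by
      rw [le_div_iff₀ (by positivity)]
      rw [div_le_iff₀ (by positivity)] at hst
      linarith
    have r1 : (b - ξ)^m ≤ θ^m * (w - ξ)^m := by
      have h1 : (b - ξ) ≤ θ * (w - ξ) := by
        rw [hθ, div_mul_eq_mul_div, le_div_iff₀ (by linarith)]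
        nlinarith [hξ.1, hξ.2]
      calc (b - ξ)^m ≤ (θ * (w - ξ))^m := pow_le_pow_left₀ hbξ h1 m
        _ = θ^m * (w - ξ)^m := mul_pow _ _ _
    calc A * (b - ξ)^m / m ! * (b - a)
        ≤ (H w * (m+1)! / (w - ξ)^(m+1)) * (b - ξ)^m / m ! * (b - a) := by
          have hfa : (0:ℝ) < (m ! : ℝ) := by positivity
          apply mul_le_mul_of_nonneg_right _ (by linarith)
          apply div_le_div_of_nonneg_right _ hfa.le
          exact mul_le_mul_of_nonneg_right hD2 (pow_nonneg hbξ m)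
      _ ≤ (H w * (m+1)! / (w - ξ)^(m+1)) * (θ^m * (w - ξ)^m) / m ! * (b - a) := by
          have hfa : (0:ℝ) < (m ! : ℝ) := by positivity
          apply mul_le_mul_of_nonneg_right _ (by linarith)
          apply div_le_div_of_nonneg_right _ hfa.le
          exact mul_le_mul_of_nonneg_left r1 (by positivity)
      _ = H w * (b - a) / (w - ξ) * ((m+1) * θ^m) := by
          rw [Nat.factorial_succ]
          push_cast
          have h1 : ((m !:ℝ)) ≠ 0 := by positivity
          have h2 : (w - ξ) ≠ 0 := ne_of_gt hwξ
          field_simp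
          ring
      _ ≤ C * ((m+1) * θ^m) := by
          rw [hC]
          apply mul_le_mul_of_nonneg_right _ (by positivity)
          apply div_le_div_of_nonneg_left (by nlinarith) (by linarith) (by linarith)
  have hub : ∀ m : ℕ, ∑ k ∈ Finset.range (m+1), F k ≤ H b :=
    fun m => partial_le hs hpos hab hb (m+1)
  have hθn : ‖θ‖ < 1 := by rw [Real.norm_eq_abs, abs_of_pos hθ0]; exact hθ1
  have hsummable : Summable (fun m : ℕ => ((m:ℝ)+1) * θ^m) := by
    have h1 : Summable (fun m : ℕ => (m:ℝ) * θ^m) :=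
      (hasSum_coe_mul_geometric_of_norm_lt_one hθn).summable
    have h2 : Summable (fun m : ℕ => θ^m) := summable_geometric_of_norm_lt_one hθn
    exact (h1.add h2).congr (fun m => by ring)
  have h0 : Tendsto (fun m : ℕ => ((m:ℝ)+1) * θ^m) atTop (𝓝 0) :=
    hsummable.tendsto_atTop_zero
  have hlow : Tendsto (fun m : ℕ => H b - C * (((m:ℝ)+1) * θ^m)) atTop (𝓝 (H b)) := by
    have h0' : Tendsto (fun m : ℕ => C * (((m:ℝ)+1) * θ^m)) atTop (𝓝 (C*0)) :=
      h0.const_mul C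
    have h0'' : Tendsto (fun m : ℕ => H b - C * (((m:ℝ)+1) * θ^m)) atTop (𝓝 (H b - C*0)) :=
      (tendsto_const_nhds (x := H b) (f := atTop)).sub h0'
    rw [mul_zero, sub_zero] at h0''
    exact h0''
  have h2' : Tendsto (fun m : ℕ => ∑ k ∈ Finset.range (m+1), F k) atTop (𝓝 (H b)) := by
    refine tendsto_of_tendsto_of_tendsto_of_le_of_le hlow tendsto_const_nhds
      (fun m => by have := key m; push_cast at this ⊢; linarith) (fun m => hub m)
  exact (tendsto_add_atTop_iff_nat 1).mp h2'

variable {h : ℝ → ℝ}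

lemma dd_nonneg (hcm : CMOn h) (k : ℕ) {c : ℝ} (hc : 0 < c) :
    0 ≤ (-1:ℝ)^k * iteratedDeriv k h c := by
  rw [← iterDW_of_isOpen isOpen_Ioi k (mem_Ioi.2 hc)]
  exact hcm.2 k c hc

lemma h_nonneg (hcm : CMOn h) {c : ℝ} (hc : 0 < c) : 0 ≤ h c := by
  simpa using dd_nonneg hcm 0 hc

lemma hasSum_dd (hcm : CMOn h) {q c : ℝ} (hq : 0 < q) (hqc : q < c) :
    HasSum (fun k => (-1:ℝ)^k * iteratedDeriv k h c * (c - q)^k / k !) (h q) := by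
  have hc : (0:ℝ) < c := lt_trans hq hqc
  set H : ℝ → ℝ := fun u => h (-u) with hH
  have hs : ContDiffOn ℝ (⊤ : ℕ∞) H (Iio (0:ℝ)) :=
    hcm.1.comp contDiff_neg.contDiffOn (fun u hu => by simpa using mem_Iio.1 hu)
  have hpos : ∀ k : ℕ, ∀ u ∈ Iio (0:ℝ), 0 ≤ iteratedDeriv k H u := by
    intro k u hu
    rw [hH, iteratedDeriv_comp_neg, smul_eq_mul]
    exact dd_nonneg hcm k (by simpa using mem_Iio.1 hu)
  have key := hasSum_taylor hs hpos (a := -c) (b := -q) (by linarith) (by linarith)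
  have e1 : ∀ k : ℕ, iteratedDeriv k H (-c) * ((-q) - (-c))^k / k !
      = (-1:ℝ)^k * iteratedDeriv k h c * (c - q)^k / k ! := by
    intro k
    rw [hH, iteratedDeriv_comp_neg, smul_eq_mul, neg_neg]
    ring_nf
  have e2 : H (-q) = h q := by rw [hH]; simp
  rw [e2] at key
  have e3 : (fun k : ℕ => iteratedDeriv k H (-c) * ((-q) - (-c))^k / k !)
      = (fun k : ℕ => (-1:ℝ)^k * iteratedDeriv k h c * (c - q)^k / k !) := funext e1
  rwa [e3] at key

noncomputable def gnn (h : ℝ → ℝ) (n : ℕ) (y : ℝ) : ℝ :=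
  if 0 ≤ y then
    ∑ k ∈ Finset.range (⌊(n:ℝ)*y⌋₊+1), (-1:ℝ)^k * iteratedDeriv k h n * (n:ℝ)^k / k !
  else 0

lemma gnn_nonneg (hcm : CMOn h) {n : ℕ} (hn : 0 < n) (y : ℝ) : 0 ≤ gnn h n y := by
  unfold gnn
  split
  · refine Finset.sum_nonneg fun k _ => ?_
    have := dd_nonneg hcm k (show (0:ℝ) < n by exact_mod_cast hn)
    positivity
  · exact le_refl _

lemma gnn_mono (hcm : CMOn h) {n : ℕ} (hn : 0 < n) : Monotone (gnn h n) := by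
  intro y y' hyy
  unfold gnn
  by_cases hy : 0 ≤ y
  · rw [if_pos hy, if_pos (le_trans hy hyy)]
    refine Finset.sum_le_sum_of_subset_of_nonneg ?_ (fun k _ _ => ?_)
    · apply Finset.range_subset_range.2
      have : ⌊(n:ℝ)*y⌋₊ ≤ ⌊(n:ℝ)*y'⌋₊ :=
        Nat.floor_le_floor (by
          have hpos : (0:ℝ) < n := by exact_mod_cast hn
          nlinarith)
      omega
    · have := dd_nonneg hcm k (show (0:ℝ) < n by exact_mod_cast hn)
      positivity
  · rw [if_neg hy]
    exact gnn_nonneg hcm hn y'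

lemma gnn_le (hcm : CMOn h) {q : ℝ} (hq : 0 < q) {n : ℕ} (hn : 2*q ≤ (n:ℝ)) {y : ℝ}
    (hy : 0 ≤ y) : gnn h n y ≤ h q * exp (2*q*y) := by
  have hn0 : (0:ℝ) < n := by linarith
  have hqn : q < (n:ℝ) := by linarith
  have hnq : (0:ℝ) < (n:ℝ) - q := by linarith
  set K := ⌊(n:ℝ)*y⌋₊ with hK
  have hKle : (K:ℝ) ≤ (n:ℝ)*y := Nat.floor_le (by positivity)
  set r : ℝ := (n:ℝ)/((n:ℝ)-q) with hr
  have hr1 : 1 ≤ r := (one_le_div hnq).2 (by linarith)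
  have hsum := hasSum_dd hcm hq hqn
  have hterm : ∀ k : ℕ, (-1:ℝ)^k * iteratedDeriv k h n * (n:ℝ)^k / k !
      = ((-1:ℝ)^k * iteratedDeriv k h n * ((n:ℝ) - q)^k / k !) * r^k := by
    intro k
    have hne : ((n:ℝ)-q)^k ≠ 0 := by positivity
    rw [hr, div_pow]
    field_simp
  have htnn : ∀ k : ℕ, 0 ≤ (-1:ℝ)^k * iteratedDeriv k h n * ((n:ℝ) - q)^k / k ! := by
    intro k
    have := dd_nonneg hcm k hn0
    positivity
  have hpart : ∑ k ∈ Finset.range (K+1), (-1:ℝ)^k * iteratedDeriv k h n * ((n:ℝ) - q)^k / k !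
      ≤ h q := sum_le_hasSum _ (fun k _ => htnn k) hsum
  have step1 : gnn h n y ≤ (∑ k ∈ Finset.range (K+1),
      (-1:ℝ)^k * iteratedDeriv k h n * ((n:ℝ) - q)^k / k !) * r^K := by
    rw [gnn, if_pos hy, Finset.sum_mul]
    refine Finset.sum_le_sum fun k hk => ?_
    rw [hterm k]
    refine mul_le_mul_of_nonneg_left ?_ (htnn k)
    exact pow_le_pow_right₀ hr1 (by simp at hk; omega)
  have hrb : r ≤ exp (2*q/(n:ℝ)) := by
    have e1 : r = 1 + q/((n:ℝ)-q) := by rw [hr]; field_simp; ring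
    have e2 : q/((n:ℝ)-q) ≤ 2*q/(n:ℝ) := by
      rw [div_le_div_iff₀ hnq hn0]
      nlinarith
    calc r = 1 + q/((n:ℝ)-q) := e1
      _ ≤ 1 + 2*q/(n:ℝ) := by linarith
      _ ≤ exp (2*q/(n:ℝ)) := by
          have := Real.add_one_le_exp (2*q/(n:ℝ))
          linarith
  have hrK : r^K ≤ exp (2*q*y) := by
    calc r^K ≤ (exp (2*q/(n:ℝ)))^K :=
          pow_le_pow_left₀ (by linarith [hr1]) hrb K
      _ = exp ((2*q/(n:ℝ)) * K) := by rw [← Real.exp_nat_mul]; ring_nf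
      _ ≤ exp (2*q*y) := by
          apply Real.exp_le_exp.2
          have : (2*q/(n:ℝ)) * K ≤ (2*q/(n:ℝ)) * ((n:ℝ)*y) := by
            apply mul_le_mul_of_nonneg_left hKle (by positivity)
          calc (2*q/(n:ℝ)) * K ≤ (2*q/(n:ℝ)) * ((n:ℝ)*y) := this
            _ = 2*q*y := by field_simp
  calc gnn h n y ≤ (∑ k ∈ Finset.range (K+1),
      (-1:ℝ)^k * iteratedDeriv k h n * ((n:ℝ) - q)^k / k !) * r^K := step1
    _ ≤ h q * r^K := by
        apply mul_le_mul_of_nonneg_right hpart (by positivity)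
    _ ≤ h q * exp (2*q*y) := mul_le_mul_of_nonneg_left hrK (h_nonneg hcm hq)


variable {h : ℝ → ℝ}
lemma exp_int {x : ℝ} (hx : 0 < x) (a : ℝ) :
    ∫ y in Ioi a, Real.exp (-x * y) = Real.exp (-x * a) / x := by
  calc ∫ y in Ioi a, Real.exp (-x*y) = ∫ y in Ioi a, (fun t => Real.exp (-t)) (x*y) := by
        simp [neg_mul]
    _ = x⁻¹ • ∫ t in Ioi (x*a), Real.exp (-t) := integral_comp_mul_left_Ioi (fun t => Real.exp (-t)) a hx
    _ = Real.exp (-x*a)/x := by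
        rw [integral_exp_neg_Ioi, smul_eq_mul, neg_mul]
        ring

lemma ind_eq (a c x : ℝ) : (fun y => Real.exp (-x*y) * (Ici a).indicator (fun _ => c) y)
    = (Ici a).indicator (fun y => Real.exp (-x*y) * c) := by
  funext y
  by_cases hy : y ∈ Ici a
  · simp [indicator_of_mem hy]
  · simp [indicator_of_notMem hy]

lemma ae_Ici_inter {a : ℝ} (ha : 0 ≤ a) : (Ici a ∩ Ioi (0:ℝ) : Set ℝ) =ᵐ[volume] Ioi a := by
  rw [MeasureTheory.ae_eq_set]
  constructor
  · refine measure_mono_null (fun z hz => ?_) (measure_singleton a)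
    simp only [mem_diff, mem_inter_iff, mem_Ici, mem_Ioi, not_lt] at hz
    simp only [mem_singleton_iff]
    linarith [hz.1.1, hz.1.2, hz.2]
  · refine measure_mono_null (fun z hz => ?_) (measure_empty (μ := volume) (α := ℝ))
    simp only [mem_diff, mem_inter_iff, mem_Ici, mem_Ioi] at hz
    exact absurd ⟨hz.1.le, lt_of_le_of_lt ha hz.1⟩ hz.2

lemma gnn_tsum {n : ℕ} (hn : 0 < n) (y : ℝ) :
    gnn h n y = ∑' k : ℕ, (Ici ((k:ℝ)/n)).indicator
      (fun _ => (-1:ℝ)^k * iteratedDeriv k h n * (n:ℝ)^k / k !) y := by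
  have hn0 : (0:ℝ) < n := by exact_mod_cast hn
  by_cases hy : 0 ≤ y
  · rw [gnn, if_pos hy, tsum_eq_sum (s := Finset.range (⌊(n:ℝ)*y⌋₊+1)) ?_]
    · refine Finset.sum_congr rfl fun k hk => ?_
      rw [indicator_of_mem]
      rw [mem_Ici, div_le_iff₀ hn0, mul_comm]
      calc (k:ℝ) ≤ (⌊(n:ℝ)*y⌋₊ : ℝ) := by
            exact_mod_cast Nat.le_of_lt_succ (Finset.mem_range.1 hk)
        _ ≤ (n:ℝ)*y := Nat.floor_le (by positivity)
    · intro k hk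
      apply indicator_of_notMem
      rw [mem_Ici, not_le, lt_div_iff₀ hn0, mul_comm]
      calc (n:ℝ)*y < (⌊(n:ℝ)*y⌋₊ + 1 : ℕ) := by
            push_cast
            exact Nat.lt_floor_add_one _
        _ ≤ (k:ℝ) := by
            have : ⌊(n:ℝ)*y⌋₊ + 1 ≤ k := by
              by_contra hc
              exact hk (Finset.mem_range.2 (by omega))
            exact_mod_cast this
  · rw [gnn, if_neg hy]
    symm
    convert tsum_zero with k
    apply indicator_of_notMem
    rw [mem_Ici, not_le]
    refine lt_of_lt_of_le (not_le.1 hy) (by positivity)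

lemma gnn_integrable (hcm : CMOn h) {x : ℝ} (hx : 0 < x) {n : ℕ} (hn : 0 < n) :
    IntegrableOn (fun y => Real.exp (-x*y) * gnn h n y) (Ioi 0) := by
  set q : ℝ := min (x/4) ((n:ℝ)/2) with hq
  have hn0 : (0:ℝ) < n := by exact_mod_cast hn
  have hq0 : 0 < q := lt_min (by linarith) (by linarith)
  have h2qn : 2*q ≤ (n:ℝ) := by
    have := min_le_right (x/4) ((n:ℝ)/2); linarith
  have h2qx : 2*q ≤ x/2 := by
    have := min_le_left (x/4) ((n:ℝ)/2); linarith
  have hmeas : AEStronglyMeasurable (fun y => Real.exp (-x*y) * gnn h n y)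
      (volume.restrict (Ioi 0)) := by
    apply Measurable.aestronglyMeasurable
    exact (Real.measurable_exp.comp (measurable_const.mul measurable_id)).mul
      (gnn_mono hcm hn).measurable
  apply Integrable.mono' (g := fun y => h q * Real.exp (-(x/2) * y))
    (((exp_neg_integrableOn_Ioi 0 (by linarith : (0:ℝ) < x/2))).const_mul (h q)) hmeas
  rw [ae_restrict_iff' measurableSet_Ioi]
  refine ae_of_all _ fun y hy => ?_
  have hy0 : (0:ℝ) ≤ y := (mem_Ioi.1 hy).le
  have h1 : 0 ≤ gnn h n y := gnn_nonneg hcm hn y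
  rw [Real.norm_of_nonneg (by positivity)]
  calc Real.exp (-x*y) * gnn h n y ≤ Real.exp (-x*y) * (h q * Real.exp (2*q*y)) := by
        exact mul_le_mul_of_nonneg_left (gnn_le hcm hq0 h2qn hy0) (exp_nonneg _)
    _ = h q * Real.exp ((2*q - x)*y) := by
        rw [show Real.exp (-x*y) * (h q * Real.exp (2*q*y))
            = h q * (Real.exp (-x*y) * Real.exp (2*q*y)) from by ring, ← Real.exp_add]
        ring_nf
    _ ≤ h q * Real.exp (-(x/2)*y) := by
        apply mul_le_mul_of_nonneg_left _ (h_nonneg hcm hq0)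
        apply Real.exp_le_exp.2
        nlinarith

lemma gnn_integral_eq (hcm : CMOn h) {x : ℝ} (hx : 0 < x) {n : ℕ} (hn : 0 < n) :
    ∫ y in Ioi (0:ℝ), Real.exp (-x*y) * gnn h n y
      = h ((n:ℝ)*(1 - Real.exp (-x/n))) / x := by
  have hn0 : (0:ℝ) < n := by exact_mod_cast hn
  set p : ℝ := (n:ℝ)*(1 - Real.exp (-x/n)) with hp
  have he1 : Real.exp (-x/n) < 1 := by
    rw [Real.exp_lt_one_iff]
    exact div_neg_of_neg_of_pos (by linarith) hn0
  have hp0 : 0 < p := by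
    apply mul_pos hn0
    linarith
  have hpn : p < n := by
    have : 0 < Real.exp (-x/n) := Real.exp_pos _
    nlinarith
  have hps := hasSum_dd hcm hp0 hpn
  set c : ℕ → ℝ := fun k => (-1:ℝ)^k * iteratedDeriv k h n * (n:ℝ)^k / k ! with hc
  have hcnn : ∀ k, 0 ≤ c k := fun k => by
    have := dd_nonneg hcm k hn0
    rw [hc]
    positivity
  have hterm : ∀ k : ℕ, (-1:ℝ)^k * iteratedDeriv k h n * ((n:ℝ)-p)^k / k !
      = c k * Real.exp (-x*((k:ℝ)/n)) := by
    intro k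
    have hnp : (n:ℝ) - p = (n:ℝ) * Real.exp (-x/n) := by rw [hp]; ring
    rw [hnp, mul_pow, ← Real.exp_nat_mul, hc]
    have : (k:ℝ) * (-x/n) = -x*((k:ℝ)/n) := by ring
    rw [this]
    ring
  have hps' : HasSum (fun k => c k * Real.exp (-x*((k:ℝ)/n))) (h p) := by
    have e3 : (fun k : ℕ => (-1:ℝ)^k * iteratedDeriv k h n * ((n:ℝ)-p)^k / k !)
        = (fun k => c k * Real.exp (-x*((k:ℝ)/n))) := funext hterm
    rwa [e3] at hps
  set F : ℕ → ℝ → ℝ := fun k y => Real.exp (-x*y) * (Ici ((k:ℝ)/n)).indicator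
    (fun _ => c k) y with hF
  have hF_int : ∀ k, Integrable (F k) (volume.restrict (Ioi 0)) := by
    intro k
    rw [hF]
    simp only
    rw [ind_eq]
    exact (((exp_neg_integrableOn_Ioi 0 hx).mul_const (c k)).indicator measurableSet_Ici)
  have hval : ∀ k, ∫ y in Ioi (0:ℝ), F k y = c k * Real.exp (-x*((k:ℝ)/n)) / x := by
    intro k
    rw [hF]
    simp only
    rw [ind_eq, integral_indicator measurableSet_Ici, Measure.restrict_restrict measurableSet_Ici,
      setIntegral_congr_set (ae_Ici_inter (by positivity)),
      integral_mul_const, exp_int hx]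
    ring
  have hFnn : ∀ k, ∀ y : ℝ, 0 ≤ F k y := by
    intro k y
    rw [hF]
    simp only
    apply mul_nonneg (exp_nonneg _)
    exact indicator_nonneg (fun _ _ => hcnn k) y
  have hnorm : ∀ k, ∫ y in Ioi (0:ℝ), ‖F k y‖ = ∫ y in Ioi (0:ℝ), F k y := by
    intro k
    refine integral_congr_ae (ae_of_all _ fun y => ?_)
    exact Real.norm_of_nonneg (hFnn k y)
  have hsummable : Summable (fun k => ∫ y in Ioi (0:ℝ), ‖F k y‖) := by
    apply Summable.congr ((hps'.summable).div_const x)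
    intro k
    rw [hnorm k, hval k]
  have hswap := integral_tsum_of_summable_integral_norm hF_int hsummable
  have hpt : ∀ y : ℝ, (∑' k, F k y) = Real.exp (-x*y) * gnn h n y := by
    intro y
    rw [gnn_tsum hn y, hF]
    simp only
    exact tsum_mul_left
  have hlhs : ∑' k, ∫ y in Ioi (0:ℝ), F k y = h p / x := by
    have : (fun k => ∫ y in Ioi (0:ℝ), F k y)
        = fun k => c k * Real.exp (-x*((k:ℝ)/n)) / x := funext hval
    rw [this]
    exact ((hps'.div_const x).tsum_eq)
  rw [← funext hpt, ← hswap, hlhs]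

variable {h : ℝ → ℝ}
noncomputable def UU : Ultrafilter ℕ := Ultrafilter.of atTop

lemma UU_le : (UU : Filter ℕ) ≤ atTop := Ultrafilter.of_le _

lemma UU_ev {p : ℕ → Prop} (hp : ∀ᶠ n in atTop, p n) : ∀ᶠ n in (UU : Filter ℕ), p n :=
  hp.filter_mono UU_le

lemma exists_ulim {u : ℕ → ℝ} {B : ℝ} (hb : ∀ᶠ n in (UU : Filter ℕ), u n ∈ Icc 0 B) :
    ∃ cc, Tendsto u (UU : Filter ℕ) (𝓝 cc) := by
  obtain ⟨cc, -, hcc⟩ := (isCompact_Icc (a := (0:ℝ)) (b := B)).ultrafilter_le_nhds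
    (UU.map u) (by
      rw [Ultrafilter.coe_map, le_principal_iff, mem_map]
      exact hb)
  exact ⟨cc, by rwa [Ultrafilter.coe_map] at hcc⟩

noncomputable def gl (h : ℝ → ℝ) (y : ℝ) : ℝ := limUnder (UU : Filter ℕ) (fun n => gnn h n y)

lemma tendsto_gl (hcm : CMOn h) (y : ℝ) :
    Tendsto (fun n => gnn h n y) (UU : Filter ℕ) (𝓝 (gl h y)) := by
  apply tendsto_nhds_limUnder
  by_cases hy : 0 ≤ y
  · apply exists_ulim (B := h 1 * exp (2*y))
    apply UU_ev
    rw [eventually_atTop]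
    refine ⟨2, fun n hn => ⟨gnn_nonneg hcm (by omega) y, ?_⟩⟩
    have h2 : (2:ℝ)*1 ≤ (n:ℝ) := by
      rw [mul_one]
      exact_mod_cast hn
    simpa using gnn_le hcm one_pos h2 hy
  · refine ⟨0, Tendsto.congr (fun n => ?_) tendsto_const_nhds⟩
    rw [gnn, if_neg hy]

lemma gl_nonneg (hcm : CMOn h) (y : ℝ) : 0 ≤ gl h y :=
  ge_of_tendsto (tendsto_gl hcm y) (UU_ev ((eventually_ge_atTop 1).mono
    fun n hn => gnn_nonneg hcm hn y))

lemma gl_mono (hcm : CMOn h) : Monotone (gl h) := fun y y' hyy =>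
  le_of_tendsto_of_tendsto (tendsto_gl hcm y) (tendsto_gl hcm y')
    (UU_ev ((eventually_ge_atTop 1).mono fun n hn => gnn_mono hcm hn hyy))

lemma gl_neg (hcm : CMOn h) {y : ℝ} (hy : y < 0) : gl h y = 0 := by
  refine tendsto_nhds_unique (tendsto_gl hcm y) ?_
  refine Tendsto.congr (fun n => ?_) tendsto_const_nhds
  rw [gnn, if_neg (not_le.2 hy)]

lemma gl_le (hcm : CMOn h) {q : ℝ} (hq : 0 < q) {y : ℝ} (hy : 0 ≤ y) :
    gl h y ≤ h q * exp (2*q*y) := by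
  refine le_of_tendsto (tendsto_gl hcm y) (UU_ev ((eventually_ge_atTop ⌈2*q⌉₊).mono
    fun n hn => gnn_le hcm hq ?_ hy))
  exact le_trans (Nat.le_ceil _) (by exact_mod_cast hn)

noncomputable def gg (h : ℝ → ℝ) (y : ℝ) : ℝ := sInf (gl h '' Ioi y)

lemma gg_bddBelow (hcm : CMOn h) (y : ℝ) : BddBelow (gl h '' Ioi y) :=
  ⟨0, fun z hz => by obtain ⟨w, -, rfl⟩ := hz; exact gl_nonneg hcm w⟩

lemma gg_nonempty (y : ℝ) : (gl h '' Ioi y).Nonempty :=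
  ⟨gl h (y+1), mem_image_of_mem _ (mem_Ioi.2 (lt_add_one y))⟩

lemma gl_le_gg (hcm : CMOn h) {a y : ℝ} (hay : a ≤ y) : gl h a ≤ gg h y := by
  refine le_csInf (gg_nonempty y) fun z hz => ?_
  obtain ⟨w, hw, rfl⟩ := hz
  exact gl_mono hcm (le_trans hay (mem_Ioi.1 hw).le)

lemma gg_le_gl (hcm : CMOn h) {y b : ℝ} (hyb : y < b) : gg h y ≤ gl h b :=
  csInf_le (gg_bddBelow hcm y) (mem_image_of_mem _ hyb)

lemma gg_nonneg (hcm : CMOn h) (y : ℝ) : 0 ≤ gg h y :=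
  le_trans (gl_nonneg hcm y) (gl_le_gg hcm (le_refl y))

lemma gg_mono (hcm : CMOn h) : Monotone (gg h) := by
  intro y y' hyy
  refine le_csInf (gg_nonempty y') fun z hz => ?_
  obtain ⟨w, hw, rfl⟩ := hz
  exact gg_le_gl hcm (lt_of_le_of_lt hyy (mem_Ioi.1 hw))

lemma gg_neg (hcm : CMOn h) {y : ℝ} (hy : y < 0) : gg h y = 0 := by
  refine le_antisymm ?_ (gg_nonneg hcm y)
  refine le_trans (gg_le_gl hcm (show y < y/2 by linarith)) ?_
  rw [gl_neg hcm (show y/2 < 0 by linarith)]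

lemma gg_rc (hcm : CMOn h) (y : ℝ) : ContinuousWithinAt (gg h) (Ici y) y := by
  rw [← continuousWithinAt_Ioi_iff_Ici]
  have h1 : Tendsto (gg h) (𝓝[>] y) (𝓝 (sInf (gg h '' Ioi y))) :=
    (gg_mono hcm).tendsto_nhdsGT y
  have h2 : sInf (gg h '' Ioi y) = gg h y := by
    apply le_antisymm
    · refine le_csInf (gg_nonempty y) fun z hz => ?_
      obtain ⟨b, hb, rfl⟩ := hz
      set w : ℝ := (y + b)/2 with hwdef
      have hyw : y < w := by
        rw [hwdef]
        have := mem_Ioi.1 hb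
        linarith
      have hwb : w < b := by
        rw [hwdef]
        have := mem_Ioi.1 hb
        linarith
      refine le_trans (csInf_le ⟨0, fun z hz => ?_⟩ (mem_image_of_mem _ (mem_Ioi.2 hyw)))
        (gg_le_gl hcm hwb)
      obtain ⟨v, -, rfl⟩ := hz
      exact gg_nonneg hcm v
    · refine le_csInf ⟨gg h (y+1), mem_image_of_mem _ (mem_Ioi.2 (lt_add_one y))⟩
        fun z hz => ?_
      obtain ⟨w, hw, rfl⟩ := hz
      exact gg_mono hcm (mem_Ioi.1 hw).le
  rw [h2] at h1
  exact h1


lemma pn_tendsto {x : ℝ} (hx : 0 < x) :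
    Tendsto (fun n : ℕ => (n:ℝ)*(1 - Real.exp (-x/n))) atTop (𝓝 x) := by
  have hφ : HasDerivAt (fun t : ℝ => 1 - Real.exp (-t)) 1 0 := by
    have h1 : HasDerivAt (fun t : ℝ => Real.exp (-t)) (-1) 0 := by
      have h2 := (Real.hasDerivAt_exp (-0)).comp 0 (hasDerivAt_neg 0)
      simpa [Function.comp_def] using h2
    simpa using h1.const_sub 1
  have hslope : Tendsto (fun t : ℝ => (1 - Real.exp (-t))/t) (𝓝[≠] 0) (𝓝 1) := by
    have h3 := hasDerivAt_iff_tendsto_slope.1 hφ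
    refine h3.congr' ?_
    filter_upwards [self_mem_nhdsWithin] with t ht
    rw [slope_def_field]
    simp only [neg_zero, Real.exp_zero]
    rw [div_eq_div_iff ?_ ?_]
    · ring
    · exact sub_ne_zero.2 ht
    · exact ht
  have h2 : Tendsto (fun n : ℕ => x/(n:ℝ)) atTop (𝓝[≠] 0) := by
    rw [tendsto_nhdsWithin_iff]
    constructor
    · exact tendsto_const_div_atTop_nhds_zero_nat x
    · filter_upwards [eventually_ge_atTop 1] with n hn
      have hn0 : (0:ℝ) < n := by exact_mod_cast hn
      simp only [mem_compl_iff, mem_singleton_iff]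
      positivity
  have h4 : Tendsto (fun n : ℕ => x * ((1 - Real.exp (-(x/(n:ℝ))))/(x/(n:ℝ)))) atTop
      (𝓝 (x * 1)) := (hslope.comp h2).const_mul x
  rw [mul_one] at h4
  refine h4.congr' ?_
  filter_upwards [eventually_ge_atTop 1] with n hn
  have hn0 : (0:ℝ) < n := by exact_mod_cast hn
  have hxn : x/(n:ℝ) ≠ 0 := by positivity
  rw [neg_div]
  field_simp

lemma tendsto_I (hcm : CMOn h) {x : ℝ} (hx : 0 < x) :
    Tendsto (fun n : ℕ => ∫ y in Ioi (0:ℝ), Real.exp (-x*y) * gnn h n y) atTop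
      (𝓝 (h x / x)) := by
  have hcont : ContinuousAt h x := hcm.1.continuousOn.continuousAt (Ioi_mem_nhds hx)
  have h1 : Tendsto (fun n : ℕ => h ((n:ℝ)*(1 - Real.exp (-x/n))) / x) atTop (𝓝 (h x / x)) :=
    (hcont.tendsto.comp (pn_tendsto hx)).div_const x
  refine h1.congr' ?_
  filter_upwards [eventually_ge_atTop 1] with n hn
  exact (gnn_integral_eq hcm hx (by omega)).symm


variable {h : ℝ → ℝ}
lemma gg_integrable (hcm : CMOn h) {x : ℝ} (hx : 0 < x) :
    IntegrableOn (fun y => Real.exp (-x*y) * gg h y) (Ioi 0) := by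
  have hq0 : (0:ℝ) < x/4 := by linarith
  have hmeas : AEStronglyMeasurable (fun y => Real.exp (-x*y) * gg h y)
      (volume.restrict (Ioi 0)) := by
    apply Measurable.aestronglyMeasurable
    exact (Real.measurable_exp.comp (measurable_const.mul measurable_id)).mul
      (gg_mono hcm).measurable
  apply Integrable.mono' (g := fun y => (h (x/4) * Real.exp (x/2)) * Real.exp (-(x/2) * y))
    (((exp_neg_integrableOn_Ioi 0 (by linarith : (0:ℝ) < x/2))).const_mul _) hmeas
  rw [ae_restrict_iff' measurableSet_Ioi]
  refine ae_of_all _ fun y hy => ?_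
  have hy0 : (0:ℝ) ≤ y := (mem_Ioi.1 hy).le
  have h1 : 0 ≤ gg h y := gg_nonneg hcm y
  rw [Real.norm_of_nonneg (by positivity)]
  have h2 : gg h y ≤ h (x/4) * Real.exp (2*(x/4)*(y+1)) :=
    le_trans (gg_le_gl hcm (lt_add_one y)) (gl_le hcm hq0 (by linarith))
  calc Real.exp (-x*y) * gg h y
      ≤ Real.exp (-x*y) * (h (x/4) * Real.exp (2*(x/4)*(y+1))) :=
        mul_le_mul_of_nonneg_left h2 (exp_nonneg _)
    _ = (h (x/4) * Real.exp (x/2)) * (Real.exp (-x*y) * Real.exp ((x/2)*y)) := by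
        rw [show 2*(x/4)*(y+1) = (x/2)*y + x/2 from by ring, Real.exp_add]
        ring
    _ = (h (x/4) * Real.exp (x/2)) * Real.exp (-(x/2) * y) := by
        rw [← Real.exp_add]
        ring_nf

lemma tail_le (hcm : CMOn h) {x : ℝ} (hx : 0 < x) {n : ℕ} (hn : 0 < n)
    (hn2 : x/2 ≤ (n:ℝ)) {M : ℝ} (hM : 0 ≤ M) :
    ∫ y in Ioi M, Real.exp (-x*y) * gnn h n y
      ≤ h (x/4) * Real.exp (-(x/2)*M) / (x/2) := by
  have hq0 : (0:ℝ) < x/4 := by linarith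
  have hsub : Ioi M ⊆ Ioi (0:ℝ) := fun z hz => lt_of_le_of_lt hM (mem_Ioi.1 hz)
  have hint1 : IntegrableOn (fun y => Real.exp (-x*y) * gnn h n y) (Ioi M) :=
    (gnn_integrable hcm hx hn).mono_set hsub
  have hint2 : IntegrableOn (fun y => h (x/4) * Real.exp (-(x/2)*y)) (Ioi M) :=
    ((exp_neg_integrableOn_Ioi M (by linarith : (0:ℝ) < x/2))).const_mul _
  calc ∫ y in Ioi M, Real.exp (-x*y) * gnn h n y
      ≤ ∫ y in Ioi M, h (x/4) * Real.exp (-(x/2)*y) := by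
        refine setIntegral_mono_on hint1 hint2 measurableSet_Ioi fun y hy => ?_
        have hy0 : (0:ℝ) ≤ y := (hsub hy).le
        calc Real.exp (-x*y) * gnn h n y
            ≤ Real.exp (-x*y) * (h (x/4) * Real.exp (2*(x/4)*y)) :=
              mul_le_mul_of_nonneg_left
                (gnn_le hcm hq0 (by linarith) hy0) (exp_nonneg _)
          _ = h (x/4) * (Real.exp (-x*y) * Real.exp ((x/2)*y)) := by ring_nf
          _ = h (x/4) * Real.exp (-(x/2)*y) := by rw [← Real.exp_add]; ring_nf
    _ = h (x/4) * Real.exp (-(x/2)*M) / (x/2) := by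
        rw [integral_const_mul, exp_int (show (0:ℝ) < x/2 by linarith) M]
        ring

lemma tail_nonneg (hcm : CMOn h) {x : ℝ} (hx : 0 < x) {n : ℕ} (hn : 0 < n) (M : ℝ) :
    0 ≤ ∫ y in Ioi M, Real.exp (-x*y) * gnn h n y :=
  setIntegral_nonneg measurableSet_Ioi fun y _ =>
    mul_nonneg (exp_nonneg _) (gnn_nonneg hcm hn y)


lemma key_M (hcm : CMOn h) {x : ℝ} (hx : 0 < x) {M : ℕ} (hM : 0 < M) :
    (∫ y in Ioc (0:ℝ) (M:ℝ), Real.exp (-x*y) * gg h y) ≤ h x / x ∧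
    h x / x ≤ (∫ y in Ioc (0:ℝ) (M:ℝ), Real.exp (-x*y) * gg h y)
      + h (x/4) * Real.exp (-(x/2)*(M:ℝ)) / (x/2) := by
  have hM0 : (0:ℝ) ≤ (M:ℝ) := by positivity
  have hecont : Continuous (fun y : ℝ => Real.exp (-x*y)) :=
    Real.continuous_exp.comp (continuous_const.mul continuous_id)
  set TB : ℝ := h (x/4) * Real.exp (-(x/2)*(M:ℝ)) / (x/2) with hTBdef
  set IM : ℝ := ∫ y in Ioc (0:ℝ) (M:ℝ), Real.exp (-x*y) * gg h y with hIMdef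
  have main : ∀ m : ℕ, 1 ≤ m →
      (IM ≤ h x / x + gl h M / m) ∧ (h x / x ≤ IM + gl h M / m + TB) := by
    intro m hm
    have hm0 : (0:ℝ) < m := by exact_mod_cast hm
    set a : ℕ → ℝ := fun j => (j:ℝ)/(m:ℝ) with ha
    set J : ℕ := m * M with hJ
    have haJ : a J = (M:ℝ) := by
      rw [ha, hJ]
      push_cast
      field_simp
    have ha0 : a 0 = 0 := by simp [ha]
    have hale : ∀ j : ℕ, a j ≤ a (j+1) := by
      intro j
      rw [ha]
      apply div_le_div_of_nonneg_right ?_ hm0.le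
      push_cast
      linarith
    have haj0 : ∀ j : ℕ, 0 ≤ a j := fun j => by rw [ha]; positivity
    have hsubIoi : ∀ j : ℕ, Ioc (a j) (a (j+1)) ⊆ Ioi (0:ℝ) :=
      fun j z hz => lt_of_le_of_lt (haj0 j) hz.1
    set w : ℕ → ℝ := fun j => ∫ y in a j..a (j+1), Real.exp (-x*y) with hw
    have he_int : ∀ j : ℕ, IntervalIntegrable (fun y : ℝ => Real.exp (-x*y)) volume
        (a j) (a (j+1)) := fun j => hecont.intervalIntegrable _ _
    have hwnn : ∀ j : ℕ, 0 ≤ w j := fun j =>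
      intervalIntegral.integral_nonneg (hale j) (fun y _ => exp_nonneg _)
    have hwle : ∀ j : ℕ, w j ≤ 1/m := by
      intro j
      have h1 : w j ≤ ∫ _ in a j..a (j+1), (1:ℝ) := by
        refine intervalIntegral.integral_mono_on (hale j) (he_int j)
          intervalIntegrable_const (fun y hy => ?_)
        rw [Real.exp_le_one_iff]
        have : 0 ≤ y := le_trans (haj0 j) hy.1
        nlinarith
      rw [intervalIntegral.integral_const, smul_eq_mul, mul_one] at h1
      refine le_trans h1 (le_of_eq ?_)
      rw [ha]
      push_cast
      field_simp
      ring
    -- interval integrability of the integrands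
    have hint_gg : ∀ j : ℕ, IntervalIntegrable (fun y => Real.exp (-x*y) * gg h y) volume
        (a j) (a (j+1)) := by
      intro j
      rw [intervalIntegrable_iff_integrableOn_Ioc_of_le (hale j)]
      exact (gg_integrable hcm hx).mono_set (hsubIoi j)
    have hint_gn : ∀ n : ℕ, 0 < n → ∀ j : ℕ,
        IntervalIntegrable (fun y => Real.exp (-x*y) * gnn h n y) volume (a j) (a (j+1)) := by
      intro n hn j
      rw [intervalIntegrable_iff_integrableOn_Ioc_of_le (hale j)]
      exact (gnn_integrable hcm hx hn).mono_set (hsubIoi j)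
    -- sums of adjacent interval integrals
    have sum_eq_gg : ∑ j ∈ Finset.range J, ∫ y in a j..a (j+1), Real.exp (-x*y) * gg h y
        = IM := by
      rw [intervalIntegral.sum_integral_adjacent_intervals (fun j _ => hint_gg j), ha0, haJ,
        hIMdef, intervalIntegral.integral_of_le hM0]
    have sum_eq_gn : ∀ n : ℕ, 0 < n →
        ∑ j ∈ Finset.range J, (∫ y in a j..a (j+1), Real.exp (-x*y) * gnn h n y)
        = ∫ y in Ioc (0:ℝ) (M:ℝ), Real.exp (-x*y) * gnn h n y := by
      intro n hn
      rw [intervalIntegral.sum_integral_adjacent_intervals (fun j _ => hint_gn n hn j), ha0, haJ,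
        intervalIntegral.integral_of_le hM0]
    -- per-interval bounds for gg
    have low_gg : ∀ j : ℕ, gl h (a j) * w j ≤ ∫ y in a j..a (j+1), Real.exp (-x*y) * gg h y := by
      intro j
      have h1 : ∫ y in a j..a (j+1), gl h (a j) * Real.exp (-x*y)
          ≤ ∫ y in a j..a (j+1), Real.exp (-x*y) * gg h y := by
        refine intervalIntegral.integral_mono_on (hale j) ((he_int j).const_mul _)
          (hint_gg j) (fun y hy => ?_)
        rw [mul_comm]
        exact mul_le_mul_of_nonneg_left (gl_le_gg hcm hy.1) (exp_nonneg _)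
      rwa [intervalIntegral.integral_const_mul] at h1
    have up_gg : ∀ j : ℕ, (∫ y in a j..a (j+1), Real.exp (-x*y) * gg h y)
        ≤ gl h (a (j+1)) * w j := by
      intro j
      have hIoo : ∀ (F : ℝ → ℝ), (∫ y in a j..a (j+1), F y)
          = ∫ y in Ioo (a j) (a (j+1)), F y := by
        intro F
        rw [intervalIntegral.integral_of_le (hale j), integral_Ioc_eq_integral_Ioo]
      rw [hIoo]
      have h2 : (∫ y in Ioo (a j) (a (j+1)), Real.exp (-x*y) * gg h y)
          ≤ ∫ y in Ioo (a j) (a (j+1)), gl h (a (j+1)) * Real.exp (-x*y) := by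
        refine setIntegral_mono_on ?_ ?_ measurableSet_Ioo (fun y hy => ?_)
        · exact ((intervalIntegrable_iff_integrableOn_Ioc_of_le (hale j)).1
            (hint_gg j)).mono_set Ioo_subset_Ioc_self
        · exact (((intervalIntegrable_iff_integrableOn_Ioc_of_le (hale j)).1
            ((he_int j).const_mul _)).mono_set Ioo_subset_Ioc_self)
        · rw [mul_comm (gl h (a (j+1)))]
          exact mul_le_mul_of_nonneg_left (le_trans (gg_le_gl hcm hy.2) (le_refl _))
            (exp_nonneg _)
      refine le_trans h2 (le_of_eq ?_)
      rw [← hIoo, intervalIntegral.integral_const_mul]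
    -- per-interval bounds for gnn
    have low_gn : ∀ n : ℕ, 0 < n → ∀ j : ℕ, gnn h n (a j) * w j
        ≤ ∫ y in a j..a (j+1), Real.exp (-x*y) * gnn h n y := by
      intro n hn j
      have h1 : ∫ y in a j..a (j+1), gnn h n (a j) * Real.exp (-x*y)
          ≤ ∫ y in a j..a (j+1), Real.exp (-x*y) * gnn h n y := by
        refine intervalIntegral.integral_mono_on (hale j) ((he_int j).const_mul _)
          (hint_gn n hn j) (fun y hy => ?_)
        rw [mul_comm]
        exact mul_le_mul_of_nonneg_left (gnn_mono hcm hn hy.1) (exp_nonneg _)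
      rwa [intervalIntegral.integral_const_mul] at h1
    have up_gn : ∀ n : ℕ, 0 < n → ∀ j : ℕ,
        (∫ y in a j..a (j+1), Real.exp (-x*y) * gnn h n y) ≤ gnn h n (a (j+1)) * w j := by
      intro n hn j
      have h1 : ∫ y in a j..a (j+1), Real.exp (-x*y) * gnn h n y
          ≤ ∫ y in a j..a (j+1), gnn h n (a (j+1)) * Real.exp (-x*y) := by
        refine intervalIntegral.integral_mono_on (hale j) (hint_gn n hn j)
          ((he_int j).const_mul _) (fun y hy => ?_)
        rw [mul_comm (gnn h n (a (j+1)))]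
        exact mul_le_mul_of_nonneg_left (gnn_mono hcm hn hy.2) (exp_nonneg _)
      rwa [intervalIntegral.integral_const_mul] at h1
    set SL : ℝ := ∑ j ∈ Finset.range J, gl h (a j) * w j with hSL
    set SU : ℝ := ∑ j ∈ Finset.range J, gl h (a (j+1)) * w j with hSU
    have hSLIM : SL ≤ IM := by
      rw [hSL, ← sum_eq_gg]
      exact Finset.sum_le_sum fun j _ => low_gg j
    have hIMSU : IM ≤ SU := by
      rw [hSU, ← sum_eq_gg]
      exact Finset.sum_le_sum fun j _ => up_gg j
    have hSUSL : SU ≤ SL + gl h M / m := by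
      have h1 : SU - SL = ∑ j ∈ Finset.range J, (gl h (a (j+1)) - gl h (a j)) * w j := by
        rw [hSU, hSL, ← Finset.sum_sub_distrib]
        exact Finset.sum_congr rfl fun j _ => by ring
      have h2 : ∑ j ∈ Finset.range J, (gl h (a (j+1)) - gl h (a j)) * w j
          ≤ ∑ j ∈ Finset.range J, (gl h (a (j+1)) - gl h (a j)) * (1/m) := by
        refine Finset.sum_le_sum fun j _ => ?_
        exact mul_le_mul_of_nonneg_left (hwle j) (sub_nonneg.2 (gl_mono hcm (hale j)))
      have h3 : ∑ j ∈ Finset.range J, (gl h (a (j+1)) - gl h (a j)) * (1/m)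
          = (gl h (a J) - gl h (a 0)) * (1/m) := by
        rw [← Finset.sum_mul, Finset.sum_range_sub (fun j => gl h (a j))]
      have h4 : (gl h (a J) - gl h (a 0)) * (1/m) ≤ gl h M / m := by
        rw [haJ, ha0]
        have := gl_nonneg hcm 0
        rw [div_eq_mul_one_div (gl h (M:ℝ)) (m:ℝ)]
        apply mul_le_mul_of_nonneg_right (by linarith) (by positivity)
      linarith
    -- limits along the ultrafilter
    have hSLn : Tendsto (fun n => ∑ j ∈ Finset.range J, gnn h n (a j) * w j)
        (UU : Filter ℕ) (𝓝 SL) := by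
      rw [hSL]
      exact tendsto_finset_sum _ (fun j _ => (tendsto_gl hcm (a j)).mul_const _)
    have hSUn : Tendsto (fun n => ∑ j ∈ Finset.range J, gnn h n (a (j+1)) * w j)
        (UU : Filter ℕ) (𝓝 SU) := by
      rw [hSU]
      exact tendsto_finset_sum _ (fun j _ => (tendsto_gl hcm (a (j+1))).mul_const _)
    have hInt : Tendsto (fun n : ℕ => ∫ y in Ioi (0:ℝ), Real.exp (-x*y) * gnn h n y)
        (UU : Filter ℕ) (𝓝 (h x / x)) := (tendsto_I hcm hx).mono_left UU_le
    have hsplit : ∀ n : ℕ, 0 < n → (∫ y in Ioi (0:ℝ), Real.exp (-x*y) * gnn h n y)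
        = (∫ y in Ioc (0:ℝ) (M:ℝ), Real.exp (-x*y) * gnn h n y)
          + ∫ y in Ioi (M:ℝ), Real.exp (-x*y) * gnn h n y := by
      intro n hn
      rw [← Ioc_union_Ioi_eq_Ioi hM0, setIntegral_union (Ioc_disjoint_Ioi le_rfl)
        measurableSet_Ioi ((gnn_integrable hcm hx hn).mono_set Ioc_subset_Ioi_self)
        ((gnn_integrable hcm hx hn).mono_set
          (fun z hz => lt_of_le_of_lt hM0 (mem_Ioi.1 hz)))]
    have hlowev : ∀ᶠ n in (UU : Filter ℕ),
        (∑ j ∈ Finset.range J, gnn h n (a j) * w j)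
          ≤ ∫ y in Ioi (0:ℝ), Real.exp (-x*y) * gnn h n y := by
      refine UU_ev ((eventually_ge_atTop 1).mono fun n hn => ?_)
      have hn0 : 0 < n := hn
      calc ∑ j ∈ Finset.range J, gnn h n (a j) * w j
          ≤ ∑ j ∈ Finset.range J, ∫ y in a j..a (j+1), Real.exp (-x*y) * gnn h n y :=
            Finset.sum_le_sum fun j _ => low_gn n hn0 j
        _ = ∫ y in Ioc (0:ℝ) (M:ℝ), Real.exp (-x*y) * gnn h n y := sum_eq_gn n hn0
        _ ≤ ∫ y in Ioi (0:ℝ), Real.exp (-x*y) * gnn h n y := by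
            rw [hsplit n hn0]
            linarith [tail_nonneg hcm hx hn0 (M:ℝ)]
    have hupev : ∀ᶠ n in (UU : Filter ℕ),
        (∫ y in Ioi (0:ℝ), Real.exp (-x*y) * gnn h n y)
          ≤ (∑ j ∈ Finset.range J, gnn h n (a (j+1)) * w j) + TB := by
      refine UU_ev ((eventually_ge_atTop (max 1 ⌈x/2⌉₊)).mono fun n hn => ?_)
      have hn0 : 0 < n := le_trans (le_max_left _ _) hn
      have hn2 : x/2 ≤ (n:ℝ) :=
        le_trans (Nat.le_ceil _) (by exact_mod_cast le_trans (le_max_right _ _) hn)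
      rw [hsplit n hn0]
      have ht := tail_le hcm hx hn0 hn2 hM0
      have hm1 : (∫ y in Ioc (0:ℝ) (M:ℝ), Real.exp (-x*y) * gnn h n y)
          ≤ ∑ j ∈ Finset.range J, gnn h n (a (j+1)) * w j := by
        rw [← sum_eq_gn n hn0]
        exact Finset.sum_le_sum fun j _ => up_gn n hn0 j
      rw [hTBdef]
      linarith
    have hlow : SL ≤ h x / x := le_of_tendsto_of_tendsto hSLn hInt hlowev
    have hup : h x / x ≤ SU + TB :=
      le_of_tendsto_of_tendsto hInt (hSUn.add_const TB) hupev
    constructor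
    · linarith
    · linarith
  -- let m → ∞
  have hseq : Tendsto (fun m : ℕ => gl h M / m) atTop (𝓝 0) :=
    tendsto_const_div_atTop_nhds_zero_nat _
  constructor
  · have ht : Tendsto (fun m : ℕ => h x / x + gl h M / m) atTop (𝓝 (h x / x)) := by
      have := tendsto_const_nhds (x := h x / x) (f := atTop (α := ℕ)) |>.add hseq
      simpa using this
    exact ge_of_tendsto ht ((eventually_ge_atTop 1).mono fun m hm => (main m hm).1)
  · have ht : Tendsto (fun m : ℕ => IM + gl h M / m + TB) atTop (𝓝 (IM + TB)) := by
      have h1 := (tendsto_const_nhds (x := IM) (f := atTop (α := ℕ))).add hseq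
      have h2 := h1.add_const TB
      simpa using h2
    exact ge_of_tendsto ht ((eventually_ge_atTop 1).mono fun m hm => (main m hm).2)

lemma main_eq (hcm : CMOn h) {x : ℝ} (hx : 0 < x) :
    ∫ y in Ioi (0:ℝ), Real.exp (-x*y) * gg h y = h x / x := by
  have hIocM : Tendsto (fun M : ℕ => ∫ y in Ioc (0:ℝ) (M:ℝ), Real.exp (-x*y) * gg h y)
      atTop (𝓝 (∫ y in Ioi (0:ℝ), Real.exp (-x*y) * gg h y)) := by
    have hu : (⋃ M : ℕ, Ioc (0:ℝ) (M:ℝ)) = Ioi (0:ℝ) := by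
      ext z
      simp only [mem_iUnion, mem_Ioc, mem_Ioi]
      constructor
      · rintro ⟨M, hz, -⟩
        exact hz
      · intro hz
        obtain ⟨M, hMz⟩ := exists_nat_ge z
        exact ⟨M, hz, hMz⟩
    have := tendsto_setIntegral_of_monotone (s := fun M : ℕ => Ioc (0:ℝ) (M:ℝ))
      (fun M => measurableSet_Ioc)
      (fun M M' hMM => Ioc_subset_Ioc le_rfl (by exact_mod_cast hMM))
      (by rw [hu]; exact gg_integrable hcm hx)
    rwa [hu] at this
  have hTB0 : Tendsto (fun M : ℕ => h (x/4) * Real.exp (-(x/2)*(M:ℝ)) / (x/2)) atTop (𝓝 0) := by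
    have h1 : Tendsto (fun M : ℕ => -(x/2)*(M:ℝ)) atTop atBot := by
      apply Tendsto.const_mul_atTop_of_neg (by linarith : -(x/2) < 0)
      exact tendsto_natCast_atTop_atTop
    have h2 : Tendsto (fun M : ℕ => Real.exp (-(x/2)*(M:ℝ))) atTop (𝓝 0) :=
      Real.tendsto_exp_atBot.comp h1
    have h3 := (h2.const_mul (h (x/4))).div_const (x/2)
    simpa using h3
  apply le_antisymm
  · exact le_of_tendsto hIocM ((eventually_ge_atTop 1).mono fun M hM => (key_M hcm hx hM).1)
  · have ht : Tendsto (fun M : ℕ => (∫ y in Ioc (0:ℝ) (M:ℝ), Real.exp (-x*y) * gg h y)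
        + h (x/4) * Real.exp (-(x/2)*(M:ℝ)) / (x/2)) atTop
        (𝓝 (∫ y in Ioi (0:ℝ), Real.exp (-x*y) * gg h y)) := by
      have := hIocM.add hTB0
      simpa using this
    exact ge_of_tendsto ht ((eventually_ge_atTop 1).mono fun M hM => (key_M hcm hx hM).2)

end BW

theorem stmt0 (f : ℝ → ℝ)
    (hf : CMOn (fun x => x * f x)) :
    ∃ g : ℝ → ℝ,
      (∀ y, 0 ≤ g y) ∧
      Monotone g ∧
      (∀ y, ContinuousWithinAt g (Set.Ici y) y) ∧
      (∀ y < (0:ℝ), g y = 0) ∧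
      ∀ x > (0:ℝ),
        IntegrableOn (fun y => Real.exp (-x * y) * g y) (Set.Ioi 0) ∧
        f x = ∫ y in Set.Ioi (0:ℝ), Real.exp (-x * y) * g y := by
  refine ⟨BW.gg (fun x => x * f x), BW.gg_nonneg hf, BW.gg_mono hf,
    fun y => BW.gg_rc hf y, fun y hy => BW.gg_neg hf hy, ?_⟩
  intro x hx
  refine ⟨BW.gg_integrable hf hx, ?_⟩
  rw [BW.main_eq hf hx]
  exact (mul_div_cancel_left₀ (f x) (ne_of_gt hx)).symm
end

section
/- If f : (0,∞) → ℝ is infinitely differentiable and satisfies (-1)^n f^{(n)}(x) ≥ 0 for all n ≥ 1 (no sign condition on f itself), then the function exp(f(x)) satisfies (-1)^n (d^n/dx^n) exp(f(x)) ≥ 0 for all n ≥ 0, i.e. exp(f) is completely monotone. -/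
open MeasureTheory Filter Set Real

lemma sum_choose_aux (A B : ℕ → ℝ) (n : ℕ) :
    ∑ k ∈ Finset.range (n+1), (n.choose k : ℝ) * A (k+1) * B (n-k)
      + ∑ k ∈ Finset.range (n+1), (n.choose k : ℝ) * A k * B (n-k+1)
    = ∑ k ∈ Finset.range (n+2), ((n+1).choose k : ℝ) * A k * B (n+1-k) := by
  have h2 : ∑ k ∈ Finset.range (n+1), (n.choose k : ℝ) * A k * B (n-k+1)
      = (∑ k ∈ Finset.range (n+1), (n.choose (k+1) : ℝ) * A (k+1) * B (n-k))
        + A 0 * B (n+1) := by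
    rw [Finset.sum_range_succ' (fun k => (n.choose k : ℝ) * A k * B (n-k+1)) n,
      Finset.sum_range_succ (fun k => (n.choose (k+1) : ℝ) * A (k+1) * B (n-k)) n]
    simp only [Nat.choose_succ_self, Nat.cast_zero, zero_mul, add_zero,
      Nat.choose_zero_right, Nat.cast_one, one_mul, Nat.sub_zero]
    congr 1
    apply Finset.sum_congr rfl
    intro k hk
    have hk' : k < n := Finset.mem_range.mp hk
    have h : n - (k+1) + 1 = n - k := by omega
    rw [h]
  rw [h2, Finset.sum_range_succ' (fun k => ((n+1).choose k : ℝ) * A k * B (n+1-k)) (n+1)]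
  have h3 : ∀ k ∈ Finset.range (n+1),
      ((n+1).choose (k+1) : ℝ) * A (k+1) * B (n+1-(k+1))
      = (n.choose k : ℝ) * A (k+1) * B (n-k) + (n.choose (k+1) : ℝ) * A (k+1) * B (n-k) := by
    intro k hk
    have h : (n+1) - (k+1) = n - k := by omega
    rw [h, Nat.choose_succ_succ]
    push_cast
    ring
  rw [Finset.sum_congr rfl h3, Finset.sum_add_distrib]
  simp only [Nat.choose_zero_right, Nat.cast_one, one_mul, Nat.sub_zero]
  ring

lemma leibniz_aux {s : Set ℝ} (hs : IsOpen s) (n : ℕ) :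
    ∀ (u v : ℝ → ℝ), ContDiffOn ℝ (⊤ : ℕ∞) u s → ContDiffOn ℝ (⊤ : ℕ∞) v s →
    ∀ x ∈ s, iteratedDerivWithin n (fun y => u y * v y) s x =
      ∑ k ∈ Finset.range (n+1), (n.choose k : ℝ) *
        iteratedDerivWithin k u s x * iteratedDerivWithin (n-k) v s x := by
  induction n with
  | zero => intro u v hu hv x hx; simp
  | succ n ih =>
    intro u v hu hv x hx
    have hsu : UniqueDiffOn ℝ s := hs.uniqueDiffOn
    have hud : ContDiffOn ℝ (⊤ : ℕ∞) (derivWithin u s) s := hu.derivWithin hsu (by simp)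
    have hvd : ContDiffOn ℝ (⊤ : ℕ∞) (derivWithin v s) s := hv.derivWithin hsu (by simp)
    have heq : Set.EqOn (derivWithin (fun y => u y * v y) s)
        (fun y => derivWithin u s y * v y + u y * derivWithin v s y) s := by
      intro y hy
      exact derivWithin_fun_mul (hu.differentiableOn (by simp) y hy)
        (hv.differentiableOn (by simp) y hy)
    have hadd : iteratedDerivWithin n
        (fun y => derivWithin u s y * v y + u y * derivWithin v s y) s x
        = iteratedDerivWithin n (fun y => derivWithin u s y * v y) s x
          + iteratedDerivWithin n (fun y => u y * derivWithin v s y) s x := by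
      have := iteratedDerivWithin_add hx hsu
        (((hud.mul hv).of_le (by exact_mod_cast le_top) : ContDiffOn ℝ n (fun y => derivWithin u s y * v y) s) x hx)
        (((hu.mul hvd).of_le (by exact_mod_cast le_top) : ContDiffOn ℝ n (fun y => u y * derivWithin v s y) s) x hx)
      simpa [Pi.add_def] using this
    rw [iteratedDerivWithin_succ',
      iteratedDerivWithin_congr (n := n) heq hx, hadd,
      ih (derivWithin u s) v hud hv x hx, ih u (derivWithin v s) hu hvd x hx]
    have e1 : ∀ k ∈ Finset.range (n+1),
        (n.choose k : ℝ) * iteratedDerivWithin k (derivWithin u s) s x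
          * iteratedDerivWithin (n-k) v s x
        = (n.choose k : ℝ) * iteratedDerivWithin (k+1) u s x
          * iteratedDerivWithin (n-k) v s x := by
      intro k hk
      rw [← iteratedDerivWithin_succ']
    have e2 : ∀ k ∈ Finset.range (n+1),
        (n.choose k : ℝ) * iteratedDerivWithin k u s x
          * iteratedDerivWithin (n-k) (derivWithin v s) s x
        = (n.choose k : ℝ) * iteratedDerivWithin k u s x
          * iteratedDerivWithin (n-k+1) v s x := by
      intro k hk
      rw [← iteratedDerivWithin_succ']
    rw [Finset.sum_congr rfl e1, Finset.sum_congr rfl e2]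
    exact sum_choose_aux (fun k => iteratedDerivWithin k u s x)
      (fun k => iteratedDerivWithin k v s x) n

theorem stmt2 (f : ℝ → ℝ)
    (hf : ContDiffOn ℝ (⊤ : ℕ∞) f (Set.Ioi 0))
    (hsign : ∀ n : ℕ, 1 ≤ n → ∀ x ∈ Set.Ioi (0:ℝ),
      0 ≤ (-1 : ℝ)^n * iteratedDerivWithin n f (Set.Ioi 0) x) :
    CMOn (fun x => Real.exp (f x)) := by
  set s : Set ℝ := Set.Ioi (0:ℝ) with hsdef
  have hs : IsOpen s := isOpen_Ioi
  have hsu : UniqueDiffOn ℝ s := hs.uniqueDiffOn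
  set g : ℝ → ℝ := fun x => Real.exp (f x) with hgdef
  have hg : ContDiffOn ℝ (⊤ : ℕ∞) g s := Real.contDiff_exp.comp_contDiffOn hf
  have hderiv : Set.EqOn (derivWithin g s)
      (fun y => derivWithin f s y * g y) s := by
    intro y hy
    have hfd : HasDerivWithinAt f (derivWithin f s y) s y :=
      ((hf.differentiableOn (by simp)) y hy).hasDerivWithinAt
    have : HasDerivWithinAt g (Real.exp (f y) * derivWithin f s y) s y :=
      (Real.hasDerivAt_exp (f y)).comp_hasDerivWithinAt y hfd
    rw [this.derivWithin (hsu y hy)]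
    simp [hgdef, mul_comm]
  refine ⟨hg, ?_⟩
  intro n
  induction n using Nat.strong_induction_on with
  | _ n ih =>
    match n with
    | 0 =>
      intro x hx
      simp only [pow_zero, one_mul, iteratedDerivWithin_zero]
      exact (Real.exp_pos _).le
    | (m+1) =>
      intro x hx
      have hfd : ContDiffOn ℝ (⊤ : ℕ∞) (derivWithin f s) s := hf.derivWithin hsu (by simp)
      have key : iteratedDerivWithin (m+1) g s x
          = ∑ k ∈ Finset.range (m+1), (m.choose k : ℝ) *
              iteratedDerivWithin (k+1) f s x * iteratedDerivWithin (m-k) g s x := by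
        rw [iteratedDerivWithin_succ',
          iteratedDerivWithin_congr (n := m) hderiv hx,
          leibniz_aux hs m (derivWithin f s) g hfd hg x hx]
        apply Finset.sum_congr rfl
        intro k hk
        rw [← iteratedDerivWithin_succ']
      rw [key, Finset.mul_sum]
      apply Finset.sum_nonneg
      intro k hk
      have hkm : k < m + 1 := Finset.mem_range.mp hk
      have hpow : ((-1:ℝ))^(m+1) = ((-1:ℝ))^(k+1) * ((-1:ℝ))^(m-k) := by
        rw [← pow_add]
        congr 1
        omega
      have h1 : 0 ≤ ((-1:ℝ))^(k+1) * iteratedDerivWithin (k+1) f s x :=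
        hsign (k+1) (by omega) x hx
      have h2 : 0 ≤ ((-1:ℝ))^(m-k) * iteratedDerivWithin (m-k) g s x :=
        ih (m-k) (by omega) x hx
      calc (0:ℝ) ≤ (m.choose k : ℝ) * (((-1:ℝ))^(k+1) * iteratedDerivWithin (k+1) f s x)
            * (((-1:ℝ))^(m-k) * iteratedDerivWithin (m-k) g s x) :=
          mul_nonneg (mul_nonneg (Nat.cast_nonneg _) h1) h2
        _ = (-1:ℝ)^(m+1) * ((m.choose k : ℝ) *
              iteratedDerivWithin (k+1) f s x * iteratedDerivWithin (m-k) g s x) := by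
          rw [hpow]; ring
end

section
/- Let φ : (0,∞) → ℝ be differentiable, non-negative, non-increasing, with lim_{t→0+} t·φ(t) = 0, and assume its Laplace transform φ̃(p) = ∫₀^∞ e^{-pt}φ(t)dt exists for all p > 0. Then for every n ≥ 1, (-1)^n (d^n/dp^n)[p·φ̃(p)] ≤ 0; in fact (d^n/dp^n)[p·φ̃(p)] = (-1)^n ∫₀^∞ t^n φ'(t) e^{-pt} dt. -/
open MeasureTheory Filter Set Real

open Topology

variable {φ : ℝ → ℝ}


lemma aux_pow_le_exp (k : ℕ) {x : ℝ} (hx : 0 ≤ x) : x ^ k ≤ k.factorial * Real.exp x := by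
  have h : x ^ k / k.factorial ≤ Real.exp x := by
    refine le_trans ?_ (Real.sum_le_exp_of_nonneg hx (k+1))
    exact Finset.single_le_sum (f := fun i => x ^ i / i.factorial)
      (fun i _ => by positivity) (Finset.self_mem_range_succ k)
  have hk : (0:ℝ) < k.factorial := by exact_mod_cast k.factorial_pos
  calc x ^ k = (x ^ k / k.factorial) * k.factorial := by field_simp
    _ ≤ Real.exp x * k.factorial := by gcongr
    _ = k.factorial * Real.exp x := by ring

lemma aux_pow_exp (k : ℕ) {q : ℝ} (hq : 0 < q) :
    ∃ C : ℝ, 0 ≤ C ∧ ∀ t ∈ Set.Ioi (0:ℝ),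
      t ^ k * Real.exp (-q * t) ≤ C * Real.exp (-(q/2) * t) := by
  refine ⟨k.factorial * (2/q)^k, by positivity, fun t ht => ?_⟩
  have ht0 : (0:ℝ) < t := ht
  have h1 : ((q/2) * t) ^ k ≤ k.factorial * Real.exp ((q/2)*t) :=
    aux_pow_le_exp k (by positivity)
  have h2 : t ^ k ≤ k.factorial * (2/q)^k * Real.exp ((q/2)*t) := by
    have h3 : ((q/2) * t) ^ k = (q/2)^k * t^k := mul_pow _ _ _
    rw [h3] at h1
    have hqk : (0:ℝ) < (q/2)^k := by positivity
    calc t ^ k = ((q/2)^k * t^k) * (2/q)^k := by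
          field_simp [mul_pow]
          rw [← mul_pow, div_mul_div_comm, mul_comm q 2, div_self (mul_pos two_pos hq).ne', one_pow]
      _ ≤ (k.factorial * Real.exp ((q/2)*t)) * (2/q)^k := by gcongr
      _ = k.factorial * (2/q)^k * Real.exp ((q/2)*t) := by ring
  calc t ^ k * Real.exp (-q * t) ≤ (k.factorial * (2/q)^k * Real.exp ((q/2)*t)) * Real.exp (-q*t) := by
        gcongr
    _ = k.factorial * (2/q)^k * Real.exp (-(q/2) * t) := by
        rw [mul_assoc, ← Real.exp_add]; ring_nf

variable {φ : ℝ → ℝ}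

lemma aux_hasDerivAt (hdiff : DifferentiableOn ℝ φ (Set.Ioi 0)) {t : ℝ} (ht : 0 < t) :
    HasDerivAt φ (deriv φ t) t :=
  ((hdiff t ht).differentiableAt (isOpen_Ioi.mem_nhds ht)).hasDerivAt

lemma aux_deriv_nonpos (hdiff : DifferentiableOn ℝ φ (Set.Ioi 0))
    (hmono : AntitoneOn φ (Set.Ioi 0)) {t : ℝ} (ht : 0 < t) : deriv φ t ≤ 0 := by
  have hd := aux_hasDerivAt hdiff ht
  rw [hasDerivAt_iff_tendsto_slope] at hd
  have hd' : Tendsto (slope φ t) (𝓝[>] t) (𝓝 (deriv φ t)) :=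
    hd.mono_left (nhdsWithin_mono t (fun y hy => ne_of_gt hy))
  refine le_of_tendsto hd' ?_
  filter_upwards [self_mem_nhdsWithin] with y hy
  have hy' : t < y := hy
  have : φ y ≤ φ t := hmono ht (lt_trans ht hy') hy'.le
  have hden : 0 < y - t := by linarith
  rw [slope_def_field]
  exact div_nonpos_of_nonpos_of_nonneg (by linarith) hden.le



-- φ t ≤ φ 1 for t ≥ 1 etc used inline.

lemma aux_tendsto_top (hnn : ∀ t > (0:ℝ), 0 ≤ φ t) (hmono : AntitoneOn φ (Set.Ioi 0))
    {p : ℝ} (hp : 0 < p) :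
    Tendsto (fun t => t * (Real.exp (-p * t) * φ t)) atTop (𝓝 0) := by
  have h1 : Tendsto (fun t : ℝ => φ 1 * (t * Real.exp (-p * t))) atTop (𝓝 (φ 1 * 0)) := by
    apply Tendsto.const_mul
    have := tendsto_rpow_mul_exp_neg_mul_atTop_nhds_zero 1 p hp
    refine this.congr' ?_
    filter_upwards [eventually_gt_atTop (0:ℝ)] with x hx
    rw [Real.rpow_one]
  rw [mul_zero] at h1
  apply squeeze_zero_norm' _ h1
  filter_upwards [eventually_ge_atTop (1:ℝ)] with t ht
  have ht0 : (0:ℝ) < t := lt_of_lt_of_le one_pos ht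
  have hφt : 0 ≤ φ t := hnn t ht0
  have hφle : φ t ≤ φ 1 := by
    rcases eq_or_lt_of_le ht with h | h
    · rw [← h]
    · exact hmono (mem_Ioi.2 one_pos) (mem_Ioi.2 ht0) ht
  rw [Real.norm_eq_abs, abs_of_nonneg (by positivity)]
  calc t * (Real.exp (-p * t) * φ t) ≤ t * (Real.exp (-p*t) * φ 1) := by
        have := Real.exp_pos (-p*t); gcongr
    _ = φ 1 * (t * Real.exp (-p * t)) := by ring

lemma aux_exists_lim (hdiff : DifferentiableOn ℝ φ (Set.Ioi 0))
    (hnn : ∀ t > (0:ℝ), 0 ≤ φ t) (hmono : AntitoneOn φ (Set.Ioi 0))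
    {q ε : ℝ} (hq : 0 < q) (hε : 0 < ε) :
    ∃ l, Tendsto (fun t => Real.exp (-q * t) * φ t) atTop (𝓝 l) := by
  set g : ℝ → ℝ := fun t => Real.exp (-q * t) * φ t with hg
  have hgd : ∀ x ∈ Set.Ioi (0:ℝ), HasDerivAt g
      (Real.exp (-q*x) * (-q) * φ x + Real.exp (-q*x) * deriv φ x) x := by
    intro x hx
    have h1 : HasDerivAt (fun t : ℝ => Real.exp (-q * t)) (Real.exp (-q*x) * (-q)) x := by
      have := ((hasDerivAt_id x).const_mul (-q)).exp
      simpa [mul_comm] using this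
    exact h1.mul (aux_hasDerivAt hdiff hx)
  have hanti : AntitoneOn g (Set.Ici ε) := by
    apply antitoneOn_of_deriv_nonpos (convex_Ici ε)
    · intro x hx
      have hx0 : 0 < x := lt_of_lt_of_le hε hx
      exact (hgd x hx0).continuousAt.continuousWithinAt
    · intro x hx
      rw [interior_Ici] at hx
      exact ((hgd x (lt_trans hε hx)).differentiableAt).differentiableWithinAt
    · intro x hx
      rw [interior_Ici] at hx
      have hx0 : 0 < x := lt_trans hε hx
      rw [(hgd x hx0).deriv]
      have h1 : Real.exp (-q*x) * (-q) * φ x ≤ 0 := by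
        have h0 : Real.exp (-q*x) * (-q) ≤ 0 := by nlinarith [Real.exp_pos (-q*x)]
        exact mul_nonpos_of_nonpos_of_nonneg h0 (hnn x hx0)
      have h2 : Real.exp (-q*x) * deriv φ x ≤ 0 :=
        mul_nonpos_of_nonneg_of_nonpos (Real.exp_pos _).le (aux_deriv_nonpos hdiff hmono hx0)
      linarith
  set g' : ℝ → ℝ := fun t => g (max t ε) with hg'
  have hanti' : Antitone g' := by
    intro s t hst
    exact hanti (le_max_right s ε) (le_max_right t ε) (max_le_max hst le_rfl)
  have hbdd : BddBelow (range g') := by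
    refine ⟨0, fun y hy => ?_⟩
    obtain ⟨t, rfl⟩ := hy
    have : 0 < max t ε := lt_of_lt_of_le hε (le_max_right t ε)
    exact mul_nonneg (Real.exp_pos _).le (hnn _ this)
  refine ⟨_, (tendsto_atTop_ciInf hanti' hbdd).congr' ?_⟩
  filter_upwards [eventually_ge_atTop ε] with t ht
  show g (max t ε) = g t
  rw [max_eq_left ht]
lemma aux_int_pow (hnn : ∀ t > (0:ℝ), 0 ≤ φ t)
    (hint : ∀ p > (0:ℝ), IntegrableOn (fun t => Real.exp (-p * t) * φ t) (Set.Ioi 0))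
    {p : ℝ} (hp : 0 < p) (k : ℕ) :
    IntegrableOn (fun t => t ^ k * (Real.exp (-p * t) * φ t)) (Set.Ioi 0) := by
  obtain ⟨C, hC0, hC⟩ := aux_pow_exp k hp
  have hint2 := (hint (p/2) (by positivity)).const_mul C
  refine Integrable.mono' hint2 ?_ ?_
  · exact ((continuous_pow k).aestronglyMeasurable.restrict).mul (hint p hp).1
  · filter_upwards [ae_restrict_mem measurableSet_Ioi] with t ht
    have ht0 : (0:ℝ) < t := ht
    have hφ : 0 ≤ φ t := hnn t ht0
    have hnneg : 0 ≤ t ^ k * (Real.exp (-p*t) * φ t) :=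
      mul_nonneg (pow_nonneg ht0.le k) (mul_nonneg (Real.exp_pos _).le hφ)
    rw [Real.norm_eq_abs, abs_of_nonneg hnneg]
    calc t ^ k * (Real.exp (-p*t) * φ t) = (t^k * Real.exp (-p*t)) * φ t := by ring
      _ ≤ (C * Real.exp (-(p/2)*t)) * φ t := mul_le_mul_of_nonneg_right (hC t ht) hφ
      _ = C * (Real.exp (-(p/2)*t) * φ t) := by ring

lemma aux_int_derivexp (hdiff : DifferentiableOn ℝ φ (Set.Ioi 0))
    (hnn : ∀ t > (0:ℝ), 0 ≤ φ t) (hmono : AntitoneOn φ (Set.Ioi 0))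
    (hint : ∀ p > (0:ℝ), IntegrableOn (fun t => Real.exp (-p * t) * φ t) (Set.Ioi 0))
    {q ε : ℝ} (hq : 0 < q) (hε : 0 < ε) :
    IntegrableOn (fun t => Real.exp (-q * t) * deriv φ t) (Set.Ioi ε) := by
  obtain ⟨l, hl⟩ := aux_exists_lim hdiff hnn hmono hq hε
  set g' : ℝ → ℝ := fun x => Real.exp (-q*x) * (-q) * φ x + Real.exp (-q*x) * deriv φ x with hg'
  have hgd : ∀ x ∈ Set.Ici ε, HasDerivAt (fun t => Real.exp (-q * t) * φ t) (g' x) x := by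
    intro x hx
    have hx0 : 0 < x := lt_of_lt_of_le hε hx
    have h1 : HasDerivAt (fun t : ℝ => Real.exp (-q * t)) (Real.exp (-q*x) * (-q)) x := by
      simpa [mul_comm] using ((hasDerivAt_id x).const_mul (-q)).exp
    exact h1.mul (aux_hasDerivAt hdiff hx0)
  have hneg : ∀ x ∈ Set.Ioi ε, g' x ≤ 0 := by
    intro x hx
    have hx0 : 0 < x := lt_trans hε hx
    have h1 : Real.exp (-q*x) * (-q) * φ x ≤ 0 :=
      mul_nonpos_of_nonpos_of_nonneg
        (by nlinarith [Real.exp_pos (-q*x)]) (hnn x hx0)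
    have h2 : Real.exp (-q*x) * deriv φ x ≤ 0 :=
      mul_nonpos_of_nonneg_of_nonpos (Real.exp_pos _).le (aux_deriv_nonpos hdiff hmono hx0)
    simp only [hg']; linarith
  have hint' : IntegrableOn g' (Set.Ioi ε) :=
    integrableOn_Ioi_deriv_of_nonpos' hgd hneg hl
  have heq : (fun t => Real.exp (-q*t) * deriv φ t)
      = fun t => g' t + q * (Real.exp (-q*t) * φ t) := by
    funext t; simp only [hg']; ring
  rw [heq]
  exact hint'.add (((hint q hq).mono_set (Set.Ioi_subset_Ioi hε.le)).const_mul q)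

lemma aux_int_powderiv_Ioi (hdiff : DifferentiableOn ℝ φ (Set.Ioi 0))
    (hnn : ∀ t > (0:ℝ), 0 ≤ φ t) (hmono : AntitoneOn φ (Set.Ioi 0))
    (hint : ∀ p > (0:ℝ), IntegrableOn (fun t => Real.exp (-p * t) * φ t) (Set.Ioi 0))
    {p ε : ℝ} (hp : 0 < p) (hε : 0 < ε) (k : ℕ) :
    IntegrableOn (fun t => t ^ k * deriv φ t * Real.exp (-p * t)) (Set.Ioi ε) := by
  obtain ⟨C, hC0, hC⟩ := aux_pow_exp k hp
  have hbase := (aux_int_derivexp hdiff hnn hmono hint (q := p/2) (by positivity) hε).neg.const_mul C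
  refine Integrable.mono' hbase ?_ ?_
  · exact (((continuous_pow k).measurable.mul (measurable_deriv φ)).mul
      (Real.continuous_exp.comp (continuous_const.mul continuous_id)).measurable).aestronglyMeasurable.restrict
  · filter_upwards [ae_restrict_mem measurableSet_Ioi] with t ht
    have ht0 : (0:ℝ) < t := lt_trans hε ht
    have hD : deriv φ t ≤ 0 := aux_deriv_nonpos hdiff hmono ht0
    rw [Real.norm_eq_abs, abs_mul, abs_mul, abs_of_nonneg (pow_nonneg ht0.le k),
      abs_of_nonpos hD, abs_of_nonneg (Real.exp_pos _).le]
    calc t ^ k * -deriv φ t * Real.exp (-p*t)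
        = (t^k * Real.exp (-p*t)) * (-deriv φ t) := by ring
      _ ≤ (C * Real.exp (-(p/2)*t)) * (-deriv φ t) :=
          mul_le_mul_of_nonneg_right (hC t ht0) (neg_nonneg.2 hD)
      _ = C * -(Real.exp (-(p/2)*t) * deriv φ t) := by ring
lemma aux_ftc (hdiff : DifferentiableOn ℝ φ (Set.Ioi 0))
    (hnn : ∀ t > (0:ℝ), 0 ≤ φ t) (hmono : AntitoneOn φ (Set.Ioi 0))
    (hint : ∀ p > (0:ℝ), IntegrableOn (fun t => Real.exp (-p * t) * φ t) (Set.Ioi 0))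
    {p ε : ℝ} (hp : 0 < p) (hε : 0 < ε) :
    ∫ t in Set.Ioi ε, ((Real.exp (-p*t) * φ t - p * (t * (Real.exp (-p*t) * φ t)))
        + t * deriv φ t * Real.exp (-p*t))
      = -(ε * (Real.exp (-p*ε) * φ ε)) := by
  have hderivF : ∀ x ∈ Set.Ici ε, HasDerivAt (fun t => t * (Real.exp (-p*t) * φ t))
      ((Real.exp (-p*x) * φ x - p * (x * (Real.exp (-p*x) * φ x)))
        + x * deriv φ x * Real.exp (-p*x)) x := by
    intro x hx
    have hx0 : 0 < x := lt_of_lt_of_le hε hx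
    have h1 : HasDerivAt (fun t : ℝ => Real.exp (-p * t)) (Real.exp (-p*x) * (-p)) x := by
      simpa [mul_comm] using ((hasDerivAt_id x).const_mul (-p)).exp
    have h2 := h1.mul (aux_hasDerivAt hdiff hx0)
    have h3 := (hasDerivAt_id x).mul h2
    simp only [id_eq, Pi.mul_def] at h3
    refine h3.congr_deriv ?_
    ring
  have hintA1 := (hint p hp).mono_set (Set.Ioi_subset_Ioi hε.le)
  have hintA2 : IntegrableOn (fun t => t * (Real.exp (-p*t) * φ t)) (Set.Ioi ε) := by
    have := (aux_int_pow hnn hint hp 1).mono_set (Set.Ioi_subset_Ioi hε.le)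
    simpa using this
  have hintB : IntegrableOn (fun t => t * deriv φ t * Real.exp (-p*t)) (Set.Ioi ε) := by
    have := aux_int_powderiv_Ioi hdiff hnn hmono hint hp hε 1
    simpa using this
  have hintF' : IntegrableOn (fun t => (Real.exp (-p*t) * φ t - p * (t * (Real.exp (-p*t) * φ t)))
      + t * deriv φ t * Real.exp (-p*t)) (Set.Ioi ε) :=
    (hintA1.sub (hintA2.const_mul p)).add hintB
  have htend := aux_tendsto_top hnn hmono hp
  have := integral_Ioi_of_hasDerivAt_of_tendsto' hderivF hintF' htend
  rw [this, zero_sub]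

lemma aux_int_B (hdiff : DifferentiableOn ℝ φ (Set.Ioi 0))
    (hnn : ∀ t > (0:ℝ), 0 ≤ φ t) (hmono : AntitoneOn φ (Set.Ioi 0))
    (hlim : Tendsto (fun t => t * φ t) (nhdsWithin 0 (Set.Ioi 0)) (nhds 0))
    (hint : ∀ p > (0:ℝ), IntegrableOn (fun t => Real.exp (-p * t) * φ t) (Set.Ioi 0))
    {p : ℝ} (hp : 0 < p) :
    IntegrableOn (fun t => t * deriv φ t * Real.exp (-p * t)) (Set.Ioi 0) := by
  -- small ε₀ where t * φ t ≤ 1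
  have hev : ∀ᶠ t in nhdsWithin 0 (Set.Ioi 0), t * φ t < 1 :=
    hlim.eventually_lt_const one_pos
  rw [eventually_nhdsWithin_iff, Metric.eventually_nhds_iff] at hev
  obtain ⟨ε₀, hε₀, hsmall⟩ := hev
  set M := ∫ t in Set.Ioi (0:ℝ), Real.exp (-p*t) * φ t with hM
  -- the uniform bound
  have claim : ∀ ε : ℝ, 0 < ε → ε < ε₀ →
      (∫ t in Set.Ioc ε 1, ‖t * deriv φ t * Real.exp (-p * t)‖) ≤ 1 + M := by
    intro ε hε hεε₀
    have hintB : IntegrableOn (fun t => t * deriv φ t * Real.exp (-p * t)) (Set.Ioi ε) := by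
      have := aux_int_powderiv_Ioi hdiff hnn hmono hint hp hε 1
      simpa using this
    have hintA : IntegrableOn
        (fun t => Real.exp (-p*t) * φ t - p * (t * (Real.exp (-p*t) * φ t))) (Set.Ioi ε) := by
      refine ((hint p hp).mono_set (Set.Ioi_subset_Ioi hε.le)).sub (Integrable.const_mul ?_ p)
      have := (aux_int_pow hnn hint hp 1).mono_set (Set.Ioi_subset_Ioi hε.le)
      simpa [IntegrableOn] using this
    have hftc := aux_ftc hdiff hnn hmono hint hp hε
    rw [integral_add hintA hintB] at hftc
    have hsplit : ∫ t in Set.Ioi ε,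
        (Real.exp (-p*t) * φ t - p * (t * (Real.exp (-p*t) * φ t)))
        = (∫ t in Set.Ioi ε, Real.exp (-p*t) * φ t)
          - p * ∫ t in Set.Ioi ε, t * (Real.exp (-p*t) * φ t) := by
      rw [integral_sub ((hint p hp).mono_set (Set.Ioi_subset_Ioi hε.le))
        (Integrable.const_mul (by
          have := (aux_int_pow hnn hint hp 1).mono_set (Set.Ioi_subset_Ioi hε.le)
          simpa [IntegrableOn] using this) p), integral_const_mul]
    have hA2nn : 0 ≤ ∫ t in Set.Ioi ε, t * (Real.exp (-p*t) * φ t) := by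
      refine setIntegral_nonneg measurableSet_Ioi fun t ht => ?_
      have ht0 : 0 < t := lt_trans hε ht
      exact mul_nonneg ht0.le (mul_nonneg (Real.exp_pos _).le (hnn t ht0))
    have hA1le : (∫ t in Set.Ioi ε, Real.exp (-p*t) * φ t) ≤ M := by
      rw [hM]
      refine setIntegral_mono_set (hint p hp) ?_ ?_
      · filter_upwards [ae_restrict_mem measurableSet_Ioi] with t ht
        exact mul_nonneg (Real.exp_pos _).le (hnn t ht)
      · exact HasSubset.Subset.eventuallyLE (Set.Ioi_subset_Ioi hε.le)
    have hbdry : ε * (Real.exp (-p*ε) * φ ε) ≤ 1 := by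
      have hd : dist ε (0:ℝ) < ε₀ := by
        rw [Real.dist_eq, sub_zero, abs_of_pos hε]; exact hεε₀
      have h1 : ε * φ ε < 1 := hsmall hd hε
      have hexp : Real.exp (-p*ε) ≤ 1 := Real.exp_le_one_iff.2 (by nlinarith)
      have hφ : 0 ≤ φ ε := hnn ε hε
      calc ε * (Real.exp (-p*ε) * φ ε) ≤ ε * (1 * φ ε) := by
            apply mul_le_mul_of_nonneg_left _ hε.le
            exact mul_le_mul_of_nonneg_right hexp hφ
        _ = ε * φ ε := by ring
        _ ≤ 1 := h1.le
    -- ∫_{Ioi ε} B = -(bdry) - ∫ A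
    have hIB : ∫ t in Set.Ioi ε, (-(t * deriv φ t * Real.exp (-p * t)))
        = ε * (Real.exp (-p*ε) * φ ε)
          + ((∫ t in Set.Ioi ε, Real.exp (-p*t) * φ t)
            - p * ∫ t in Set.Ioi ε, t * (Real.exp (-p*t) * φ t)) := by
      rw [integral_neg]
      rw [hsplit] at hftc
      linarith
    have hBnormIoc : (∫ t in Set.Ioc ε 1, ‖t * deriv φ t * Real.exp (-p * t)‖) = ∫ t in Set.Ioc ε 1, (-(t * deriv φ t * Real.exp (-p * t))) := by
      refine setIntegral_congr_fun measurableSet_Ioc fun t ht => ?_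
      have ht0 : 0 < t := lt_trans hε ht.1
      have hD : deriv φ t ≤ 0 := aux_deriv_nonpos hdiff hmono ht0
      have hBle : t * deriv φ t * Real.exp (-p * t) ≤ 0 := by
        have : t * deriv φ t ≤ 0 := mul_nonpos_of_nonneg_of_nonpos ht0.le hD
        exact mul_nonpos_of_nonpos_of_nonneg this (Real.exp_pos _).le
      rw [Real.norm_eq_abs, abs_of_nonpos hBle]
    have hmonoset : (∫ t in Set.Ioc ε 1, (-(t * deriv φ t * Real.exp (-p * t)))) ≤ ∫ t in Set.Ioi ε, (-(t * deriv φ t * Real.exp (-p * t))) := by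
      refine setIntegral_mono_set hintB.neg ?_ ?_
      · filter_upwards [ae_restrict_mem measurableSet_Ioi] with t ht
        have ht0 : 0 < t := lt_trans hε ht
        have hD : deriv φ t ≤ 0 := aux_deriv_nonpos hdiff hmono ht0
        simp only [Pi.zero_apply]
        have : t * deriv φ t ≤ 0 := mul_nonpos_of_nonneg_of_nonpos ht0.le hD
        nlinarith [Real.exp_pos (-p*t)]
      · exact HasSubset.Subset.eventuallyLE Set.Ioc_subset_Ioi_self
    calc (∫ t in Set.Ioc ε 1, ‖t * deriv φ t * Real.exp (-p * t)‖) = ∫ t in Set.Ioc ε 1, (-(t * deriv φ t * Real.exp (-p * t))) := hBnormIoc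
      _ ≤ ∫ t in Set.Ioi ε, (-(t * deriv φ t * Real.exp (-p * t))) := hmonoset
      _ ≤ 1 + M := by rw [hIB]; nlinarith [mul_nonneg hp.le hA2nn]
  -- conclude integrability on Ioc 0 1 then Ioi 0
  have hIoc : IntegrableOn (fun t => t * deriv φ t * Real.exp (-p * t)) (Set.Ioc 0 1) := by
    set a : ℕ → ℝ := fun n => ε₀ / (n + 2) with ha
    have ha_pos : ∀ n, 0 < a n := fun n => by positivity
    have ha_lt : ∀ n, a n < ε₀ := fun n => by
      rw [ha]
      refine div_lt_self hε₀ ?_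
      have : (0:ℝ) ≤ (n:ℝ) := Nat.cast_nonneg n
      linarith
    have ha_tend : Tendsto a atTop (𝓝 0) := by
      rw [ha]
      apply Tendsto.div_atTop tendsto_const_nhds
      exact tendsto_atTop_add_const_right _ 2 tendsto_natCast_atTop_atTop
    have hfi : ∀ n : ℕ, IntegrableOn (fun t => t * deriv φ t * Real.exp (-p * t))
        (Set.Ioc (a n) 1) := by
      intro n
      have h1 := aux_int_powderiv_Ioi hdiff hnn hmono hint hp (ha_pos n) 1
      simp only [pow_one] at h1
      exact h1.mono_set Set.Ioc_subset_Ioi_self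
    exact integrableOn_Ioc_of_intervalIntegral_norm_bounded_left hfi ha_tend
      (Eventually.of_forall fun n => claim (a n) (ha_pos n) (ha_lt n))
  have : Set.Ioc (0:ℝ) 1 ∪ Set.Ioi 1 = Set.Ioi 0 := Set.Ioc_union_Ioi_eq_Ioi zero_le_one
  rw [IntegrableOn, ← this]
  refine (hIoc.union ?_)
  have h1 := aux_int_powderiv_Ioi hdiff hnn hmono hint hp one_pos 1
  simpa using h1

lemma aux_int_Gn (hdiff : DifferentiableOn ℝ φ (Set.Ioi 0))
    (hnn : ∀ t > (0:ℝ), 0 ≤ φ t) (hmono : AntitoneOn φ (Set.Ioi 0))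
    (hlim : Tendsto (fun t => t * φ t) (nhdsWithin 0 (Set.Ioi 0)) (nhds 0))
    (hint : ∀ p > (0:ℝ), IntegrableOn (fun t => Real.exp (-p * t) * φ t) (Set.Ioi 0))
    {p : ℝ} (hp : 0 < p) (m : ℕ) :
    IntegrableOn (fun t => t ^ (m+1) * deriv φ t * Real.exp (-p * t)) (Set.Ioi 0) := by
  obtain ⟨C, hC0, hC⟩ := aux_pow_exp m (half_pos hp)
  have hbase := (aux_int_B hdiff hnn hmono hlim hint (half_pos hp)).neg.const_mul C
  refine Integrable.mono' hbase ?_ ?_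
  · exact (((continuous_pow (m+1)).measurable.mul (measurable_deriv φ)).mul
      (Real.continuous_exp.comp (continuous_const.mul continuous_id)).measurable).aestronglyMeasurable.restrict
  · filter_upwards [ae_restrict_mem measurableSet_Ioi] with t ht
    have ht0 : (0:ℝ) < t := ht
    have hD : deriv φ t ≤ 0 := aux_deriv_nonpos hdiff hmono ht0
    have hCle : t ^ m * Real.exp (-(p/2)*t) ≤ C := by
      have h1 := hC t ht0
      have h2 : Real.exp (-(p/2/2)*t) ≤ 1 := Real.exp_le_one_iff.2 (by nlinarith)
      nlinarith [mul_nonneg hC0 (Real.exp_pos (-(p/2/2)*t)).le,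
        mul_le_mul_of_nonneg_left h2 hC0]
    rw [Real.norm_eq_abs, abs_mul, abs_mul, abs_of_nonneg (pow_nonneg ht0.le _),
      abs_of_nonpos hD, abs_of_nonneg (Real.exp_pos _).le]
    have hexp : Real.exp (-p*t) = Real.exp (-(p/2)*t) * Real.exp (-(p/2)*t) := by
      rw [← Real.exp_add]; ring_nf
    calc t ^ (m+1) * -deriv φ t * Real.exp (-p*t)
        = (t^m * Real.exp (-(p/2)*t)) * (t * -deriv φ t * Real.exp (-(p/2)*t)) := by
          rw [hexp, pow_succ]; ring
      _ ≤ C * (t * -deriv φ t * Real.exp (-(p/2)*t)) := by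
          refine mul_le_mul_of_nonneg_right hCle ?_
          have : 0 ≤ t * -deriv φ t := mul_nonneg ht0.le (by linarith)
          positivity
      _ = C * -(t * deriv φ t * Real.exp (-(p/2)*t)) := by ring

lemma aux_hasDerivAt_laplace
    (hnn : ∀ t > (0:ℝ), 0 ≤ φ t)
    (hint : ∀ p > (0:ℝ), IntegrableOn (fun t => Real.exp (-p * t) * φ t) (Set.Ioi 0))
    {p : ℝ} (hp : 0 < p) :
    HasDerivAt (laplace φ) (-∫ t in Set.Ioi (0:ℝ), t * (Real.exp (-p*t) * φ t)) p := by
  have hbound_int : Integrable (fun t => t * (Real.exp (-(p/2)*t) * φ t))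
      (volume.restrict (Set.Ioi (0:ℝ))) := by
    have := aux_int_pow hnn hint (half_pos hp) 1
    simpa [IntegrableOn] using this
  have h := hasDerivAt_integral_of_dominated_loc_of_deriv_le (s := Metric.ball p (p/2)) (Metric.ball_mem_nhds p (half_pos hp))
    (F := fun q t => Real.exp (-q*t) * φ t)
    (F' := fun q t => -t * (Real.exp (-q*t) * φ t))
    (bound := fun t => t * (Real.exp (-(p/2)*t) * φ t))
    (μ := volume.restrict (Set.Ioi (0:ℝ)))
    (by
      filter_upwards [eventually_gt_nhds hp] with x hx
      exact (hint x hx).1)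
    (hint p hp)
    ((continuous_neg.aestronglyMeasurable.restrict).mul (hint p hp).1)
    (by
      filter_upwards [ae_restrict_mem measurableSet_Ioi] with t ht x hx
      have ht0 : (0:ℝ) < t := ht
      have hφ := hnn t ht0
      have hx2 : p/2 < x := by
        have := abs_sub_lt_iff.1 (by simpa [Real.dist_eq] using hx)
        linarith [this.2]
      have hexp : Real.exp (-x*t) ≤ Real.exp (-(p/2)*t) :=
        Real.exp_le_exp.2 (by nlinarith)
      rw [Real.norm_eq_abs, abs_mul, abs_neg, abs_of_nonneg ht0.le, abs_mul,
        abs_of_nonneg (Real.exp_pos _).le, abs_of_nonneg hφ]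
      exact mul_le_mul_of_nonneg_left
        (mul_le_mul_of_nonneg_right hexp hφ) ht0.le)
    hbound_int
    (by
      filter_upwards [ae_restrict_mem measurableSet_Ioi] with t ht x hx
      have hd := (((hasDerivAt_id x).neg.mul_const t).exp).mul_const (φ t)
      simp only [id_eq, Pi.neg_apply, Pi.mul_def, Pi.neg_def] at hd
      refine hd.congr_deriv ?_
      ring)
  have h2 := h.2
  have : (∫ t in Set.Ioi (0:ℝ), -t * (Real.exp (-p*t) * φ t))
      = -∫ t in Set.Ioi (0:ℝ), t * (Real.exp (-p*t) * φ t) := by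
    rw [← integral_neg]
    congr 1; funext t; ring
  rw [this] at h2
  exact h2
lemma aux_ftc_zero (hdiff : DifferentiableOn ℝ φ (Set.Ioi 0))
    (hnn : ∀ t > (0:ℝ), 0 ≤ φ t) (hmono : AntitoneOn φ (Set.Ioi 0))
    (hlim : Tendsto (fun t => t * φ t) (nhdsWithin 0 (Set.Ioi 0)) (nhds 0))
    (hint : ∀ p > (0:ℝ), IntegrableOn (fun t => Real.exp (-p * t) * φ t) (Set.Ioi 0))
    {p : ℝ} (hp : 0 < p) :
    laplace φ p - p * (∫ t in Set.Ioi (0:ℝ), t * (Real.exp (-p*t) * φ t))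
      = -∫ t in Set.Ioi (0:ℝ), t * deriv φ t * Real.exp (-p*t) := by
  have hintA1 := hint p hp
  have hintA2 : IntegrableOn (fun t => t * (Real.exp (-p*t) * φ t)) (Set.Ioi 0) := by
    have := aux_int_pow hnn hint hp 1; simpa using this
  have hintB : IntegrableOn (fun t => t * deriv φ t * Real.exp (-p*t)) (Set.Ioi 0) :=
    aux_int_B hdiff hnn hmono hlim hint hp
  set f : ℝ → ℝ := fun t => (Real.exp (-p*t) * φ t - p * (t * (Real.exp (-p*t) * φ t)))
      + t * deriv φ t * Real.exp (-p*t) with hf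
  have hfi : IntegrableOn f (Set.Ioi 0) := (hintA1.sub (hintA2.const_mul p)).add hintB
  set a : ℕ → ℝ := fun n => 1 / (n + 1) with ha
  have ha_pos : ∀ n, 0 < a n := fun n => by positivity
  have hmono_s : Monotone fun n : ℕ => Set.Ioi (a n) := by
    intro n m hnm
    refine Set.Ioi_subset_Ioi ?_
    rw [ha]
    apply one_div_le_one_div_of_le (by positivity)
    have : (n:ℝ) ≤ m := Nat.cast_le.2 hnm
    linarith
  have hunion : (⋃ n : ℕ, Set.Ioi (a n)) = Set.Ioi (0:ℝ) := by
    ext x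
    simp only [Set.mem_iUnion, Set.mem_Ioi]
    constructor
    · rintro ⟨n, hn⟩; exact lt_trans (ha_pos n) hn
    · intro hx
      obtain ⟨n, hn⟩ := exists_nat_one_div_lt hx
      exact ⟨n, hn⟩
  have htend1 : Tendsto (fun n => ∫ t in Set.Ioi (a n), f t) atTop
      (𝓝 (∫ t in Set.Ioi (0:ℝ), f t)) := by
    have := tendsto_setIntegral_of_monotone (fun n : ℕ => measurableSet_Ioi) hmono_s
      (by rw [hunion]; exact hfi)
    rwa [hunion] at this
  have heq : ∀ n : ℕ, (∫ t in Set.Ioi (a n), f t)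
      = -(a n * (Real.exp (-p * a n) * φ (a n))) := fun n =>
    aux_ftc hdiff hnn hmono hint hp (ha_pos n)
  have ha_tend : Tendsto a atTop (nhdsWithin 0 (Set.Ioi 0)) := by
    rw [tendsto_nhdsWithin_iff]
    constructor
    · rw [ha]
      apply Tendsto.div_atTop tendsto_const_nhds
      exact tendsto_atTop_add_const_right _ 1 tendsto_natCast_atTop_atTop
    · exact Eventually.of_forall fun n => ha_pos n
  have htend2 : Tendsto (fun n => -(a n * (Real.exp (-p * a n) * φ (a n)))) atTop (𝓝 0) := by
    have h1 : Tendsto (fun n => a n * φ (a n)) atTop (𝓝 0) :=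
      hlim.comp ha_tend
    have h2 : Tendsto (fun n => Real.exp (-p * a n)) atTop (𝓝 1) := by
      have : Tendsto a atTop (𝓝 0) := ha_tend.mono_right nhdsWithin_le_nhds
      have h3 : Tendsto (fun n => -p * a n) atTop (𝓝 (-p * 0)) := this.const_mul (-p)
      rw [mul_zero] at h3
      simpa [Function.comp_def] using (Real.continuous_exp.tendsto 0).comp h3
    have h4 := h2.mul h1
    rw [mul_zero] at h4
    have h5 : Tendsto (fun n => a n * (Real.exp (-p * a n) * φ (a n))) atTop (𝓝 0) := by
      refine h4.congr fun n => ?_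
      ring
    simpa using h5.neg
  have hzero : (∫ t in Set.Ioi (0:ℝ), f t) = 0 := by
    have := tendsto_nhds_unique (htend1.congr fun n => heq n) htend2
    exact this.symm ▸ rfl
  have hintA2' : IntegrableOn (fun t => p * (t * (Real.exp (-p*t) * φ t))) (Set.Ioi 0) :=
    hintA2.const_mul p
  have hintAsub : IntegrableOn (fun t => Real.exp (-p*t) * φ t
      - p * (t * (Real.exp (-p*t) * φ t))) (Set.Ioi 0) := hintA1.sub hintA2'
  rw [hf] at hzero
  rw [integral_add hintAsub hintB, integral_sub hintA1 hintA2', integral_const_mul] at hzero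
  have hlap : laplace φ p = ∫ t in Set.Ioi (0:ℝ), Real.exp (-p*t) * φ t := rfl
  rw [hlap]
  linarith

lemma aux_hasDerivAt_Gn (hdiff : DifferentiableOn ℝ φ (Set.Ioi 0))
    (hnn : ∀ t > (0:ℝ), 0 ≤ φ t) (hmono : AntitoneOn φ (Set.Ioi 0))
    (hlim : Tendsto (fun t => t * φ t) (nhdsWithin 0 (Set.Ioi 0)) (nhds 0))
    (hint : ∀ p > (0:ℝ), IntegrableOn (fun t => Real.exp (-p * t) * φ t) (Set.Ioi 0))
    {p : ℝ} (hp : 0 < p) (m : ℕ) :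
    HasDerivAt (fun q => ∫ t in Set.Ioi (0:ℝ), t^(m+1) * deriv φ t * Real.exp (-q*t))
      (-∫ t in Set.Ioi (0:ℝ), t^(m+2) * deriv φ t * Real.exp (-p*t)) p := by
  have hmeas : ∀ q : ℝ, AEStronglyMeasurable (fun t => t^(m+1) * deriv φ t * Real.exp (-q*t))
      (volume.restrict (Set.Ioi (0:ℝ))) := fun q =>
    (((continuous_pow (m+1)).measurable.mul (measurable_deriv φ)).mul
      (Real.continuous_exp.comp (continuous_const.mul continuous_id)).measurable).aestronglyMeasurable.restrict
  have hbound_int : Integrable (fun t => -(t^(m+2) * deriv φ t * Real.exp (-(p/2)*t)))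
      (volume.restrict (Set.Ioi (0:ℝ))) := by
    have := aux_int_Gn hdiff hnn hmono hlim hint (half_pos hp) (m+1)
    exact this.neg
  have h := hasDerivAt_integral_of_dominated_loc_of_deriv_le (s := Metric.ball p (p/2)) (Metric.ball_mem_nhds p (half_pos hp))
    (F := fun q t => t^(m+1) * deriv φ t * Real.exp (-q*t))
    (F' := fun q t => -(t^(m+2) * deriv φ t * Real.exp (-q*t)))
    (bound := fun t => -(t^(m+2) * deriv φ t * Real.exp (-(p/2)*t)))
    (μ := volume.restrict (Set.Ioi (0:ℝ)))
    (Eventually.of_forall fun q => hmeas q)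
    (aux_int_Gn hdiff hnn hmono hlim hint hp m)
    (by
      have := (hmeas p)
      exact ((((continuous_pow (m+2)).measurable.mul (measurable_deriv φ)).mul
        (Real.continuous_exp.comp (continuous_const.mul continuous_id)).measurable).aestronglyMeasurable.restrict).neg)
    (by
      filter_upwards [ae_restrict_mem measurableSet_Ioi] with t ht x hx
      have ht0 : (0:ℝ) < t := ht
      have hD : deriv φ t ≤ 0 := aux_deriv_nonpos hdiff hmono ht0
      have hx2 : p/2 < x := by
        have := abs_sub_lt_iff.1 (by simpa [Real.dist_eq] using hx)
        linarith [this.2]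
      have hexp : Real.exp (-x*t) ≤ Real.exp (-(p/2)*t) :=
        Real.exp_le_exp.2 (by nlinarith)
      rw [Real.norm_eq_abs, abs_neg, abs_mul, abs_mul,
        abs_of_nonneg (pow_nonneg ht0.le _), abs_of_nonpos hD,
        abs_of_nonneg (Real.exp_pos _).le]
      have h1 : t^(m+2) * -deriv φ t * Real.exp (-x*t)
          ≤ t^(m+2) * -deriv φ t * Real.exp (-(p/2)*t) := by
        refine mul_le_mul_of_nonneg_left hexp ?_
        exact mul_nonneg (pow_nonneg ht0.le _) (by linarith)
      calc t^(m+2) * -deriv φ t * Real.exp (-x*t)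
          ≤ t^(m+2) * -deriv φ t * Real.exp (-(p/2)*t) := h1
        _ = -(t^(m+2) * deriv φ t * Real.exp (-(p/2)*t)) := by ring)
    hbound_int
    (by
      filter_upwards [ae_restrict_mem measurableSet_Ioi] with t ht x hx
      have hd := (((hasDerivAt_id x).neg.mul_const t).exp).const_mul (t^(m+1) * deriv φ t)
      simp only [id_eq, Pi.neg_apply, Pi.mul_def, Pi.neg_def] at hd
      refine hd.congr_deriv ?_
      ring)
  have h2 := h.2
  have heq : (∫ t in Set.Ioi (0:ℝ), -(t^(m+2) * deriv φ t * Real.exp (-p*t)))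
      = -∫ t in Set.Ioi (0:ℝ), t^(m+2) * deriv φ t * Real.exp (-p*t) := integral_neg _
  rw [heq] at h2
  exact h2
lemma aux_iter (hdiff : DifferentiableOn ℝ φ (Set.Ioi 0))
    (hnn : ∀ t > (0:ℝ), 0 ≤ φ t) (hmono : AntitoneOn φ (Set.Ioi 0))
    (hlim : Tendsto (fun t => t * φ t) (nhdsWithin 0 (Set.Ioi 0)) (nhds 0))
    (hint : ∀ p > (0:ℝ), IntegrableOn (fun t => Real.exp (-p * t) * φ t) (Set.Ioi 0)) :
    ∀ n : ℕ, 1 ≤ n → ∀ p : ℝ, 0 < p →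
    iteratedDerivWithin n (fun q => q * laplace φ q) (Set.Ioi 0) p
      = (-1:ℝ)^n * ∫ t in Set.Ioi (0:ℝ), t^n * deriv φ t * Real.exp (-p*t) := by
  intro n
  induction n with
  | zero => intro h; omega
  | succ m ih =>
    intro _ p hp
    have hPd : ∀ q : ℝ, 0 < q → HasDerivAt (fun q => q * laplace φ q)
        (-∫ t in Set.Ioi (0:ℝ), t * deriv φ t * Real.exp (-q*t)) q := by
      intro q hq
      have h1 := aux_hasDerivAt_laplace hnn hint hq
      have h2 := (hasDerivAt_id q).mul h1
      simp only [id_eq, Pi.mul_def] at h2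
      have h3 := aux_ftc_zero hdiff hnn hmono hlim hint hq
      refine h2.congr_deriv ?_
      rw [one_mul, mul_neg]
      linarith
    rcases Nat.eq_zero_or_pos m with h0 | hm
    · subst h0
      rw [iteratedDerivWithin_one,
        derivWithin_of_isOpen isOpen_Ioi hp, (hPd p hp).deriv]
      simp [pow_one]
    · have hm1 : 1 ≤ m := hm
      rw [iteratedDerivWithin_succ]
      have hcongr : derivWithin
            (iteratedDerivWithin m (fun q => q * laplace φ q) (Set.Ioi 0)) (Set.Ioi 0) p
          = derivWithin (fun q => (-1:ℝ)^m *
              ∫ t in Set.Ioi (0:ℝ), t^m * deriv φ t * Real.exp (-q*t)) (Set.Ioi 0) p :=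
        derivWithin_congr (fun q hq => ih hm1 q hq) (ih hm1 p hp)
      rw [hcongr, derivWithin_of_isOpen isOpen_Ioi hp]
      obtain ⟨k, rfl⟩ : ∃ k, m = k + 1 := ⟨m - 1, (Nat.succ_pred_eq_of_pos hm).symm⟩
      have hG := HasDerivAt.const_mul ((-1:ℝ)^(k+1))
        (aux_hasDerivAt_Gn hdiff hnn hmono hlim hint hp k)
      rw [hG.deriv]
      rw [pow_succ ((-1:ℝ)) (k+1)]
      ring


theorem stmt4 (φ : ℝ → ℝ)
    (hdiff : DifferentiableOn ℝ φ (Set.Ioi 0))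
    (hnn : ∀ t > (0:ℝ), 0 ≤ φ t)
    (hmono : AntitoneOn φ (Set.Ioi 0))
    (hlim : Tendsto (fun t => t * φ t) (nhdsWithin 0 (Set.Ioi 0)) (nhds 0))
    (hint : ∀ p > (0:ℝ), IntegrableOn (fun t => Real.exp (-p * t) * φ t) (Set.Ioi 0)) :
    ∀ n : ℕ, 1 ≤ n → ∀ p > (0:ℝ),
      iteratedDerivWithin n (fun q => q * laplace φ q) (Set.Ioi 0) p =
        (-1 : ℝ)^n * ∫ t in Set.Ioi (0:ℝ), t^n * deriv φ t * Real.exp (-p * t) ∧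
      (-1 : ℝ)^n * iteratedDerivWithin n (fun q => q * laplace φ q) (Set.Ioi 0) p ≤ 0 := by
  intro n hn p hp
  have hkey := aux_iter hdiff hnn hmono hlim hint n hn p hp
  refine ⟨hkey, ?_⟩
  rw [hkey, ← mul_assoc]
  have h1 : ((-1:ℝ))^n * (-1)^n = 1 := by
    rw [← pow_add]
    exact Even.neg_one_pow ⟨n, rfl⟩
  rw [h1, one_mul]
  refine setIntegral_nonpos measurableSet_Ioi fun t ht => ?_
  have ht0 : (0:ℝ) < t := ht
  have hD : deriv φ t ≤ 0 := aux_deriv_nonpos hdiff hmono ht0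
  exact mul_nonpos_of_nonpos_of_nonneg
    (mul_nonpos_of_nonneg_of_nonpos (pow_nonneg ht0.le n) hD) (Real.exp_pos _).le
end

section
/- Let φ : (0,∞) → ℝ be non-negative, non-increasing, differentiable, convex, locally integrable on [0,∞), with lim_{t→0+} t·φ'(t) = 0. Then lim_{p→∞} [p·φ̃(p) − φ(1/p)] = 0, where φ̃ is the Laplace transform of φ. -/
open MeasureTheory Filter Set Real

lemma aux_exp_tendsto (p : ℝ) (hp : 0 < p) :
    Tendsto (fun t : ℝ => Real.exp (-p*t)) atTop (nhds 0) := by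
  have h : Tendsto (fun t : ℝ => p * t) atTop atTop := tendsto_id.const_mul_atTop hp
  have := Real.tendsto_exp_neg_atTop_nhds_zero.comp h
  simpa [Function.comp_def, neg_mul] using this

lemma aux_exp_hasDeriv (p : ℝ) (hp : 0 < p) (x : ℝ) :
    HasDerivAt (fun t : ℝ => -(1/p) * Real.exp (-p*t)) (Real.exp (-p*x)) x := by
  have h1 : HasDerivAt (fun t : ℝ => -p*t) (-p) x := by
    simpa using (hasDerivAt_id x).const_mul (-p)
  have h2 := (h1.exp).const_mul (-(1/p))
  refine h2.congr_deriv ?_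
  field_simp

lemma aux_exp_integral (p : ℝ) (hp : 0 < p) :
    ∫ t in Ioi (0:ℝ), Real.exp (-p*t) = 1/p := by
  have htend : Tendsto (fun t : ℝ => -(1/p) * Real.exp (-p*t)) atTop (nhds 0) := by
    simpa using (aux_exp_tendsto p hp).const_mul (-(1/p))
  have := integral_Ioi_of_hasDerivAt_of_tendsto' (a := 0) (m := 0)
    (fun x _ => aux_exp_hasDeriv p hp x) (exp_neg_integrableOn_Ioi 0 hp) htend
  simpa using this

lemma aux_texp_integrable (p : ℝ) (hp : 0 < p) :
    IntegrableOn (fun t : ℝ => t * Real.exp (-p*t)) (Ioi 0) := by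
  have hg : IntegrableOn (fun t : ℝ => (2/p) * Real.exp (-(p/2)*t)) (Ioi 0) :=
    (exp_neg_integrableOn_Ioi 0 (by positivity)).const_mul _
  apply hg.mono' ((continuous_id.mul (by continuity)).aestronglyMeasurable.restrict)
  rw [ae_restrict_iff' measurableSet_Ioi]
  refine ae_of_all _ fun t ht => ?_
  have ht0 : (0:ℝ) < t := ht
  have h1 : p/2*t + 1 ≤ Real.exp (p/2*t) := Real.add_one_le_exp _
  have h2 : Real.exp (-p*t) = Real.exp (-(p/2)*t) * Real.exp (-(p/2)*t) := by
    rw [← Real.exp_add]; ring_nf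
  have h3 : Real.exp (-(p/2)*t) * Real.exp (p/2*t) = 1 := by
    rw [← Real.exp_add]; simp
  show ‖t * Real.exp (-p*t)‖ ≤ _
  rw [Real.norm_eq_abs, abs_of_nonneg (by positivity)]
  rw [h2]
  have h5 : 0 < Real.exp (-(p/2)*t) := Real.exp_pos _
  have h6 : 0 < Real.exp (p/2*t) := Real.exp_pos _
  have h7 : t ≤ (2/p) * Real.exp (p/2*t) := by
    have e1 : 2/p * (p/2*t + 1) = t + 2/p := by field_simp
    have e2 := mul_le_mul_of_nonneg_left h1 (le_of_lt (by positivity : (0:ℝ) < 2/p))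
    rw [e1] at e2
    have : (0:ℝ) < 2/p := by positivity
    linarith
  calc t * (Real.exp (-(p/2)*t) * Real.exp (-(p/2)*t))
      ≤ ((2/p) * Real.exp (p/2*t)) * (Real.exp (-(p/2)*t) * Real.exp (-(p/2)*t)) := by
        apply mul_le_mul_of_nonneg_right h7 (by positivity)
    _ = (2/p) * Real.exp (-(p/2)*t) * (Real.exp (-(p/2)*t) * Real.exp (p/2*t)) := by ring
    _ = (2/p) * Real.exp (-(p/2)*t) := by rw [h3]; ring

lemma aux_texp_integral (p : ℝ) (hp : 0 < p) :
    ∫ t in Ioi (0:ℝ), t * Real.exp (-p*t) = 1/p^2 := by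
  have hderiv : ∀ x : ℝ, HasDerivAt (fun t : ℝ => -((t/p + 1/p^2) * Real.exp (-p*t)))
      (x * Real.exp (-p*x)) x := by
    intro x
    have h1 : HasDerivAt (fun t : ℝ => -p*t) (-p) x := by
      simpa using (hasDerivAt_id x).const_mul (-p)
    have h2 : HasDerivAt (fun t : ℝ => t/p + 1/p^2) (1/p) x := by
      have := ((hasDerivAt_id x).div_const p).add_const (1/p^2)
      simpa using this
    have h3 := (h2.mul h1.exp).neg
    refine h3.congr_deriv ?_
    field_simp
    ring
  have htend : Tendsto (fun t : ℝ => -((t/p + 1/p^2) * Real.exp (-p*t))) atTop (nhds 0) := by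
    have key : Tendsto (fun t : ℝ => t * Real.exp (-p*t)) atTop (nhds 0) := by
      have h0 := (tendsto_pow_mul_exp_neg_atTop_nhds_zero 1).comp
        (tendsto_id.const_mul_atTop hp : Tendsto (fun t : ℝ => p * t) atTop atTop)
      have h1 := h0.const_mul (1/p)
      simp only [mul_zero] at h1
      apply h1.congr
      intro t
      simp only [Function.comp_def, pow_one]
      field_simp
    have := ((key.const_mul (1/p)).add ((aux_exp_tendsto p hp).const_mul (1/p^2))).neg
    simp only [mul_zero, add_zero, neg_zero] at this
    apply this.congr
    intro t; ring
  have := integral_Ioi_of_hasDerivAt_of_tendsto' (a := 0) (m := 0)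
    (fun x _ => hderiv x) (aux_texp_integrable p hp) htend
  rw [this]
  norm_num

lemma aux_lap_integrable (φ : ℝ → ℝ)
    (hnn : ∀ t > (0:ℝ), 0 ≤ φ t)
    (hmono : AntitoneOn φ (Set.Ioi 0))
    (hdiff : DifferentiableOn ℝ φ (Set.Ioi 0))
    (hloc : ∀ b > (0:ℝ), IntegrableOn φ (Set.Ioc 0 b))
    (p : ℝ) (hp : 0 < p) :
    IntegrableOn (fun t : ℝ => Real.exp (-p*t) * φ t) (Ioi 0) := by
  have hcont : ContinuousOn (fun t : ℝ => Real.exp (-p*t) * φ t) (Ioi 0) :=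
    ((Real.continuous_exp.comp (continuous_const.mul continuous_id)).continuousOn).mul
      hdiff.continuousOn
  have hmeas : AEStronglyMeasurable (fun t : ℝ => Real.exp (-p*t) * φ t)
      (volume.restrict (Ioi (0:ℝ))) :=
    hcont.aestronglyMeasurable measurableSet_Ioi
  rw [← Ioc_union_Ioi_eq_Ioi (zero_le_one : (0:ℝ) ≤ 1)]
  apply IntegrableOn.union
  · apply (hloc 1 one_pos).mono'
      (hmeas.mono_measure (Measure.restrict_mono Ioc_subset_Ioi_self le_rfl))
    rw [ae_restrict_iff' measurableSet_Ioc]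
    refine ae_of_all _ fun t ht => ?_
    have ht0 : (0:ℝ) < t := ht.1
    rw [Real.norm_eq_abs, abs_mul, abs_of_nonneg (Real.exp_pos _).le,
      abs_of_nonneg (hnn t ht0)]
    exact mul_le_of_le_one_left (hnn t ht0) (Real.exp_le_one_iff.2 (by nlinarith))
  · have hInt1 : IntegrableOn (fun t : ℝ => φ 1 * Real.exp (-p*t)) (Ioi 1) volume :=
      (exp_neg_integrableOn_Ioi 1 hp).const_mul (φ 1)
    apply hInt1.mono'
      (hmeas.mono_measure (Measure.restrict_mono (Ioi_subset_Ioi zero_le_one) le_rfl))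
    rw [ae_restrict_iff' measurableSet_Ioi]
    refine ae_of_all _ fun t ht => ?_
    have ht1 : (1:ℝ) < t := ht
    have ht0 : (0:ℝ) < t := by linarith
    rw [Real.norm_eq_abs, abs_mul, abs_of_nonneg (Real.exp_pos _).le,
      abs_of_nonneg (hnn t ht0)]
    calc Real.exp (-p*t) * φ t ≤ Real.exp (-p*t) * φ 1 :=
          mul_le_mul_of_nonneg_left
            (hmono (mem_Ioi.2 one_pos) (mem_Ioi.2 ht0) ht1.le) (Real.exp_pos _).le
      _ = φ 1 * Real.exp (-p*t) := mul_comm _ _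

theorem stmt6 (φ : ℝ → ℝ)
    (hnn : ∀ t > (0:ℝ), 0 ≤ φ t)
    (hmono : AntitoneOn φ (Set.Ioi 0))
    (hdiff : DifferentiableOn ℝ φ (Set.Ioi 0))
    (hconv : ConvexOn ℝ (Set.Ioi 0) φ)
    (hloc : ∀ b > (0:ℝ), IntegrableOn φ (Set.Ioc 0 b))
    (hlim : Tendsto (fun t => t * deriv φ t) (nhdsWithin 0 (Set.Ioi 0)) (nhds 0)) :
    Tendsto (fun p => p * laplace φ p - φ (1 / p)) atTop (nhds 0) := by
  rw [NormedAddCommGroup.tendsto_nhds_zero]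
  intro ε hε
  set δ : ℝ := ε/8 with hδdef
  have hδ : 0 < δ := by positivity
  obtain ⟨a, ha, hda⟩ := Metric.tendsto_nhdsWithin_nhds.mp hlim δ hδ
  filter_upwards [eventually_ge_atTop (max (2/a) 1)] with p hpge
  have hp1 : (1:ℝ) ≤ p := le_trans (le_max_right _ _) hpge
  have hp0 : (0:ℝ) < p := by linarith
  set c : ℝ := 1/p with hcdef
  have hc : 0 < c := by positivity
  have hclt : c < a := by
    have h1 : 2/a ≤ p := le_trans (le_max_left _ _) hpge
    have h2 : 0 < 2/a := by positivity
    have h3 : 1/p ≤ 1/(2/a) := one_div_le_one_div_of_le h2 h1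
    have h4 : 1/(2/a) = a/2 := by field_simp
    rw [hcdef]
    calc 1/p ≤ a/2 := by rw [← h4]; exact h3
      _ < a := by linarith
  -- derivative bound
  have hdc : ∀ s : ℝ, 0 < s → s < a → |s * deriv φ s| < δ := by
    intro s hs0 hsa
    have := hda (mem_Ioi.2 hs0) (by simpa [Real.dist_eq, abs_of_pos hs0] using hsa)
    rw [Real.dist_eq, sub_zero] at this
    exact this
  have hder_at : ∀ s : ℝ, 0 < s → HasDerivAt φ (deriv φ s) s := fun s hs =>
    (hdiff.differentiableAt (Ioi_mem_nhds hs)).hasDerivAt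
  -- tangent line bound
  have tangent : ∀ t ∈ Ioi (0:ℝ), deriv φ c * (t - c) ≤ φ t - φ c := by
    intro t ht
    have ht0 : (0:ℝ) < t := ht
    rcases lt_trichotomy t c with h | h | h
    · have hs := hconv.slope_le_of_hasDerivAt (mem_Ioi.2 ht0) (mem_Ioi.2 hc) h
        (hder_at c hc)
      rw [slope_def_field] at hs
      rw [div_le_iff₀ (by linarith : (0:ℝ) < c - t)] at hs
      nlinarith
    · subst h; simp
    · have hs := hconv.le_slope_of_hasDerivAt (mem_Ioi.2 hc) (mem_Ioi.2 ht0) h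
        (hder_at c hc)
      rw [slope_def_field] at hs
      rw [le_div_iff₀ (by linarith : (0:ℝ) < t - c)] at hs
      nlinarith
  -- logarithmic bound near 0
  have logbound : ∀ t : ℝ, 0 < t → t ≤ c → φ t - φ c ≤ δ * Real.log (c / t) := by
    intro t ht0 htc
    rcases eq_or_lt_of_le htc with h | h
    · subst h; simp [div_self hc.ne']
    · have hsub : Icc t c ⊆ Ioi (0:ℝ) := fun s hs => lt_of_lt_of_le ht0 hs.1
      have hm : MonotoneOn (fun s : ℝ => φ s + δ * Real.log s) (Icc t c) := by
        apply monotoneOn_of_deriv_nonneg (convex_Icc t c)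
        · exact (hdiff.continuousOn.mono hsub).add
            (continuousOn_const.mul (Real.continuousOn_log.mono
              (fun s hs => ne_of_gt (hsub hs))))
        · rw [interior_Icc]
          intro s hs
          have hs0 : (0:ℝ) < s := lt_trans ht0 hs.1
          exact ((hdiff.differentiableAt (Ioi_mem_nhds hs0)).add
            ((Real.differentiableAt_log hs0.ne').const_mul δ)).differentiableWithinAt
        · rw [interior_Icc]
          intro s hs
          have hs0 : (0:ℝ) < s := lt_trans ht0 hs.1
          have hφd : DifferentiableAt ℝ φ s := hdiff.differentiableAt (Ioi_mem_nhds hs0)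
          have hld : DifferentiableAt ℝ (fun s : ℝ => δ * Real.log s) s :=
            (Real.differentiableAt_log hs0.ne').const_mul δ
          rw [deriv_fun_add hφd hld, deriv_const_mul δ (Real.differentiableAt_log hs0.ne'),
            Real.deriv_log]
          have hb := hdc s hs0 (lt_trans hs.2 hclt)
          have hb1 : -δ < s * deriv φ s := (abs_lt.1 hb).1
          have hinv : s * s⁻¹ = 1 := mul_inv_cancel₀ hs0.ne'
          nlinarith [hs0]
      have := hm (left_mem_Icc.2 h.le) (right_mem_Icc.2 h.le) h.le
      have hlog : Real.log (c / t) = Real.log c - Real.log t := Real.log_div hc.ne' ht0.ne'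
      rw [hlog]
      simp only [] at this
      nlinarith
  -- √-bound near 0
  have sqrtbound : ∀ t : ℝ, 0 < t → t ≤ c →
      φ t - φ c ≤ 2*δ*Real.sqrt c * t ^ (-(1/2):ℝ) := by
    intro t ht0 htc
    have hl := logbound t ht0 htc
    have hpos : 0 < c/t := by positivity
    have hlog2 : Real.log (c/t) ≤ 2 * (Real.sqrt c / Real.sqrt t) := by
      have h1 : Real.log (c/t) = 2 * Real.log (Real.sqrt (c/t)) := by
        rw [Real.log_sqrt hpos.le]; ring
      have h2 : Real.log (Real.sqrt (c/t)) ≤ Real.sqrt (c/t) - 1 :=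
        Real.log_le_sub_one_of_pos (Real.sqrt_pos.2 hpos)
      have h3 : Real.sqrt (c/t) = Real.sqrt c / Real.sqrt t := Real.sqrt_div hc.le t
      rw [h3] at h1 h2
      linarith
    have hrw : Real.sqrt c / Real.sqrt t = Real.sqrt c * t ^ (-(1/2):ℝ) := by
      rw [div_eq_mul_inv]
      congr 1
      rw [Real.rpow_neg ht0.le, ← Real.sqrt_eq_rpow]
    have := mul_le_mul_of_nonneg_left hlog2 hδ.le
    rw [hrw] at this
    calc φ t - φ c ≤ δ * Real.log (c/t) := hl
      _ ≤ δ * (2 * (Real.sqrt c * t ^ (-(1/2):ℝ))) := this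
      _ = 2*δ*Real.sqrt c * t ^ (-(1/2):ℝ) := by ring
  -- integrals
  have hIexp := aux_exp_integral p hp0
  have hItexp := aux_texp_integral p hp0
  have hIntExp : IntegrableOn (fun t : ℝ => Real.exp (-p*t)) (Ioi 0) :=
    exp_neg_integrableOn_Ioi 0 hp0
  have hIntTexp := aux_texp_integrable p hp0
  have hIntLap := aux_lap_integrable φ hnn hmono hdiff hloc p hp0
  set F : ℝ → ℝ := fun t => p * Real.exp (-p*t) * (φ t - φ c) with hFdef
  have hFeq : F = fun t => p * (Real.exp (-p*t) * φ t) - (p * φ c) * Real.exp (-p*t) :=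
    funext fun t => by rw [hFdef]; ring
  have hIntF : IntegrableOn F (Ioi 0) := by
    rw [hFeq]; exact (hIntLap.const_mul p).sub (hIntExp.const_mul _)
  have hD : p * laplace φ p - φ c = ∫ t in Ioi (0:ℝ), F t := by
    rw [hFeq]
    rw [integral_sub (hIntLap.const_mul p) (hIntExp.const_mul _),
      integral_const_mul, integral_const_mul, hIexp]
    simp only [laplace]
    have h1 : p * φ c * (1/p) = φ c := by field_simp
    rw [h1]
  set G : ℝ → ℝ := fun t => p * Real.exp (-p*t) * (deriv φ c * (t - c)) with hGdef
  have hGeq : G = fun t => (p * deriv φ c) * (t * Real.exp (-p*t))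
      - (p * deriv φ c * c) * Real.exp (-p*t) := funext fun t => by rw [hGdef]; ring
  have hIntG : IntegrableOn G (Ioi 0) := by
    rw [hGeq]; exact (hIntTexp.const_mul _).sub (hIntExp.const_mul _)
  have hGint0 : ∫ t in Ioi (0:ℝ), G t = 0 := by
    rw [hGeq, integral_sub (hIntTexp.const_mul _) (hIntExp.const_mul _),
      integral_const_mul, integral_const_mul, hIexp, hItexp, hcdef]
    field_simp
    ring
  have hlow : 0 ≤ ∫ t in Ioi (0:ℝ), F t := by
    calc (0:ℝ) = ∫ t in Ioi (0:ℝ), G t := hGint0.symm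
      _ ≤ ∫ t in Ioi (0:ℝ), F t := setIntegral_mono_on hIntG hIntF measurableSet_Ioi
          (fun t ht => mul_le_mul_of_nonneg_left (tangent t ht) (by positivity))
  have hsplit : ∫ t in Ioi (0:ℝ), F t
      = (∫ t in Ioc (0:ℝ) c, F t) + ∫ t in Ioi c, F t := by
    rw [← setIntegral_union Ioc_disjoint_Ioi_same measurableSet_Ioi
      (hIntF.mono_set Ioc_subset_Ioi_self) (hIntF.mono_set (Ioi_subset_Ioi hc.le)),
      Ioc_union_Ioi_eq_Ioi hc.le]
  have hpart2 : ∫ t in Ioi c, F t ≤ 0 := by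
    apply setIntegral_nonpos measurableSet_Ioi
    intro t ht
    have htc : c < t := ht
    have ht0 : 0 < t := lt_trans hc htc
    have hle : φ t ≤ φ c := hmono (mem_Ioi.2 hc) (mem_Ioi.2 ht0) htc.le
    have hnonneg : 0 ≤ p * Real.exp (-p*t) := by positivity
    show p * Real.exp (-p*t) * (φ t - φ c) ≤ 0
    nlinarith [mul_nonneg hnonneg (by linarith : 0 ≤ φ c - φ t)]
  set H : ℝ → ℝ := fun t => (2*δ*Real.sqrt c*p) * t ^ (-(1/2):ℝ) with hHdef
  have hIntH : IntegrableOn H (Ioc 0 c) := by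
    have h1 : IntervalIntegrable (fun t : ℝ => t ^ (-(1/2):ℝ)) volume 0 c :=
      intervalIntegral.intervalIntegrable_rpow' (by norm_num)
    rw [intervalIntegrable_iff_integrableOn_Ioc_of_le hc.le] at h1
    rw [hHdef]
    exact h1.const_mul _
  have hpart1 : ∫ t in Ioc (0:ℝ) c, F t ≤ ∫ t in Ioc (0:ℝ) c, H t := by
    apply setIntegral_mono_on (hIntF.mono_set Ioc_subset_Ioi_self) hIntH measurableSet_Ioc
    intro t ht
    have ht0 : 0 < t := ht.1
    have h1 := sqrtbound t ht0 ht.2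
    have hexple : Real.exp (-p*t) ≤ 1 := Real.exp_le_one_iff.2 (by nlinarith)
    have hφnn : 0 ≤ φ t - φ c := by
      have := hmono (mem_Ioi.2 ht0) (mem_Ioi.2 hc) ht.2; linarith
    have hrp : 0 ≤ t ^ (-(1/2):ℝ) := Real.rpow_nonneg ht0.le _
    rw [hFdef, hHdef]
    calc p * Real.exp (-p*t) * (φ t - φ c) ≤ p * 1 * (φ t - φ c) := by
          apply mul_le_mul_of_nonneg_right _ hφnn
          exact mul_le_mul_of_nonneg_left hexple hp0.le
      _ ≤ p * (2*δ*Real.sqrt c * t ^ (-(1/2):ℝ)) := by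
          rw [mul_one]; exact mul_le_mul_of_nonneg_left h1 hp0.le
      _ = (2*δ*Real.sqrt c*p) * t ^ (-(1/2):ℝ) := by ring
  have hHval : ∫ t in Ioc (0:ℝ) c, H t = 4*δ := by
    rw [hHdef]
    rw [integral_const_mul]
    have h2 : ∫ t in Ioc (0:ℝ) c, t ^ (-(1/2):ℝ) = 2 * Real.sqrt c := by
      rw [← intervalIntegral.integral_of_le hc.le,
        integral_rpow (Or.inl (by norm_num : (-1:ℝ) < -(1/2)))]
      norm_num
      rw [Real.sqrt_eq_rpow]
      ring
    rw [h2]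
    have h3 : Real.sqrt c * Real.sqrt c = c := Real.mul_self_sqrt hc.le
    have hpc : p * c = 1 := by rw [hcdef]; field_simp
    calc (2*δ*Real.sqrt c*p) * (2*Real.sqrt c)
        = 4*δ*p*(Real.sqrt c*Real.sqrt c) := by ring
      _ = 4*δ*(p*c) := by rw [h3]; ring
      _ = 4*δ := by rw [hpc]; ring
  have hub : p * laplace φ p - φ c ≤ 4*δ := by
    rw [hD, hsplit]
    linarith [hpart1, hpart2, hHval.le, hHval.ge]
  have hlb : 0 ≤ p * laplace φ p - φ c := by rw [hD]; exact hlow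
  rw [Real.norm_eq_abs, abs_of_nonneg hlb]
  rw [hδdef] at hub
  linarith
end

section
/- Let g : (0,∞) → ℝ be non-negative, non-increasing, differentiable, convex, locally integrable near 0, with t·g'(t) → 0 as t → 0+, and fix r > 0. Set φ(t) = r·g(t). Then the function l(p) := exp(-p·φ̃(p)) is slowly varying at infinity, i.e. for every λ > 0, l(λp)/l(p) → 1 as p → ∞. -/
open MeasureTheory Filter Set Real

/-- Auxiliary: the rescaled integral `∫_{(0,∞)} e^{-u} g(u/q) du`. -/
noncomputable def Ig (g : ℝ → ℝ) (q : ℝ) : ℝ :=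
  ∫ u in Set.Ioi (0:ℝ), Real.exp (-u) * g (u / q)

section Aux

variable {g : ℝ → ℝ}

lemma aux_integrable (hnn : ∀ t > (0:ℝ), 0 ≤ g t) (hmono : AntitoneOn g (Set.Ioi 0))
    (hcont : ContinuousOn g (Set.Ioi 0)) (hloc : ∀ b > (0:ℝ), IntegrableOn g (Set.Ioc 0 b))
    {q : ℝ} (hq : 0 < q) :
    IntegrableOn (fun t => Real.exp (-q * t) * g t) (Set.Ioi 0) := by
  have hcont' : ContinuousOn (fun t => Real.exp (-q * t) * g t) (Set.Ioi 0) :=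
    ((Real.continuous_exp.comp (continuous_const.mul continuous_id)).continuousOn).mul hcont
  have h1 : IntegrableOn (fun t => Real.exp (-q * t) * g t) (Set.Ioc 0 1) := by
    refine Integrable.mono' (hloc 1 one_pos)
      ((hcont'.mono Set.Ioc_subset_Ioi_self).aestronglyMeasurable measurableSet_Ioc) ?_
    refine (ae_restrict_iff' measurableSet_Ioc).2 (ae_of_all _ fun t ht => ?_)
    have h0 : 0 ≤ g t := hnn t ht.1
    have he : Real.exp (-q * t) ≤ 1 := by
      rw [← Real.exp_zero]
      apply Real.exp_le_exp.2
      nlinarith [ht.1]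
    calc ‖Real.exp (-q * t) * g t‖ = Real.exp (-q * t) * g t := by
          rw [Real.norm_eq_abs, abs_mul, abs_of_nonneg (Real.exp_pos _).le, abs_of_nonneg h0]
      _ ≤ 1 * g t := mul_le_mul_of_nonneg_right he h0
      _ = g t := one_mul _
  have h2 : IntegrableOn (fun t => Real.exp (-q * t) * g t) (Set.Ioi 1) := by
    refine Integrable.mono' ((exp_neg_integrableOn_Ioi 1 hq).const_mul (g 1))
      ((hcont'.mono (Set.Ioi_subset_Ioi zero_le_one)).aestronglyMeasurable measurableSet_Ioi) ?_
    refine (ae_restrict_iff' measurableSet_Ioi).2 (ae_of_all _ fun t ht => ?_)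
    have ht1 : (1:ℝ) < t := ht
    have ht0 : (0:ℝ) < t := lt_trans one_pos ht1
    have h0 : 0 ≤ g t := hnn t ht0
    have hg1 : g t ≤ g 1 := hmono (Set.mem_Ioi.2 one_pos) (Set.mem_Ioi.2 ht0) ht1.le
    calc ‖Real.exp (-q * t) * g t‖ = Real.exp (-q * t) * g t := by
          rw [Real.norm_eq_abs, abs_mul, abs_of_nonneg (Real.exp_pos _).le, abs_of_nonneg h0]
      _ ≤ Real.exp (-q * t) * g 1 := mul_le_mul_of_nonneg_left hg1 (Real.exp_pos _).le
      _ = g 1 * Real.exp (-q * t) := mul_comm _ _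
  have hun : Set.Ioc (0:ℝ) 1 ∪ Set.Ioi 1 = Set.Ioi 0 := Set.Ioc_union_Ioi_eq_Ioi zero_le_one
  rw [← hun]
  exact h1.union h2

lemma aux_int' (hnn : ∀ t > (0:ℝ), 0 ≤ g t) (hmono : AntitoneOn g (Set.Ioi 0))
    (hcont : ContinuousOn g (Set.Ioi 0)) (hloc : ∀ b > (0:ℝ), IntegrableOn g (Set.Ioc 0 b))
    {q : ℝ} (hq : 0 < q) :
    IntegrableOn (fun u => Real.exp (-u) * g (u / q)) (Set.Ioi 0) := by
  have h := aux_integrable hnn hmono hcont hloc hq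
  have h2 : IntegrableOn (fun x => (fun u => Real.exp (-u) * g (u / q)) (q * x)) (Set.Ioi 0) := by
    refine h.congr_fun (fun x _ => ?_) measurableSet_Ioi
    simp only
    rw [mul_div_cancel_left₀ _ hq.ne', neg_mul]
  have h3 := (integrableOn_Ioi_comp_mul_left_iff (fun u => Real.exp (-u) * g (u / q)) 0 hq).1 h2
  rwa [mul_zero] at h3

lemma aux_eq {q : ℝ} (hq : 0 < q) :
    q * ∫ t in Set.Ioi (0:ℝ), Real.exp (-q * t) * g t = Ig g q := by
  have h := integral_comp_mul_left_Ioi (fun u => Real.exp (-u) * g (u / q)) 0 hq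
  rw [mul_zero] at h
  have h2 : ∀ x : ℝ, Real.exp (-(q * x)) * g (q * x / q) = Real.exp (-q * x) * g x := by
    intro x; rw [mul_div_cancel_left₀ _ hq.ne', neg_mul]
  simp only [h2] at h
  rw [Ig, h, smul_eq_mul, ← mul_assoc, mul_inv_cancel₀ hq.ne', one_mul]

set_option maxHeartbeats 1000000 in
lemma aux_key (hnn : ∀ t > (0:ℝ), 0 ≤ g t) (hmono : AntitoneOn g (Set.Ioi 0))
    (hdiff : DifferentiableOn ℝ g (Set.Ioi 0)) (hconv : ConvexOn ℝ (Set.Ioi 0) g)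
    (hloc : ∀ b > (0:ℝ), IntegrableOn g (Set.Ioc 0 b))
    (hlim : Tendsto (fun t => t * deriv g t) (nhdsWithin 0 (Set.Ioi 0)) (nhds 0))
    {μ : ℝ} (hμ : 1 ≤ μ) :
    Tendsto (fun p => Ig g (μ * p) - Ig g p) atTop (nhds 0) := by
  have hcont : ContinuousOn g (Set.Ioi 0) := hdiff.continuousOn
  have hdiffAt : ∀ x ∈ Set.Ioi (0:ℝ), DifferentiableAt ℝ g x := fun x hx =>
    (hdiff x hx).differentiableAt (isOpen_Ioi.mem_nhds hx)
  have hdmono : MonotoneOn (deriv g) (Set.Ioi 0) := hconv.monotoneOn_deriv hdiffAt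
  have hdnonpos : ∀ x ∈ Set.Ioi (0:ℝ), deriv g x ≤ 0 := by
    intro x hx
    have hx0 : (0:ℝ) < x := hx
    have hx1 : x ∈ Set.Ioi (0:ℝ) := hx
    have hx2 : x + 1 ∈ Set.Ioi (0:ℝ) := Set.mem_Ioi.2 (by linarith)
    have hs := hconv.deriv_le_slope hx1 hx2 (lt_add_one x) (hdiffAt x hx)
    have hgle : g (x + 1) ≤ g x := hmono hx1 hx2 (le_of_lt (lt_add_one x))
    have hslope : slope g x (x + 1) ≤ 0 := by
      rw [slope_def_field]
      apply div_nonpos_of_nonpos_of_nonneg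
      · linarith
      · linarith
    linarith
  have hineq : ∀ a b : ℝ, 0 < a → a ≤ b → g a - g b ≤ -(deriv g a) * (b - a) := by
    intro a b ha hab
    rcases eq_or_lt_of_le hab with rfl | hlt
    · simp
    · have hs := hconv.deriv_le_slope (Set.mem_Ioi.2 ha) (Set.mem_Ioi.2 (lt_trans ha hlt)) hlt
        (hdiffAt a (Set.mem_Ioi.2 ha))
      rw [slope_def_field] at hs
      have hba : 0 < b - a := by linarith
      have h2 := (le_div_iff₀ hba).1 hs
      nlinarith
  have hexp_int : IntegrableOn (fun u : ℝ => Real.exp (-u)) (Set.Ioi 0) := by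
    have := exp_neg_integrableOn_Ioi 0 one_pos
    simpa [neg_one_mul] using this
  have hexp_val : ∫ u in Set.Ioi (0:ℝ), Real.exp (-u) = 1 := integral_exp_neg_Ioi_zero
  have hxe_int : IntegrableOn (fun u : ℝ => Real.exp (-u) * u) (Set.Ioi 0) := by
    have := Real.GammaIntegral_convergent (by norm_num : (0:ℝ) < 2)
    simpa [show ((2:ℝ) - 1) = 1 by norm_num, Real.rpow_one] using this
  have hxe_val : ∫ u in Set.Ioi (0:ℝ), Real.exp (-u) * u = 1 := by
    have h := Real.Gamma_eq_integral (by norm_num : (0:ℝ) < 2)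
    rw [Real.Gamma_two] at h
    simp only [show ((2:ℝ) - 1) = 1 by norm_num, Real.rpow_one] at h
    exact h.symm
  rw [Metric.tendsto_atTop]
  intro ε hε
  have hμ0 : 0 < μ := lt_of_lt_of_le one_pos hμ
  set ε₁ := ε / (2 * μ) with hε₁def
  have hε₁ : 0 < ε₁ := by positivity
  obtain ⟨δ, hδ, hδ'⟩ := (Metric.tendsto_nhdsWithin_nhds).1 hlim ε₁ hε₁
  set c := -(deriv g δ) with hcdef
  have hc : 0 ≤ c := by
    have := hdnonpos δ (Set.mem_Ioi.2 hδ); rw [hcdef]; linarith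
  refine ⟨max 1 (2 * (μ - 1) * c / (μ * ε) + 1), fun p hp => ?_⟩
  have hp1 : (1:ℝ) ≤ p := le_trans (le_max_left _ _) hp
  have hp0 : 0 < p := lt_of_lt_of_le one_pos hp1
  have hμp : 0 < μ * p := by positivity
  have hI1 : IntegrableOn (fun u => Real.exp (-u) * g (u / (μ * p))) (Set.Ioi 0) :=
    aux_int' hnn hmono hcont hloc hμp
  have hI2 : IntegrableOn (fun u => Real.exp (-u) * g (u / p)) (Set.Ioi 0) :=
    aux_int' hnn hmono hcont hloc hp0
  have hsub : Ig g (μ * p) - Ig g p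
      = ∫ u in Set.Ioi (0:ℝ), (Real.exp (-u) * g (u / (μ * p)) - Real.exp (-u) * g (u / p)) :=
    (integral_sub hI1 hI2).symm
  have hptw : ∀ u ∈ Set.Ioi (0:ℝ),
      0 ≤ Real.exp (-u) * g (u / (μ * p)) - Real.exp (-u) * g (u / p) := by
    intro u hu
    have hu0 : (0:ℝ) < u := hu
    have ha : 0 < u / (μ * p) := by positivity
    have hb : 0 < u / p := by positivity
    have hab : u / (μ * p) ≤ u / p := by
      rw [div_le_div_iff₀ (by positivity) hp0]
      nlinarith [mul_nonneg (mul_nonneg (sub_nonneg.2 hμ) hp0.le) hu0.le]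
    have hg := hmono (Set.mem_Ioi.2 ha) (Set.mem_Ioi.2 hb) hab
    nlinarith [Real.exp_pos (-u)]
  have hnonneg : 0 ≤ Ig g (μ * p) - Ig g p := by
    rw [hsub]; exact setIntegral_nonneg measurableSet_Ioi hptw
  set C := (μ - 1) * c / (μ * p) with hCdef
  have hC0 : 0 ≤ C := div_nonneg (mul_nonneg (by linarith) hc) hμp.le
  have hBint : IntegrableOn
      (fun u => Real.exp (-u) * ((μ - 1) * ε₁) + (Real.exp (-u) * u) * C) (Set.Ioi 0) :=
    (hexp_int.mul_const _).add (hxe_int.mul_const _)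
  have hbound : ∀ u ∈ Set.Ioi (0:ℝ),
      Real.exp (-u) * g (u / (μ * p)) - Real.exp (-u) * g (u / p)
        ≤ Real.exp (-u) * ((μ - 1) * ε₁) + (Real.exp (-u) * u) * C := by
    intro u hu
    have hu0 : (0:ℝ) < u := hu
    set a := u / (μ * p) with hadef
    set b := u / p with hbdef
    have ha : 0 < a := by rw [hadef]; positivity
    have hb : 0 < b := by rw [hbdef]; positivity
    have hab : a ≤ b := by
      rw [hadef, hbdef, div_le_div_iff₀ (by positivity) hp0]
      nlinarith [mul_nonneg (mul_nonneg (sub_nonneg.2 hμ) hp0.le) hu0.le]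
    have hba : b - a = a * (μ - 1) := by
      rw [hadef, hbdef]; field_simp
    have h1 : g a - g b ≤ -(deriv g a) * (b - a) := hineq a b ha hab
    have huC : u * C = c * (a * (μ - 1)) := by
      rw [hCdef, hadef]; field_simp
    have hkey : g a - g b ≤ (μ - 1) * ε₁ + u * C := by
      have hμ1 : (0:ℝ) ≤ μ - 1 := by linarith
      rcases lt_or_ge a δ with hcase | hcase
      · have hd := hδ' (Set.mem_Ioi.2 ha)
          (by rw [Real.dist_eq, sub_zero, abs_of_pos ha]; exact hcase)
        rw [Real.dist_eq, sub_zero] at hd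
        have habs := abs_le.1 hd.le
        have h2 : -(deriv g a) * a ≤ ε₁ := by nlinarith [habs.1]
        have h3 : -(deriv g a) * (b - a) = (-(deriv g a) * a) * (μ - 1) := by
          rw [hba]; ring
        have h4 : (-(deriv g a) * a) * (μ - 1) ≤ ε₁ * (μ - 1) :=
          mul_le_mul_of_nonneg_right h2 hμ1
        have h5 : 0 ≤ u * C := mul_nonneg hu0.le hC0
        nlinarith
      · have hda : deriv g δ ≤ deriv g a := hdmono (Set.mem_Ioi.2 hδ) (Set.mem_Ioi.2 ha) hcase
        have h2 : -(deriv g a) ≤ c := by rw [hcdef]; linarith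
        have h3 : 0 ≤ a * (μ - 1) := mul_nonneg ha.le hμ1
        have h4 : -(deriv g a) * (b - a) ≤ c * (a * (μ - 1)) := by
          rw [hba]
          exact mul_le_mul_of_nonneg_right h2 h3
        have h5 : 0 ≤ (μ - 1) * ε₁ := mul_nonneg hμ1 hε₁.le
        rw [huC]
        linarith
    have hE : (0:ℝ) ≤ Real.exp (-u) := (Real.exp_pos _).le
    calc Real.exp (-u) * g a - Real.exp (-u) * g b
        = Real.exp (-u) * (g a - g b) := by ring
      _ ≤ Real.exp (-u) * ((μ - 1) * ε₁ + u * C) := mul_le_mul_of_nonneg_left hkey hE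
      _ = Real.exp (-u) * ((μ - 1) * ε₁) + (Real.exp (-u) * u) * C := by ring
  have hle : Ig g (μ * p) - Ig g p ≤ (μ - 1) * ε₁ + C := by
    rw [hsub]
    calc ∫ u in Set.Ioi (0:ℝ), (Real.exp (-u) * g (u / (μ * p)) - Real.exp (-u) * g (u / p))
        ≤ ∫ u in Set.Ioi (0:ℝ),
            (Real.exp (-u) * ((μ - 1) * ε₁) + (Real.exp (-u) * u) * C) :=
          setIntegral_mono_on (hI1.sub hI2) hBint measurableSet_Ioi hbound
      _ = (∫ u in Set.Ioi (0:ℝ), Real.exp (-u)) * ((μ - 1) * ε₁)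
            + (∫ u in Set.Ioi (0:ℝ), Real.exp (-u) * u) * C := by
          rw [integral_add (hexp_int.mul_const _) (hxe_int.mul_const _),
            integral_mul_const, integral_mul_const]
      _ = (μ - 1) * ε₁ + C := by rw [hexp_val, hxe_val]; ring
  rw [Real.dist_eq, sub_zero, abs_of_nonneg hnonneg]
  have hhalf1 : (μ - 1) * ε₁ ≤ ε / 2 := by
    have h1 : (μ - 1) * ε₁ ≤ μ * ε₁ := mul_le_mul_of_nonneg_right (by linarith) hε₁.le
    have h2 : μ * ε₁ = ε / 2 := by rw [hε₁def]; field_simp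
    linarith
  have hhalf2 : C < ε / 2 := by
    have hpN : 2 * (μ - 1) * c / (μ * ε) + 1 ≤ p := le_trans (le_max_right _ _) hp
    have h4 : 2 * (μ - 1) * c / (μ * ε) < p := by linarith
    have h5 : 2 * (μ - 1) * c < p * (μ * ε) := by
      rw [div_lt_iff₀ (by positivity : (0:ℝ) < μ * ε)] at h4
      linarith
    rw [hCdef, div_lt_iff₀ hμp]
    nlinarith
  linarith

lemma aux_key2 (hnn : ∀ t > (0:ℝ), 0 ≤ g t) (hmono : AntitoneOn g (Set.Ioi 0))
    (hdiff : DifferentiableOn ℝ g (Set.Ioi 0)) (hconv : ConvexOn ℝ (Set.Ioi 0) g)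
    (hloc : ∀ b > (0:ℝ), IntegrableOn g (Set.Ioc 0 b))
    (hlim : Tendsto (fun t => t * deriv g t) (nhdsWithin 0 (Set.Ioi 0)) (nhds 0))
    {lam : ℝ} (hlam : 0 < lam) :
    Tendsto (fun p => Ig g (lam * p) - Ig g p) atTop (nhds 0) := by
  rcases le_or_gt 1 lam with h | h
  · exact aux_key hnn hmono hdiff hconv hloc hlim h
  · have hinv : 0 < lam⁻¹ := inv_pos.2 hlam
    have hinv1 : 1 ≤ lam⁻¹ := by nlinarith [mul_inv_cancel₀ hlam.ne']
    have hconj := aux_key hnn hmono hdiff hconv hloc hlim hinv1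
    have hmul : Tendsto (fun p : ℝ => lam * p) atTop atTop :=
      (tendsto_const_mul_atTop_of_pos hlam).2 tendsto_id
    have hcomp := hconj.comp hmul
    have heq : ∀ p : ℝ, lam⁻¹ * (lam * p) = p := fun p => by field_simp
    simp only [Function.comp_def, heq] at hcomp
    have := hcomp.neg
    simpa [neg_sub] using this

end Aux

theorem stmt8 (g : ℝ → ℝ) (r : ℝ) (hr : 0 < r)
    (hnn : ∀ t > (0:ℝ), 0 ≤ g t)
    (hmono : AntitoneOn g (Set.Ioi 0))
    (hdiff : DifferentiableOn ℝ g (Set.Ioi 0))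
    (hconv : ConvexOn ℝ (Set.Ioi 0) g)
    (hloc : ∀ b > (0:ℝ), IntegrableOn g (Set.Ioc 0 b))
    (hlim : Tendsto (fun t => t * deriv g t) (nhdsWithin 0 (Set.Ioi 0)) (nhds 0)) :
    ∀ lam > (0:ℝ),
      Tendsto
        (fun p =>
          Real.exp (-((lam * p) * laplace (fun t => r * g t) (lam * p))) /
            Real.exp (-(p * laplace (fun t => r * g t) p)))
        atTop (nhds 1) := by
  intro lam hlam
  have hlap : ∀ q : ℝ, 0 < q → q * laplace (fun t => r * g t) q = r * Ig g q := by
    intro q hq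
    have h1 : laplace (fun t => r * g t) q
        = r * ∫ t in Set.Ioi (0:ℝ), Real.exp (-q * t) * g t := by
      rw [laplace, ← integral_const_mul]
      congr 1; funext t; ring
    rw [h1, ← aux_eq hq]
    ring
  have hIg := aux_key2 hnn hmono hdiff hconv hloc hlim hlam
  have h3 : Tendsto (fun p => r * (Ig g p - Ig g (lam * p))) atTop (nhds 0) := by
    have h := (hIg.neg).const_mul r
    simpa [neg_sub] using h
  have h2 : Tendsto (fun p => Real.exp (r * (Ig g p - Ig g (lam * p)))) atTop (nhds 1) := by
    have := (Real.continuous_exp.tendsto 0).comp h3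
    simpa [Real.exp_zero, Function.comp_def] using this
  refine Tendsto.congr' ?_ h2
  filter_upwards [eventually_gt_atTop (0:ℝ)] with p hp
  have hlp2 : 0 < lam * p := mul_pos hlam hp
  rw [← Real.exp_sub]
  congr 1
  have e1 := hlap p hp
  have e2 := hlap (lam * p) hlp2
  linear_combination e2 - e1
end

section
/- Let g : (0,∞) → ℝ be non-negative, non-increasing, differentiable, convex, locally integrable near 0, with t·g'(t) → 0 as t → 0+, and let r > 0. Let H(t,r) be the non-negative non-decreasing function whose Laplace transform in t is exp(-p·r·g̃(p))/p. Then H(t,r) ~ exp(-g(t)·r) as t → 0+, i.e. the ratio H(t,r)/exp(-r·g(t)) tends to 1. -/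
open MeasureTheory Filter Set Real

namespace Stmt9Aux

lemma integral_exp_Ioi {p : ℝ} (hp : 0 < p) (a : ℝ) :
    ∫ s in Set.Ioi a, Real.exp (-p * s) = Real.exp (-p * a) / p := by
  have hd : ∀ x ∈ Set.Ioi a, HasDerivAt (fun s => -(Real.exp (-p * s) / p))
      (Real.exp (-p * x)) x := by
    intro x _
    have h1 : HasDerivAt (fun s : ℝ => -p * s) (-p) x := by
      simpa using (hasDerivAt_id x).const_mul (-p)
    have h2 := (h1.exp.div_const p).neg
    refine h2.congr_deriv ?_
    field_simp
  have htend : Tendsto (fun s => -(Real.exp (-p * s) / p)) atTop (nhds 0) := by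
    have : Tendsto (fun s : ℝ => -p * s) atTop atBot :=
      tendsto_id.const_mul_atTop_of_neg (neg_lt_zero.2 hp)
    have := (Real.tendsto_exp_atBot.comp this).div_const p
    simpa using this.neg
  have := integral_Ioi_of_hasDerivAt_of_tendsto
    (Continuous.continuousWithinAt (by continuity)) hd
    (exp_neg_integrableOn_Ioi a hp) htend
  rw [this]; ring

lemma integrableOn_mul_exp {p : ℝ} (hp : 0 < p) {a : ℝ} (ha : 0 ≤ a) :
    IntegrableOn (fun s => s * Real.exp (-p * s)) (Set.Ioi a) := by
  have h : IntegrableOn (fun s => (2/p) * Real.exp (-(p/2) * s)) (Set.Ioi a) :=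
    ((exp_neg_integrableOn_Ioi a (by positivity)).const_mul _)
  refine Integrable.mono h ?_ ?_
  · exact (continuous_id.mul (by continuity)).aestronglyMeasurable.restrict
  · refine ae_restrict_of_forall_mem measurableSet_Ioi (fun s _ => ?_)
    rename_i hs
    have hs0 : 0 < s := lt_of_le_of_lt ha hs
    rw [Real.norm_eq_abs, Real.norm_eq_abs, abs_of_pos (by positivity),
      abs_of_pos (by positivity)]
    have h1 : s ≤ 2/p * Real.exp (p*s/2) := by
      have := (Real.add_one_le_exp (p*s/2)).trans' (by linarith : p*s/2 ≤ p*s/2 + 1)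
      calc s = 2/p * (p*s/2) := by field_simp
        _ ≤ 2/p * Real.exp (p*s/2) := by
            apply mul_le_mul_of_nonneg_left this (by positivity)
    calc s * Real.exp (-p*s) ≤ (2/p * Real.exp (p*s/2)) * Real.exp (-p*s) :=
          mul_le_mul_of_nonneg_right h1 (Real.exp_pos _).le
      _ = 2/p * Real.exp (-(p/2)*s) := by
          rw [mul_assoc, ← Real.exp_add]; ring_nf

end Stmt9Aux

namespace Stmt9Aux2
open Stmt9Aux

lemma integral_mul_exp_Ioi {p : ℝ} (hp : 0 < p) :
    ∫ s in Set.Ioi (0:ℝ), s * Real.exp (-p * s) = 1 / p^2 := by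
  have hd : ∀ x ∈ Set.Ioi (0:ℝ), HasDerivAt (fun s => -((s/p + 1/p^2) * Real.exp (-p * s)))
      (x * Real.exp (-p * x)) x := by
    intro x _
    have h1 : HasDerivAt (fun s : ℝ => -p * s) (-p) x := by
      simpa using (hasDerivAt_id x).const_mul (-p)
    have h2 : HasDerivAt (fun s : ℝ => s/p + 1/p^2) (1/p) x := by
      have := ((hasDerivAt_id x).div_const p).add_const (1/p^2)
      simpa using this
    have h3 := (h2.mul h1.exp).neg
    refine h3.congr_deriv ?_
    field_simp
    ring
  have htend : Tendsto (fun s : ℝ => -((s/p + 1/p^2) * Real.exp (-p * s))) atTop (nhds 0) := by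
    have hb : Tendsto (fun s : ℝ => -p * s) atTop atBot :=
      tendsto_id.const_mul_atTop_of_neg (neg_lt_zero.2 hp)
    have h1 : Tendsto (fun s : ℝ => s * Real.exp (-p*s)) atTop (nhds 0) := by
      have := (tendsto_pow_mul_exp_neg_atTop_nhds_zero 1).comp
        (tendsto_id.atTop_mul_const hp : Tendsto (fun s : ℝ => s * p) atTop atTop)
      have h2 := this.div_const p
      simp only [Function.comp, pow_one, zero_div] at h2
      refine h2.congr (fun s => ?_)
      rw [mul_comm (-p) s]
      field_simp
    have h2 : Tendsto (fun s : ℝ => Real.exp (-p*s)) atTop (nhds 0) :=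
      Real.tendsto_exp_atBot.comp hb
    have := ((h1.div_const p).add (h2.div_const (p^2))).neg
    simp only [zero_div, add_zero, neg_zero, zero_add] at this
    refine this.congr (fun s => ?_); ring
  have := integral_Ioi_of_hasDerivAt_of_tendsto
    (Continuous.continuousWithinAt (by continuity)) hd
    (integrableOn_mul_exp hp le_rfl) htend
  rw [this]; simp

/-- Laplace integral of a linear function. -/
lemma integral_exp_linear {p : ℝ} (hp : 0 < p) (α β : ℝ) :
    ∫ s in Set.Ioi (0:ℝ), Real.exp (-p * s) * (α + β * s) = α / p + β / p^2 := by
  have h1 : IntegrableOn (fun s => α * Real.exp (-p * s)) (Set.Ioi (0:ℝ)) :=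
    (exp_neg_integrableOn_Ioi 0 hp).const_mul α
  have h2 : IntegrableOn (fun s => β * (s * Real.exp (-p * s))) (Set.Ioi (0:ℝ)) :=
    (integrableOn_mul_exp hp le_rfl).const_mul β
  have : ∫ s in Set.Ioi (0:ℝ), Real.exp (-p * s) * (α + β * s)
      = ∫ s in Set.Ioi (0:ℝ), (α * Real.exp (-p * s) + β * (s * Real.exp (-p * s))) := by
    refine setIntegral_congr_fun measurableSet_Ioi (fun s _ => ?_); ring
  rw [this, integral_add h1 h2, MeasureTheory.integral_const_mul, MeasureTheory.integral_const_mul,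
    integral_exp_Ioi hp 0, integral_mul_exp_Ioi hp]
  simp only [neg_zero, zero_mul, mul_zero, Real.exp_zero]
  ring

lemma integrableOn_exp_linear {p : ℝ} (hp : 0 < p) (α β : ℝ) :
    IntegrableOn (fun s => Real.exp (-p * s) * (α + β * s)) (Set.Ioi (0:ℝ)) := by
  have h1 : IntegrableOn (fun s => α * Real.exp (-p * s)) (Set.Ioi (0:ℝ)) :=
    (exp_neg_integrableOn_Ioi 0 hp).const_mul α
  have h2 : IntegrableOn (fun s => β * (s * Real.exp (-p * s))) (Set.Ioi (0:ℝ)) :=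
    (integrableOn_mul_exp hp le_rfl).const_mul β
  refine IntegrableOn.congr_fun (h1.add h2) (fun s _ => ?_) measurableSet_Ioi
  simp only [Pi.add_apply]; ring

end Stmt9Aux2

namespace Stmt9Aux3
open Stmt9Aux Stmt9Aux2

variable {g : ℝ → ℝ}
variable (hnn : ∀ t > (0:ℝ), 0 ≤ g t)
variable (hmono : AntitoneOn g (Set.Ioi 0))
variable (hdiff : DifferentiableOn ℝ g (Set.Ioi 0))
variable (hconv : ConvexOn ℝ (Set.Ioi 0) g)
variable (hloc : ∀ b > (0:ℝ), IntegrableOn g (Set.Ioc 0 b))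

include hnn hmono hdiff hloc in
lemma integrableOn_exp_g {p : ℝ} (hp : 0 < p) :
    IntegrableOn (fun s => Real.exp (-p * s) * g s) (Set.Ioi (0:ℝ)) := by
  have hgc : ContinuousOn g (Set.Ioi 0) := hdiff.continuousOn
  have hmeas : AEStronglyMeasurable (fun s => Real.exp (-p * s) * g s)
      (volume.restrict (Set.Ioi (0:ℝ))) := by
    exact (Real.continuous_exp.comp (continuous_const.mul continuous_id)).aestronglyMeasurable.mul
      (hgc.aestronglyMeasurable measurableSet_Ioi)
  have h1 : IntegrableOn (fun s => Real.exp (-p * s) * g s) (Set.Ioc (0:ℝ) 1) := by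
    refine Integrable.mono (hloc 1 one_pos) (hmeas.mono_set Ioc_subset_Ioi_self) ?_
    refine ae_restrict_of_forall_mem measurableSet_Ioc (fun s hs => ?_)
    rw [Real.norm_eq_abs, Real.norm_eq_abs, abs_mul, abs_of_nonneg (hnn s hs.1),
      abs_of_nonneg (Real.exp_pos _).le]
    nth_rewrite 2 [show g s = 1 * g s by ring]
    exact mul_le_mul_of_nonneg_right
      (Real.exp_le_one_iff.mpr (by nlinarith [hs.1] : -p * s ≤ 0)) (hnn s hs.1)
  have h2 : IntegrableOn (fun s => Real.exp (-p * s) * g s) (Set.Ioi (1:ℝ)) := by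
    refine Integrable.mono ((exp_neg_integrableOn_Ioi 1 hp).const_mul (g 1))
      (hmeas.mono_set (Ioi_subset_Ioi zero_le_one)) ?_
    refine ae_restrict_of_forall_mem measurableSet_Ioi (fun s hs => ?_)
    have hs1 : (1:ℝ) < s := hs
    rw [Real.norm_eq_abs, Real.norm_eq_abs, abs_mul, abs_of_nonneg (Real.exp_pos _).le,
      abs_of_nonneg (hnn s (by linarith)),
      abs_of_nonneg (mul_nonneg (hnn 1 one_pos) (Real.exp_pos _).le)]
    rw [mul_comm (g 1) _]
    exact mul_le_mul_of_nonneg_left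
      (hmono (by exact mem_Ioi.2 one_pos) (by exact mem_Ioi.2 (by linarith)) hs1.le)
      (Real.exp_pos _).le
  have : Set.Ioi (0:ℝ) = Set.Ioc (0:ℝ) 1 ∪ Set.Ioi 1 := (Ioc_union_Ioi_eq_Ioi zero_le_one).symm
  rw [this]
  exact h1.union h2

include hmono hdiff hconv in
lemma deriv_g_nonpos {t : ℝ} (ht : 0 < t) : deriv g t ≤ 0 := by
  have hd : DifferentiableAt ℝ g t := (hdiff t ht).differentiableAt (Ioi_mem_nhds ht)
  have h := hconv.deriv_le_slope (mem_Ioi.2 ht) (mem_Ioi.2 (by linarith : (0:ℝ) < t + 1))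
    (by linarith) hd
  have hs : slope g t (t+1) ≤ 0 := by
    rw [slope_def_field]
    have := hmono (mem_Ioi.2 ht) (mem_Ioi.2 (by linarith : (0:ℝ) < t+1)) (by linarith : t ≤ t+1)
    have h2 : t + 1 - t = 1 := by ring
    rw [div_nonpos_iff]
    right
    constructor <;> linarith
  linarith

include hdiff hconv in
lemma tangent_le {t s : ℝ} (ht : 0 < t) (hs : 0 < s) :
    g t + deriv g t * (s - t) ≤ g s := by
  have hdt : DifferentiableAt ℝ g t := (hdiff t ht).differentiableAt (Ioi_mem_nhds ht)
  rcases lt_trichotomy s t with h | h | h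
  · have := hconv.slope_le_deriv (mem_Ioi.2 hs) (mem_Ioi.2 ht) h hdt
    rw [slope_def_field] at this
    have h2 : 0 < t - s := by linarith
    rw [div_le_iff₀ h2] at this
    nlinarith
  · subst h; simp
  · have := hconv.deriv_le_slope (mem_Ioi.2 ht) (mem_Ioi.2 hs) h hdt
    rw [slope_def_field] at this
    have h2 : 0 < s - t := by linarith
    rw [le_div_iff₀ h2] at this
    nlinarith

include hnn hmono hdiff hconv hloc in
lemma tangent_le_phi {t p : ℝ} (ht : 0 < t) (hp : 0 < p) :
    g t + deriv g t * (1/p - t) ≤ p * laplace g p := by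
  set α := g t - deriv g t * t with hα
  set β := deriv g t with hβ
  have hmole : ∫ s in Set.Ioi (0:ℝ), Real.exp (-p * s) * (α + β * s)
      ≤ laplace g p := by
    refine setIntegral_mono_on (integrableOn_exp_linear hp α β)
      (integrableOn_exp_g hnn hmono hdiff hloc hp) measurableSet_Ioi (fun s hs => ?_)
    have := tangent_le hdiff hconv ht (mem_Ioi.1 hs)
    have h2 : α + β * s = g t + deriv g t * (s - t) := by rw [hα, hβ]; ring
    rw [h2]
    exact mul_le_mul_of_nonneg_left this (Real.exp_pos _).le
  rw [integral_exp_linear hp α β] at hmole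
  have := mul_le_mul_of_nonneg_left hmole hp.le
  calc g t + deriv g t * (1/p - t) = p * (α / p + β / p^2) := by
        rw [hα, hβ]; field_simp; ring
    _ ≤ p * laplace g p := this

end Stmt9Aux3

namespace Stmt9Aux4
open Stmt9Aux Stmt9Aux2 Stmt9Aux3

variable {g H : ℝ → ℝ} {r : ℝ} (hr : 0 < r)
variable (hnn : ∀ t > (0:ℝ), 0 ≤ g t)
variable (hmono : AntitoneOn g (Set.Ioi 0))
variable (hdiff : DifferentiableOn ℝ g (Set.Ioi 0))
variable (hconv : ConvexOn ℝ (Set.Ioi 0) g)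
variable (hloc : ∀ b > (0:ℝ), IntegrableOn g (Set.Ioc 0 b))
variable (hHnn : ∀ t > (0:ℝ), 0 ≤ H t)
variable (hHmono : MonotoneOn H (Set.Ioi 0))
variable (hHlap : ∀ p > (0:ℝ),
      IntegrableOn (fun t => Real.exp (-p * t) * H t) (Set.Ioi 0) ∧
      laplace H p = Real.exp (-(p * r * laplace g p)) / p)

include hHnn hHmono hHlap in
lemma upper_raw {t p : ℝ} (ht : 0 < t) (hp : 0 < p) :
    H t * Real.exp (-p * t) ≤ Real.exp (-(p * r * laplace g p)) := by
  obtain ⟨hint, hlap⟩ := hHlap p hp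
  have h1 : ∫ s in Set.Ioi t, H t * Real.exp (-p * s) ≤ ∫ s in Set.Ioi t, Real.exp (-p * s) * H s := by
    refine setIntegral_mono_on ((exp_neg_integrableOn_Ioi t hp).const_mul (H t))
      (hint.mono_set (Ioi_subset_Ioi ht.le)) measurableSet_Ioi (fun s hs => ?_)
    rw [mul_comm (H t) _]
    exact mul_le_mul_of_nonneg_left
      (hHmono (mem_Ioi.2 ht) (mem_Ioi.2 (ht.trans hs)) (le_of_lt hs)) (Real.exp_pos _).le
  have h2 : ∫ s in Set.Ioi t, Real.exp (-p * s) * H s ≤ laplace H p := by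
    refine setIntegral_mono_set hint ?_ (HasSubset.Subset.eventuallyLE (Ioi_subset_Ioi ht.le))
    refine ae_restrict_of_forall_mem measurableSet_Ioi (fun s hs => ?_)
    exact mul_nonneg (Real.exp_pos _).le (hHnn s hs)
  rw [MeasureTheory.integral_const_mul, integral_exp_Ioi hp t] at h1
  rw [hlap] at h2
  have h3 : H t * (Real.exp (-p * t) / p) ≤ Real.exp (-(p * r * laplace g p)) / p :=
    h1.trans h2
  calc H t * Real.exp (-p * t) = (H t * (Real.exp (-p * t) / p)) * p := by field_simp
    _ ≤ (Real.exp (-(p * r * laplace g p)) / p) * p := mul_le_mul_of_nonneg_right h3 hp.le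
    _ = Real.exp (-(p * r * laplace g p)) := by field_simp

include hr hnn hmono hdiff hconv hloc hHnn hHmono hHlap in
lemma upper_e {t : ℝ} (ht : 0 < t) : H t ≤ Real.exp (1 - r * g t) := by
  have hp : (0:ℝ) < 1/t := by positivity
  have h1 := upper_raw hHnn hHmono hHlap ht hp
  have h2 := tangent_le_phi hnn hmono hdiff hconv hloc ht hp
  have h3 : g t ≤ (1/t) * laplace g (1/t) := by
    have : 1/(1/t) - t = 0 := by field_simp; ring
    rw [this, mul_zero, add_zero] at h2; exact h2
  have h4 : -((1/t) * r * laplace g (1/t)) ≤ -(r * g t) := by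
    have := mul_le_mul_of_nonneg_left h3 hr.le
    nlinarith [this]
  calc H t = H t * Real.exp (-(1/t) * t) * Real.exp ((1/t)*t) := by
        rw [mul_assoc, ← Real.exp_add]; simp
    _ ≤ Real.exp (-((1/t) * r * laplace g (1/t))) * Real.exp ((1/t)*t) :=
        mul_le_mul_of_nonneg_right (upper_raw hHnn hHmono hHlap ht hp) (Real.exp_pos _).le
    _ ≤ Real.exp (-(r * g t)) * Real.exp 1 := by
        rw [show (1/t)*t = 1 by field_simp]
        exact mul_le_mul_of_nonneg_right (Real.exp_le_exp.2 h4) (Real.exp_pos _).le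
    _ = Real.exp (1 - r * g t) := by rw [← Real.exp_add]; ring_nf

end Stmt9Aux4

namespace Stmt9Aux5
open Stmt9Aux Stmt9Aux2 Stmt9Aux3

variable {g : ℝ → ℝ}
variable (hnn : ∀ t > (0:ℝ), 0 ≤ g t)
variable (hmono : AntitoneOn g (Set.Ioi 0))
variable (hdiff : DifferentiableOn ℝ g (Set.Ioi 0))
variable (hconv : ConvexOn ℝ (Set.Ioi 0) g)
variable (hloc : ∀ b > (0:ℝ), IntegrableOn g (Set.Ioc 0 b))

include hdiff hconv in
lemma log_bound {t s ε' : ℝ} (hs : 0 < s) (hst : s ≤ t)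
    (hε : ∀ u ∈ Set.Ioc (0:ℝ) t, -(u * deriv g u) ≤ ε') :
    g s ≤ g t + ε' * Real.log (t / s) := by
  have ht : 0 < t := hs.trans_le hst
  have hsub : Set.uIcc s t ⊆ Set.Ioi (0:ℝ) := by
    rw [Set.uIcc_of_le hst]
    exact fun u hu => lt_of_lt_of_le hs hu.1
  have hder : ∀ u ∈ Set.uIcc s t, HasDerivAt g (deriv g u) u := fun u hu =>
    ((hdiff u (hsub hu)).differentiableAt (Ioi_mem_nhds (hsub hu))).hasDerivAt
  have hint : IntervalIntegrable (deriv g) volume s t := by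
    refine MonotoneOn.intervalIntegrable (fun u hu v hv huv => ?_)
    exact hconv.monotoneOn_deriv (fun x hx => (hdiff x hx).differentiableAt (Ioi_mem_nhds hx))
      (hsub hu) (hsub hv) huv
  have hftc : ∫ u in s..t, deriv g u = g t - g s :=
    intervalIntegral.integral_eq_sub_of_hasDerivAt (fun u hu => hder u hu) hint
  have hlow : ∫ u in s..t, (-ε') * (1/u) ≤ ∫ u in s..t, deriv g u := by
    refine intervalIntegral.integral_mono_on hst ?_ hint (fun u hu => ?_)
    · refine (ContinuousOn.intervalIntegrable ?_)
      refine ContinuousOn.mul continuousOn_const (ContinuousOn.div continuousOn_const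
        continuousOn_id (fun u hu => ?_))
      exact ne_of_gt (lt_of_lt_of_le hs ((Set.uIcc_of_le hst ▸ hu).1))
    · have hu0 : 0 < u := lt_of_lt_of_le hs hu.1
      have h := hε u ⟨hu0, hu.2⟩
      have h2 : -ε' ≤ u * deriv g u := by linarith
      calc (-ε') * (1/u) ≤ (u * deriv g u) * (1/u) :=
            mul_le_mul_of_nonneg_right h2 (by positivity)
        _ = deriv g u := by field_simp
  have hlogint : ∫ u in s..t, (-ε') * (1/u) = -ε' * Real.log (t/s) := by
    rw [intervalIntegral.integral_const_mul, integral_one_div]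
    rw [Set.uIcc_of_le hst]
    intro hmem
    exact absurd hmem.1 (not_le.2 hs)
  rw [hlogint, hftc] at hlow
  linarith

include hnn hmono hdiff hconv hloc in
lemma phi_head_bound {t lam ε' : ℝ} (ht : 0 < t) (hlam : 1 ≤ lam) (hε'0 : 0 ≤ ε')
    (hε : ∀ u ∈ Set.Ioc (0:ℝ) t, -(u * deriv g u) ≤ ε') :
    (lam/t) * laplace g (lam/t) ≤ g t + 4 * ε' * lam := by
  set p := lam/t with hp'
  have hp : 0 < p := by positivity
  have hgt0 : 0 ≤ g t := hnn t ht
  -- pointwise bound on (0, t]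
  have hpt : ∀ s ∈ Set.Ioc (0:ℝ) t, Real.exp (-p*s) * g s
      ≤ Real.exp (-p*s) * g t + (2*ε'*Real.sqrt t) * s ^ (-(2⁻¹:ℝ)) := by
    intro s hs
    have hs0 := hs.1
    have hlog := log_bound hdiff hconv hs.1 hs.2 hε
    have hts : 0 < t/s := by positivity
    have hsq : Real.log (t/s) ≤ 2 * Real.sqrt (t/s) := by
      have h1 : Real.log (t/s) = 2 * Real.log (Real.sqrt (t/s)) := by
        rw [Real.log_sqrt hts.le]; ring
      have h2 : Real.log (Real.sqrt (t/s)) ≤ Real.sqrt (t/s) - 1 :=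
        Real.log_le_sub_one_of_pos (Real.sqrt_pos.2 hts)
      nlinarith [Real.sqrt_nonneg (t/s)]
    have hsqeq : Real.sqrt (t/s) = Real.sqrt t * s ^ (-(2⁻¹:ℝ)) := by
      have h1 : Real.sqrt s = s ^ ((2⁻¹:ℝ)) := by
        rw [Real.sqrt_eq_rpow]; norm_num
      rw [Real.sqrt_div ht.le, div_eq_mul_inv, h1, ← Real.rpow_neg hs0.le]
    have hexps : Real.exp (-p*s) ≤ 1 :=
      Real.exp_le_one_iff.mpr (by nlinarith : -p * s ≤ 0)
    calc Real.exp (-p*s) * g s ≤ Real.exp (-p*s) * (g t + ε' * Real.log (t/s)) :=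
          mul_le_mul_of_nonneg_left hlog (Real.exp_pos _).le
      _ = Real.exp (-p*s) * g t + Real.exp (-p*s) * (ε' * Real.log (t/s)) := by ring
      _ ≤ Real.exp (-p*s) * g t + 1 * (ε' * (2 * Real.sqrt (t/s))) := by
          have hlognn : 0 ≤ Real.log (t/s) :=
            Real.log_nonneg (by rw [le_div_iff₀ hs0]; linarith [hs.2])
          have hA : ε' * Real.log (t/s) ≤ ε' * (2 * Real.sqrt (t/s)) :=
            mul_le_mul_of_nonneg_left hsq hε'0
          have hB : Real.exp (-p*s) * (ε' * Real.log (t/s)) ≤ 1 * (ε' * Real.log (t/s)) :=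
            mul_le_mul_of_nonneg_right hexps (mul_nonneg hε'0 hlognn)
          have hC : (1:ℝ) * (ε' * Real.log (t/s)) ≤ 1 * (ε' * (2 * Real.sqrt (t/s))) := by
            rw [one_mul, one_mul]; exact hA
          linarith
      _ = Real.exp (-p*s) * g t + (2*ε'*Real.sqrt t) * s ^ (-(2⁻¹:ℝ)) := by
          rw [hsqeq]; ring
  -- integrability facts
  have hintg : IntegrableOn (fun s => Real.exp (-p * s) * g s) (Set.Ioi (0:ℝ)) :=
    integrableOn_exp_g hnn hmono hdiff hloc hp
  have hrpowint : IntegrableOn (fun s : ℝ => s ^ (-(2⁻¹:ℝ))) (Set.Ioc (0:ℝ) t) := by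
    have := (intervalIntegral.intervalIntegrable_rpow' (r := (-(2⁻¹:ℝ)))
      (a := 0) (b := t) (by norm_num)).1
    simpa using this
  have hexpconst : IntegrableOn (fun s : ℝ => Real.exp (-p * s) * g t) (Set.Ioc (0:ℝ) t) := by
    exact ((exp_neg_integrableOn_Ioi 0 hp).mono_set Ioc_subset_Ioi_self).mul_const (g t)
  -- head integral bound
  have hhead : ∫ s in Set.Ioc (0:ℝ) t, Real.exp (-p*s) * g s
      ≤ ∫ s in Set.Ioc (0:ℝ) t, (Real.exp (-p*s) * g t + (2*ε'*Real.sqrt t) * s ^ (-(2⁻¹:ℝ))) := by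
    refine setIntegral_mono_on (hintg.mono_set Ioc_subset_Ioi_self)
      (hexpconst.add (hrpowint.const_mul _)) measurableSet_Ioc hpt
  have hexpIoc : ∫ s in Set.Ioc (0:ℝ) t, Real.exp (-p*s) = (1 - Real.exp (-p*t))/p := by
    rw [← intervalIntegral.integral_of_le ht.le]
    have hder : ∀ x ∈ Set.uIcc (0:ℝ) t, HasDerivAt (fun s => -(Real.exp (-p * s) / p))
        (Real.exp (-p * x)) x := by
      intro x _
      have h1 : HasDerivAt (fun s : ℝ => -p * s) (-p) x := by
        simpa using (hasDerivAt_id x).const_mul (-p)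
      have h2 := (h1.exp.div_const p).neg
      refine h2.congr_deriv ?_
      field_simp
    have hii : IntervalIntegrable (fun x => Real.exp (-p * x)) volume 0 t :=
      Continuous.intervalIntegrable (by continuity) 0 t
    rw [intervalIntegral.integral_eq_sub_of_hasDerivAt hder hii]
    rw [mul_zero, Real.exp_zero]
    field_simp
    ring
  have hrpowval : ∫ s in Set.Ioc (0:ℝ) t, (s : ℝ) ^ (-(2⁻¹:ℝ)) = 2 * Real.sqrt t := by
    rw [← intervalIntegral.integral_of_le ht.le,
      integral_rpow (Or.inl (by norm_num : (-1:ℝ) < -(2⁻¹)))]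
    rw [Real.zero_rpow (by norm_num : (-(2⁻¹:ℝ)) + 1 ≠ 0), Real.sqrt_eq_rpow]
    norm_num
    rw [div_eq_mul_inv]
    ring_nf
  have hheadval : ∫ s in Set.Ioc (0:ℝ) t, (Real.exp (-p*s) * g t + (2*ε'*Real.sqrt t) * s ^ (-(2⁻¹:ℝ)))
      = g t * ((1 - Real.exp (-p*t))/p) + (2*ε'*Real.sqrt t) * (2 * Real.sqrt t) := by
    rw [MeasureTheory.integral_add hexpconst (hrpowint.const_mul _),
      MeasureTheory.integral_mul_const, MeasureTheory.integral_const_mul, hexpIoc, hrpowval]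
    ring
  -- tail integral bound
  have htail : ∫ s in Set.Ioi t, Real.exp (-p*s) * g s
      ≤ g t * (Real.exp (-p*t)/p) := by
    have h1 : ∫ s in Set.Ioi t, Real.exp (-p*s) * g s ≤ ∫ s in Set.Ioi t, Real.exp (-p*s) * g t := by
      refine setIntegral_mono_on (hintg.mono_set (Ioi_subset_Ioi ht.le))
        (((exp_neg_integrableOn_Ioi t hp)).mul_const (g t)) measurableSet_Ioi (fun s hs => ?_)
      exact mul_le_mul_of_nonneg_left
        (hmono (mem_Ioi.2 ht) (mem_Ioi.2 (ht.trans hs)) (le_of_lt hs)) (Real.exp_pos _).le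
    rw [MeasureTheory.integral_mul_const, integral_exp_Ioi hp t] at h1
    calc ∫ s in Set.Ioi t, Real.exp (-p*s) * g s ≤ Real.exp (-p*t)/p * g t := h1
      _ = g t * (Real.exp (-p*t)/p) := by ring
  -- combine
  have hsplit : laplace g p = (∫ s in Set.Ioc (0:ℝ) t, Real.exp (-p*s) * g s)
      + ∫ s in Set.Ioi t, Real.exp (-p*s) * g s := by
    rw [laplace, ← setIntegral_union (Ioc_disjoint_Ioi le_rfl) measurableSet_Ioi
      (hintg.mono_set Ioc_subset_Ioi_self) (hintg.mono_set (Ioi_subset_Ioi ht.le)),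
      Ioc_union_Ioi_eq_Ioi ht.le]
  have hsq2 : Real.sqrt t * Real.sqrt t = t := Real.mul_self_sqrt ht.le
  have hfinal : laplace g p ≤ g t / p + 4 * ε' * t := by
    rw [hsplit]
    have := hhead.trans_eq hheadval
    have h2 : g t * ((1 - Real.exp (-p*t))/p) + (2*ε'*Real.sqrt t) * (2 * Real.sqrt t)
        + g t * (Real.exp (-p*t)/p) = g t / p + 4*ε'*t := by
      have h3 : (2*ε'*Real.sqrt t) * (2 * Real.sqrt t) = 4*ε'*t := by
        calc (2*ε'*Real.sqrt t) * (2 * Real.sqrt t) = 4*ε'*(Real.sqrt t * Real.sqrt t) := by ring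
          _ = 4*ε'*t := by rw [hsq2]
      rw [h3]
      ring
    linarith [htail]
  have := mul_le_mul_of_nonneg_left hfinal hp.le
  calc p * laplace g p ≤ p * (g t / p + 4*ε'*t) := this
    _ = g t + 4 * ε' * lam := by rw [hp']; field_simp

end Stmt9Aux5

namespace Stmt9Aux6
open Stmt9Aux Stmt9Aux2 Stmt9Aux3 Stmt9Aux4 Stmt9Aux5

variable {g H : ℝ → ℝ} {r : ℝ} (hr : 0 < r)
variable (hnn : ∀ t > (0:ℝ), 0 ≤ g t)
variable (hmono : AntitoneOn g (Set.Ioi 0))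
variable (hdiff : DifferentiableOn ℝ g (Set.Ioi 0))
variable (hconv : ConvexOn ℝ (Set.Ioi 0) g)
variable (hloc : ∀ b > (0:ℝ), IntegrableOn g (Set.Ioc 0 b))
variable (hHnn : ∀ t > (0:ℝ), 0 ≤ H t)
variable (hHmono : MonotoneOn H (Set.Ioi 0))
variable (hHlap : ∀ p > (0:ℝ),
      IntegrableOn (fun t => Real.exp (-p * t) * H t) (Set.Ioi 0) ∧
      laplace H p = Real.exp (-(p * r * laplace g p)) / p)

include hr hnn hmono hdiff hconv hloc hHnn hHmono hHlap in
lemma lower_raw {t lam : ℝ} (ht : 0 < t) (hlam : 1 ≤ lam)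
    (hb : r * (-(t * deriv g t)) ≤ lam / 2) :
    Real.exp (-((lam/t) * r * laplace g (lam/t)))
      - 2 * Real.exp 1 * Real.exp (-lam) * Real.exp (-(r * g t)) ≤ H t := by
  set p := lam/t with hp'
  have hp : 0 < p := by positivity
  set β := -deriv g t with hβ
  have hβ0 : 0 ≤ β := by
    rw [hβ, neg_nonneg]; exact deriv_g_nonpos hmono hdiff hconv ht
  have hβt : r * β * t ≤ lam / 2 := by
    rw [hβ]; nlinarith [hb]
  set q := p - r * β with hq'
  clear_value p β q
  have hq : 0 < q := by
    have h5 : r * β * t < lam := by linarith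
    rw [hq', hp', sub_pos, lt_div_iff₀ ht]
    nlinarith [h5]
  obtain ⟨hint, hlap⟩ := hHlap p hp
  -- head bound
  have hhead : ∫ s in Set.Ioc (0:ℝ) t, Real.exp (-p*s) * H s ≤ H t / p := by
    have h1 : ∫ s in Set.Ioc (0:ℝ) t, Real.exp (-p*s) * H s
        ≤ ∫ s in Set.Ioc (0:ℝ) t, Real.exp (-p*s) * H t := by
      refine setIntegral_mono_on (hint.mono_set Ioc_subset_Ioi_self)
        (((exp_neg_integrableOn_Ioi 0 hp).mono_set Ioc_subset_Ioi_self).mul_const (H t))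
        measurableSet_Ioc (fun s hs => ?_)
      exact mul_le_mul_of_nonneg_left (hHmono (mem_Ioi.2 hs.1) (mem_Ioi.2 ht) hs.2)
        (Real.exp_pos _).le
    have h2 : ∫ s in Set.Ioc (0:ℝ) t, Real.exp (-p*s) * H t
        ≤ ∫ s in Set.Ioi (0:ℝ), Real.exp (-p*s) * H t := by
      refine setIntegral_mono_set ((exp_neg_integrableOn_Ioi 0 hp).mul_const (H t))
        (ae_restrict_of_forall_mem measurableSet_Ioi (fun s _ => ?_))
        (HasSubset.Subset.eventuallyLE Ioc_subset_Ioi_self)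
      exact mul_nonneg (Real.exp_pos _).le (hHnn t ht)
    have h3 : ∫ s in Set.Ioi (0:ℝ), Real.exp (-p*s) * H t = H t / p := by
      rw [MeasureTheory.integral_mul_const, integral_exp_Ioi hp 0]
      simp only [mul_zero, neg_zero, Real.exp_zero]
      ring
    calc ∫ s in Set.Ioc (0:ℝ) t, Real.exp (-p*s) * H s
        ≤ ∫ s in Set.Ioi (0:ℝ), Real.exp (-p*s) * H t := h1.trans h2
      _ = H t / p := h3
  -- tail bound
  set C := Real.exp (1 - r * g t - r*β*t) with hC
  have htailpt : ∀ s ∈ Set.Ioi t, Real.exp (-p*s) * H s ≤ C * Real.exp (-q * s) := by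
    intro s hs
    have hs0 : 0 < s := ht.trans hs
    have h1 : H s ≤ Real.exp (1 - r * g s) :=
      upper_e hr hnn hmono hdiff hconv hloc hHnn hHmono hHlap hs0
    have h2 : g t + deriv g t * (s - t) ≤ g s := tangent_le hdiff hconv ht hs0
    have h3 : 1 - r * g s ≤ 1 - r * g t + r * β * (s - t) := by
      have := mul_le_mul_of_nonneg_left h2 hr.le
      rw [hβ]; nlinarith
    calc Real.exp (-p*s) * H s ≤ Real.exp (-p*s) * Real.exp (1 - r * g s) :=
          mul_le_mul_of_nonneg_left h1 (Real.exp_pos _).le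
      _ = Real.exp (-p*s + (1 - r * g s)) := by rw [← Real.exp_add]
      _ ≤ Real.exp (-p*s + (1 - r * g t + r * β * (s - t))) := by
          apply Real.exp_le_exp.2; linarith
      _ = C * Real.exp (-q * s) := by
          rw [hC, ← Real.exp_add, hq']; ring_nf
  have htail : ∫ s in Set.Ioi t, Real.exp (-p*s) * H s
      ≤ Real.exp (1 - r * g t) * Real.exp (-p*t) / q := by
    have h1 : ∫ s in Set.Ioi t, Real.exp (-p*s) * H s
        ≤ ∫ s in Set.Ioi t, C * Real.exp (-q * s) :=
      setIntegral_mono_on (hint.mono_set (Ioi_subset_Ioi ht.le))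
        ((exp_neg_integrableOn_Ioi t hq).const_mul C) measurableSet_Ioi htailpt
    rw [MeasureTheory.integral_const_mul, integral_exp_Ioi hq t] at h1
    calc ∫ s in Set.Ioi t, Real.exp (-p*s) * H s
        ≤ C * (Real.exp (-q*t)/q) := h1
      _ = Real.exp (1 - r * g t) * Real.exp (-p*t) / q := by
          rw [hC, hq']
          rw [div_eq_mul_inv, div_eq_mul_inv, ← Real.exp_add, ← mul_assoc, ← Real.exp_add]
          ring_nf
  -- split
  have hsplit : Real.exp (-(p * r * laplace g p)) / p
      = (∫ s in Set.Ioc (0:ℝ) t, Real.exp (-p*s) * H s)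
        + ∫ s in Set.Ioi t, Real.exp (-p*s) * H s := by
    rw [← hlap, laplace, ← setIntegral_union (Ioc_disjoint_Ioi le_rfl) measurableSet_Ioi
      (hint.mono_set Ioc_subset_Ioi_self) (hint.mono_set (Ioi_subset_Ioi ht.le)),
      Ioc_union_Ioi_eq_Ioi ht.le]
  have hcomb : Real.exp (-(p * r * laplace g p)) / p
      ≤ H t / p + Real.exp (1 - r * g t) * Real.exp (-p*t) / q := by
    rw [hsplit]; exact add_le_add hhead htail
  -- multiply by p and simplify
  have hpq : p / q ≤ 2 := by
    rw [div_le_iff₀ hq, hq', hp', div_le_iff₀ ht]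
    have key : 2*(lam/t - r*β)*t = 2*lam - 2*(r*β*t) := by field_simp
    rw [key]
    linarith
  have hmul := mul_le_mul_of_nonneg_right hcomb hp.le
  have hE : Real.exp (-(p * r * laplace g p)) / p * p = Real.exp (-(p * r * laplace g p)) := by
    field_simp
  have hE2 : (H t / p + Real.exp (1 - r * g t) * Real.exp (-p*t) / q) * p
      = H t + Real.exp (1 - r * g t) * Real.exp (-p*t) * (p/q) := by
    field_simp
  rw [hE, hE2] at hmul
  have hpt' : Real.exp (-p*t) = Real.exp (-lam) := by
    rw [hp']; congr 1; field_simp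
  have hbound : Real.exp (1 - r * g t) * Real.exp (-p*t) * (p/q)
      ≤ 2 * Real.exp 1 * Real.exp (-lam) * Real.exp (-(r * g t)) := by
    rw [hpt', show Real.exp (1 - r * g t) = Real.exp 1 * Real.exp (-(r * g t)) by
      rw [← Real.exp_add]; ring_nf]
    have h0 : (0:ℝ) ≤ Real.exp 1 * Real.exp (-(r * g t)) * Real.exp (-lam) := by positivity
    calc Real.exp 1 * Real.exp (-(r * g t)) * Real.exp (-lam) * (p/q)
        ≤ Real.exp 1 * Real.exp (-(r * g t)) * Real.exp (-lam) * 2 :=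
          mul_le_mul_of_nonneg_left hpq h0
      _ = 2 * Real.exp 1 * Real.exp (-lam) * Real.exp (-(r * g t)) := by ring
  linarith

end Stmt9Aux6

set_option maxHeartbeats 1000000 in
theorem stmt9' (g H : ℝ → ℝ) (r : ℝ) (hr : 0 < r)
    (hnn : ∀ t > (0:ℝ), 0 ≤ g t)
    (hmono : AntitoneOn g (Set.Ioi 0))
    (hdiff : DifferentiableOn ℝ g (Set.Ioi 0))
    (hconv : ConvexOn ℝ (Set.Ioi 0) g)
    (hloc : ∀ b > (0:ℝ), IntegrableOn g (Set.Ioc 0 b))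
    (hlim : Tendsto (fun t => t * deriv g t) (nhdsWithin 0 (Set.Ioi 0)) (nhds 0))
    (hHnn : ∀ t > (0:ℝ), 0 ≤ H t)
    (hHmono : MonotoneOn H (Set.Ioi 0))
    (hHlap : ∀ p > (0:ℝ),
      IntegrableOn (fun t => Real.exp (-p * t) * H t) (Set.Ioi 0) ∧
      laplace H p = Real.exp (-(p * r * laplace g p)) / p) :
    Tendsto (fun t => H t / Real.exp (-(r * g t))) (nhdsWithin 0 (Set.Ioi 0)) (nhds 1) := by
  have hderiv_small : ∀ c > (0:ℝ), ∃ δ > (0:ℝ), ∀ u, 0 < u → u < δ → -(u * deriv g u) ≤ c := by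
    intro c hc
    have hev : ∀ᶠ u in nhdsWithin 0 (Set.Ioi (0:ℝ)), |u * deriv g u| < c := by
      have := Metric.tendsto_nhds.mp hlim c hc
      refine this.mono (fun u hu => ?_)
      rwa [Real.dist_0_eq_abs] at hu
    rw [eventually_iff, mem_nhdsGT_iff_exists_Ioo_subset] at hev
    obtain ⟨δ, hδ1, hδ2⟩ := hev
    refine ⟨δ, hδ1, fun u hu huδ => ?_⟩
    have := hδ2 ⟨hu, huδ⟩
    have habs : |u * deriv g u| < c := this
    calc -(u * deriv g u) ≤ |u * deriv g u| := neg_le_abs _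
      _ ≤ c := habs.le
  refine tendsto_order.2 ⟨?_, ?_⟩
  · -- lower bound branch: ∀ c < 1, eventually c < ratio
    intro c hc
    set ε := min ((1 - c)/2) (1/2) with hε'def
    have hε0 : 0 < ε := lt_min (by linarith) (by norm_num)
    have hε12 : ε ≤ 1/2 := min_le_right _ _
    have hεc : ε ≤ (1-c)/2 := min_le_left _ _
    set lam := 2 + Real.log (4/ε) with hlamdef
    have hlog0 : 0 ≤ Real.log (4/ε) := Real.log_nonneg (by
      rw [le_div_iff₀ hε0]; linarith)
    have hlam1 : 1 ≤ lam := by rw [hlamdef]; linarith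
    have hlam0 : (0:ℝ) < lam := by linarith
    have hexplam : 2 * Real.exp 1 * Real.exp (-lam) ≤ ε/2 := by
      have h1 : Real.exp (-lam) = Real.exp (-2) * (ε/4) := by
        rw [hlamdef, neg_add, Real.exp_add]
        congr 1
        rw [Real.exp_neg, Real.exp_log (by positivity : (0:ℝ) < 4/ε)]
        field_simp
      rw [h1]
      have h2 : Real.exp 1 * Real.exp (-2) ≤ 1 := by
        rw [← Real.exp_add]
        exact Real.exp_le_one_iff.mpr (by norm_num)
      nlinarith [hε0]
    set ε' := ε/(8*r*lam) with hε'd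
    have hε'0 : 0 < ε' := by rw [hε'd]; positivity
    clear_value ε lam ε'
    obtain ⟨δ, hδ0, hδ⟩ := hderiv_small ε' hε'0
    filter_upwards [Ioo_mem_nhdsGT_of_mem (Set.left_mem_Ico.2 hδ0)] with t htmem
    have ht : 0 < t := htmem.1
    have htδ : t < δ := htmem.2
    have hεIoc : ∀ u ∈ Set.Ioc (0:ℝ) t, -(u * deriv g u) ≤ ε' := fun u hu =>
      hδ u hu.1 (lt_of_le_of_lt hu.2 htδ)
    have hat : -(t * deriv g t) ≤ ε' := hδ t ht htδ
    have hb : r * (-(t * deriv g t)) ≤ lam / 2 := by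
      have h1 : r * (-(t * deriv g t)) ≤ r * ε' := mul_le_mul_of_nonneg_left hat hr.le
      have h2 : r * ε' = ε / (8 * lam) := by rw [hε'd]; field_simp
      have h3 : ε / (8 * lam) ≤ lam / 2 := by
        rw [div_le_div_iff₀ (by positivity) (by norm_num)]
        nlinarith
      linarith
    have hlow := Stmt9Aux6.lower_raw hr hnn hmono hdiff hconv hloc hHnn hHmono hHlap
      ht hlam1 hb
    have hhead := Stmt9Aux5.phi_head_bound hnn hmono hdiff hconv hloc ht hlam1 hε'0.le hεIoc
    have hkey : -(lam/t * r * laplace g (lam/t)) ≥ -(r * g t) - ε/2 := by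
      have h1 : lam/t * r * laplace g (lam/t) = r * (lam/t * laplace g (lam/t)) := by ring
      have h2 : r * (lam/t * laplace g (lam/t)) ≤ r * (g t + 4 * ε' * lam) :=
        mul_le_mul_of_nonneg_left hhead hr.le
      have h3 : r * (4 * ε' * lam) = ε/2 := by
        rw [hε'd]
        field_simp [hr.ne', ne_of_gt hlam0]
        ring
      rw [h1]
      nlinarith
    have hE : (0:ℝ) < Real.exp (-(r * g t)) := Real.exp_pos _
    have hfinal : (1 - ε) * Real.exp (-(r * g t)) ≤ H t := by
      have h4 : Real.exp (-(lam/t * r * laplace g (lam/t)))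
          ≥ Real.exp (-(r * g t)) * Real.exp (-(ε/2)) := by
        rw [← Real.exp_add]
        exact Real.exp_le_exp.2 (by linarith)
      have h5 : Real.exp (-(ε/2)) ≥ 1 - ε/2 := by
        have := Real.add_one_le_exp (-(ε/2))
        linarith
      have h6 : 2 * Real.exp 1 * Real.exp (-lam) * Real.exp (-(r * g t))
          ≤ (ε/2) * Real.exp (-(r * g t)) :=
        mul_le_mul_of_nonneg_right hexplam hE.le
      have h7 : Real.exp (-(r * g t)) * Real.exp (-(ε/2))
          ≥ Real.exp (-(r * g t)) * (1 - ε/2) :=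
        mul_le_mul_of_nonneg_left h5 hE.le
      nlinarith [hlow]
    rw [lt_div_iff₀ hE]
    have : c * Real.exp (-(r * g t)) < (1 - ε) * Real.exp (-(r * g t)) := by
      have : c < 1 - ε := by linarith
      exact mul_lt_mul_of_pos_right this hE
    linarith
  · -- upper bound branch: ∀ c > 1, eventually ratio < c
    intro c hc
    set ε₁ := min (Real.log c / 4) 1 with hε₁def
    have hε₁0 : 0 < ε₁ := by
      rw [hε₁def]
      have := Real.log_pos hc
      exact lt_min (by linarith) one_pos
    have hε₁1 : ε₁ ≤ 1 := min_le_right _ _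
    have hε₁4 : ε₁ ≤ Real.log c / 4 := min_le_left _ _
    clear_value ε₁
    obtain ⟨δ, hδ0, hδ⟩ := hderiv_small (ε₁^2/r) (by positivity)
    filter_upwards [Ioo_mem_nhdsGT_of_mem (Set.left_mem_Ico.2 hδ0)] with t htmem
    have ht : 0 < t := htmem.1
    have htδ : t < δ := htmem.2
    have hat : -(t * deriv g t) ≤ ε₁^2/r := hδ t ht htδ
    set p := ε₁/t with hpdef
    have hp : 0 < p := by positivity
    clear_value p
    have hup := Stmt9Aux4.upper_raw hHnn hHmono hHlap (r := r) (g := g) ht hp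
    have htan := Stmt9Aux3.tangent_le_phi hnn hmono hdiff hconv hloc ht hp
    have hd0 : deriv g t ≤ 0 := Stmt9Aux3.deriv_g_nonpos hmono hdiff hconv ht
    -- deriv g t * (1/p - t) ≥ -ε₁/r
    have h1p : 1/p = t/ε₁ := by rw [hpdef]; field_simp
    have ha0 : (0:ℝ) ≤ -(t * deriv g t) := by nlinarith
    have hstep : deriv g t * (1/p - t) ≥ -(ε₁/r) := by
      rw [h1p]
      have h2 : deriv g t * (t/ε₁ - t) = -((-(t * deriv g t)) * (1 - ε₁) / ε₁) := by
        field_simp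
      rw [h2]
      have key : (-(t * deriv g t)) * (1 - ε₁) / ε₁ ≤ ε₁ / r := by
        rw [div_le_div_iff₀ hε₁0 hr]
        have h4 : (-(t * deriv g t)) * r ≤ ε₁^2 := by
          have := (le_div_iff₀ hr).mp hat
          linarith
        nlinarith [mul_nonneg (mul_nonneg ha0 hr.le) hε₁0.le]
      exact neg_le_neg key
    have hphi : p * laplace g p ≥ g t - ε₁/r := by
      linarith [htan, hstep]
    have hfinal : H t ≤ Real.exp (2*ε₁) * Real.exp (-(r * g t)) := by
      have h6 : -(p * r * laplace g p) ≤ -(r * g t) + ε₁ := by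
        have h7 : p * r * laplace g p = r * (p * laplace g p) := by ring
        have h8 : r * (p * laplace g p) ≥ r * (g t - ε₁/r) :=
          mul_le_mul_of_nonneg_left hphi hr.le
        have h9 : r * (g t - ε₁/r) = r * g t - ε₁ := by field_simp
        rw [h7]
        linarith
      have h10 : H t = H t * Real.exp (-p*t) * Real.exp (p*t) := by
        rw [mul_assoc, ← Real.exp_add]; simp
      have h11 : Real.exp (p*t) = Real.exp ε₁ := by
        rw [hpdef]; congr 1; field_simp
      calc H t = H t * Real.exp (-p*t) * Real.exp (p*t) := h10
        _ ≤ Real.exp (-(p * r * laplace g p)) * Real.exp (p*t) :=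
            mul_le_mul_of_nonneg_right hup (Real.exp_pos _).le
        _ ≤ Real.exp (-(r * g t) + ε₁) * Real.exp ε₁ := by
            rw [h11]
            exact mul_le_mul_of_nonneg_right (Real.exp_le_exp.2 h6) (Real.exp_pos _).le
        _ = Real.exp (2*ε₁) * Real.exp (-(r * g t)) := by
            rw [← Real.exp_add, ← Real.exp_add]; ring_nf
    have hE : (0:ℝ) < Real.exp (-(r * g t)) := Real.exp_pos _
    rw [div_lt_iff₀ hE]
    have hit : Real.exp (2*ε₁) < c := by
      have h12 : 2*ε₁ < Real.log c := by nlinarith [Real.log_pos hc]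
      calc Real.exp (2*ε₁) < Real.exp (Real.log c) := Real.exp_lt_exp.2 h12
        _ = c := Real.exp_log (by linarith)
    calc H t ≤ Real.exp (2*ε₁) * Real.exp (-(r * g t)) := hfinal
      _ < c * Real.exp (-(r * g t)) := mul_lt_mul_of_pos_right hit hE

theorem stmt9 (g H : ℝ → ℝ) (r : ℝ) (hr : 0 < r)
    (hnn : ∀ t > (0:ℝ), 0 ≤ g t)
    (hmono : AntitoneOn g (Set.Ioi 0))
    (hdiff : DifferentiableOn ℝ g (Set.Ioi 0))
    (hconv : ConvexOn ℝ (Set.Ioi 0) g)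
    (hloc : ∀ b > (0:ℝ), IntegrableOn g (Set.Ioc 0 b))
    (hlim : Tendsto (fun t => t * deriv g t) (nhdsWithin 0 (Set.Ioi 0)) (nhds 0))
    (hHnn : ∀ t > (0:ℝ), 0 ≤ H t)
    (hHmono : MonotoneOn H (Set.Ioi 0))
    (hHlap : ∀ p > (0:ℝ),
      IntegrableOn (fun t => Real.exp (-p * t) * H t) (Set.Ioi 0) ∧
      laplace H p = Real.exp (-(p * r * laplace g p)) / p) :
    Tendsto (fun t => H t / Real.exp (-(r * g t))) (nhdsWithin 0 (Set.Ioi 0)) (nhds 1) := by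
  exact stmt9' g H r hr hnn hmono hdiff hconv hloc hlim hHnn hHmono hHlap
end

section
/- For constants a, b > 0 and A ≥ 1, the function g(t) = b·ln(1/(a·t) + A) on (0,∞) is locally integrable and completely monotone. -/
open MeasureTheory Filter Set Real

noncomputable def Faux (a b A : ℝ) : ℕ → ℝ → ℝ
  | 0 => fun t => b * Real.log (1 / (a * t) + A)
  | (n+1) => fun t => b * (-1)^n * (n.factorial : ℝ) *
      ((A*a)^(n+1)/((A*a)*t+1)^(n+1) - 1/t^(n+1))

lemma Faux_deriv (a b A : ℝ) (ha : 0 < a) (hA : 1 ≤ A) (n : ℕ) {t : ℝ} (ht : 0 < t) :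
    HasDerivAt (Faux a b A n) (Faux a b A (n+1) t) t := by
  have hA0 : 0 < A := lt_of_lt_of_le one_pos hA
  have hc : 0 < A * a := mul_pos hA0 ha
  have hct : (0:ℝ) < A * a * t + 1 := by positivity
  have hat : (0:ℝ) < a * t := mul_pos ha ht
  match n with
  | 0 =>
    have h1 : HasDerivAt (fun t : ℝ => a * t) a t := by
      simpa using (hasDerivAt_id t).const_mul a
    have h2 : HasDerivAt (fun t : ℝ => 1 / (a * t) + A) (-a / (a*t)^2) t := by
      simpa [one_div] using (h1.inv hat.ne').add_const A
    have h3 : (0:ℝ) < 1 / (a * t) + A := by positivity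
    have h4 := (h2.log h3.ne').const_mul b
    refine h4.congr_deriv ?_
    symm
    show b * (-1:ℝ)^(0:ℕ) * ((0:ℕ).factorial : ℝ) * ((A*a)^1/((A*a)*t+1)^1 - 1/t^1) = _
    field_simp
    ring
  | (m+1) =>
    have h1 : HasDerivAt (fun t : ℝ => A*a*t+1) (A*a) t := by
      simpa using ((hasDerivAt_id t).const_mul (A*a)).add_const 1
    have h2 : HasDerivAt (fun t : ℝ => ((A*a)*t+1)^(m+1)) ((m+1)*((A*a)*t+1)^m * (A*a)) t := by
      simpa [Pi.pow_def] using h1.pow (m+1)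
    have h3 := (h2.inv (pow_ne_zero _ hct.ne')).const_mul ((A*a)^(m+1))
    have h4 := (hasDerivAt_pow (m+1) t).inv (pow_ne_zero _ ht.ne')
    have h5 := ((h3.sub h4).const_mul (b * (-1)^m * (m.factorial : ℝ)))
    have h6 : HasDerivAt (Faux a b A (m+1))
        (b * (-1)^m * (m.factorial : ℝ) *
          ((A*a)^(m+1) * (-(((m:ℝ)+1)*((A*a)*t+1)^m * (A*a)) / (((A*a)*t+1)^(m+1))^2)
            - -((((m+1):ℕ):ℝ)*t^(m+1-1)) / (t^(m+1))^2)) t := by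
      show HasDerivAt (fun t => b * (-1)^m * (m.factorial : ℝ) *
        ((A*a)^(m+1)/((A*a)*t+1)^(m+1) - 1/t^(m+1))) _ t
      simpa only [div_eq_mul_inv, one_div, one_mul, Pi.sub_apply, Pi.inv_apply] using h5
    convert h6 using 1
    show b * (-1:ℝ)^(m+1) * ((m+1).factorial : ℝ) * ((A*a)^(m+2)/((A*a)*t+1)^(m+2) - 1/t^(m+2)) = _
    have hct' : ((A*a)*t+1) ≠ 0 := hct.ne'
    have ht' : t ≠ 0 := ht.ne'
    rw [Nat.factorial_succ,
      show (((A*a)*t+1)^(m+1))^2 = ((A*a)*t+1)^m * ((A*a)*t+1)^(m+2) from by ring,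
      show (t^(m+1))^2 = t^m * t^(m+2) from by ring,
      show m+1-1 = m from rfl]
    push_cast
    field_simp
    ring
lemma Faux_iter (a b A : ℝ) (ha : 0 < a) (hA : 1 ≤ A) (n : ℕ) :
    ∀ x ∈ Set.Ioi (0:ℝ), iteratedDerivWithin n (Faux a b A 0) (Set.Ioi 0) x = Faux a b A n x := by
  induction n with
  | zero => intro x hx; simp
  | succ m ih =>
    intro x hx
    rw [iteratedDerivWithin_succ,
        derivWithin_congr ih (ih x hx),
        derivWithin_of_isOpen isOpen_Ioi hx]
    exact (Faux_deriv a b A ha hA m hx).deriv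

lemma integrableOn_log_Ioc01 : IntegrableOn Real.log (Set.Ioc 0 1) := by
  rw [integrableOn_Ioc_iff_integrableOn_Ioo]
  have hg : IntegrableOn (fun x : ℝ => 2 * x ^ (-(1:ℝ)/2)) (Set.Ioo 0 1) :=
    ((intervalIntegral.integrableOn_Ioo_rpow_iff one_pos).2 (by norm_num)).const_mul 2
  refine Integrable.mono' hg Real.measurable_log.aestronglyMeasurable ?_
  filter_upwards [ae_restrict_mem measurableSet_Ioo] with x hx
  have hx0 : (0:ℝ) < x := hx.1
  have h1 : Real.log (x ^ (-(1:ℝ)/2)) = (-(1:ℝ)/2) * Real.log x := Real.log_rpow hx0 _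
  have h2 : Real.log (x ^ (-(1:ℝ)/2)) ≤ x ^ (-(1:ℝ)/2) := by
    have := Real.log_le_sub_one_of_pos (Real.rpow_pos_of_pos hx0 (-(1:ℝ)/2))
    linarith
  have h3 : Real.log x ≤ 0 := Real.log_nonpos hx0.le hx.2.le
  rw [Real.norm_eq_abs, abs_of_nonpos h3]
  nlinarith

theorem stmt12 (a b A : ℝ) (ha : 0 < a) (hb : 0 < b) (hA : 1 ≤ A) :
    IntegrableOn (fun t => b * Real.log (1 / (a * t) + A)) (Set.Ioc 0 1) ∧
    CMOn (fun t => b * Real.log (1 / (a * t) + A)) := by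
  have hc : 0 < A * a := mul_pos (lt_of_lt_of_le one_pos hA) ha
  constructor
  · have heq : Set.EqOn (fun t => b * Real.log (A*a*t+1) - b * Real.log a - b * Real.log t)
        (fun t => b * Real.log (1 / (a * t) + A)) (Set.Ioc 0 1) := by
      intro t ht
      have ht0 : 0 < t := ht.1
      have h1 : 1/(a*t)+A = (A*a*t+1)/(a*t) := by field_simp; ring
      have h2 : Real.log (1/(a*t)+A) = Real.log (A*a*t+1) - Real.log a - Real.log t := by
        rw [h1, Real.log_div (by positivity) (by positivity), Real.log_mul ha.ne' ht0.ne']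
        ring
      simp only [h2]
      ring
    refine IntegrableOn.congr_fun ?_ heq measurableSet_Ioc
    have i1 : IntegrableOn (fun t => b * Real.log (A*a*t+1)) (Set.Ioc 0 1) := by
      refine (ContinuousOn.integrableOn_Icc ?_).mono_set Set.Ioc_subset_Icc_self
      refine continuousOn_const.mul (ContinuousOn.log ?_ ?_)
      · fun_prop
      · intro x hx
        have : 0 ≤ x := hx.1
        positivity
    have i2 : IntegrableOn (fun t : ℝ => b * Real.log t) (Set.Ioc 0 1) :=
      integrableOn_log_Ioc01.const_mul b
    have i3 : IntegrableOn (fun _ : ℝ => b * Real.log a) (Set.Ioc 0 1) :=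
      integrableOn_const measure_Ioc_lt_top.ne
    exact (i1.sub i3).sub i2
  · constructor
    · have h1 : ContDiffOn ℝ (⊤ : ℕ∞) (fun t : ℝ => 1/(a*t)+A) (Set.Ioi 0) := by
        simp only [one_div]
        refine ContDiffOn.add (ContDiffOn.inv ?_ ?_) contDiffOn_const
        · exact contDiffOn_const.mul contDiffOn_id
        · intro x hx
          have : 0 < x := hx
          positivity
      refine contDiffOn_const.mul (h1.log ?_)
      intro x hx
      have : 0 < x := hx
      positivity
    · intro n x hx
      have hx0 : 0 < x := hx
      have hFg : (fun t => b * Real.log (1 / (a * t) + A)) = Faux a b A 0 := rfl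
      rw [hFg, Faux_iter a b A ha hA n x hx]
      match n with
      | 0 =>
        simp only [Faux, pow_zero, one_mul]
        refine mul_nonneg hb.le (Real.log_nonneg ?_)
        have : 0 < 1/(a*x) := by positivity
        linarith
      | (m+1) =>
        show 0 ≤ (-1:ℝ)^(m+1) * (b * (-1)^m * (m.factorial : ℝ) *
          ((A*a)^(m+1)/((A*a)*x+1)^(m+1) - 1/x^(m+1)))
        have hctx : (0:ℝ) < A*a*x+1 := by positivity
        have hb1 : A*a/((A*a)*x+1) ≤ 1/x := by
          rw [div_le_div_iff₀ hctx hx0]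
          nlinarith
        have hle : (A*a)^(m+1)/((A*a)*x+1)^(m+1) ≤ 1/x^(m+1) := by
          calc (A*a)^(m+1)/((A*a)*x+1)^(m+1) = (A*a/((A*a)*x+1))^(m+1) := (div_pow _ _ _).symm
            _ ≤ (1/x)^(m+1) := pow_le_pow_left₀ (by positivity) hb1 _
            _ = 1/x^(m+1) := by rw [div_pow, one_pow]
        have hsign : ((-1:ℝ))^(m+1) * ((-1:ℝ))^m = -1 := by
          rw [← pow_add, show m+1+m = 2*m+1 from by ring, pow_succ, pow_mul]
          norm_num
        have hkey : (-1:ℝ)^(m+1) * (b * (-1)^m * (m.factorial : ℝ) *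
            ((A*a)^(m+1)/((A*a)*x+1)^(m+1) - 1/x^(m+1)))
            = b * (m.factorial : ℝ) *
              (1/x^(m+1) - (A*a)^(m+1)/((A*a)*x+1)^(m+1)) := by
          rw [show (-1:ℝ)^(m+1) * (b * (-1)^m * (m.factorial : ℝ) *
            ((A*a)^(m+1)/((A*a)*x+1)^(m+1) - 1/x^(m+1)))
            = ((-1:ℝ)^(m+1) * (-1)^m) * (b * (m.factorial : ℝ) *
              ((A*a)^(m+1)/((A*a)*x+1)^(m+1) - 1/x^(m+1))) from by ring, hsign]
          ring
        rw [hkey]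
        exact mul_nonneg (mul_nonneg hb.le (Nat.cast_nonneg _)) (sub_nonneg.2 hle)
end
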